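/- arXiv:math/0602061 — 5 statements merged into one kernel-verified Lean document; each statement's English description precedes it below -/
import Mathlib

section
/- For every n > 1 and every pair k, k' ∈ {1, …, n−1}, there exists a digraph on n vertices whose out forest dimension equals k and whose in forest dimension equals k'. Moreover, for every digraph Γ on n vertices, the out forest dimension equals n if and only if the in forest dimension equals n, if and only if Γ has no arcs. -/
/-- An out forest of the digraph with arc set `A`: a subset of the arcs with no
directed cycle in which every vertex has at most one incoming arc. -/
def IsOutForestOf {n : ℕ} (A F : Finset (Fin n × Fin n)) : Prop :=
  F ⊆ A ∧
  (∀ u u' v : Fin n, (u, v) ∈ F → (u', v) ∈ F → u = u') ∧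
  ¬ ∃ (k : ℕ) (f : ℕ → Fin n), 0 < k ∧ f 0 = f k ∧ ∀ i < k, (f i, f (i + 1)) ∈ F

/-- An in forest of the digraph with arc set `A`: a subset of the arcs with no
directed cycle in which every vertex has at most one outgoing arc. -/
def IsInForestOf {n : ℕ} (A F : Finset (Fin n × Fin n)) : Prop :=
  F ⊆ A ∧
  (∀ u v v' : Fin n, (u, v) ∈ F → (u, v') ∈ F → v = v') ∧
  ¬ ∃ (k : ℕ) (f : ℕ → Fin n), 0 < k ∧ f 0 = f k ∧ ∀ i < k, (f i, f (i + 1)) ∈ F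

/-- The maximum number of arcs in an out forest of the digraph with arc set `A`. -/
noncomputable def maxOutForestCard {n : ℕ} (A : Finset (Fin n × Fin n)) : ℕ :=
  sSup {k | ∃ F : Finset (Fin n × Fin n), IsOutForestOf A F ∧ F.card = k}

/-- The maximum number of arcs in an in forest of the digraph with arc set `A`. -/
noncomputable def maxInForestCard {n : ℕ} (A : Finset (Fin n × Fin n)) : ℕ :=
  sSup {k | ∃ F : Finset (Fin n × Fin n), IsInForestOf A F ∧ F.card = k}

/-- The out forest dimension `v`: `n − v` is the maximum number of arcs in an out forest. -/
noncomputable def outForestDim {n : ℕ} (A : Finset (Fin n × Fin n)) : ℕ :=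
  n - maxOutForestCard A

/-- The in forest dimension `v'`: `n − v'` is the maximum number of arcs in an in forest. -/
noncomputable def inForestDim {n : ℕ} (A : Finset (Fin n × Fin n)) : ℕ :=
  n - maxInForestCard A

/-!
Every arc of an out forest has its own head, so an out forest has at most as many arcs as
the digraph has heads; a star from a vertex outside the heads attains this bound. In forests
are the out forests of the reversed digraph. The extremal digraphs are those of the ascending
arcs `u → v` with `u < a` and `b ≤ v`: their heads are the `n - b` vertices `v ≥ b`, reached
by a star from `0`, and their tails the `a` vertices `u < a`, all joined to `max a b`.
Conversely a loopless digraph with an arc has a one-arc forest of either kind, so both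
dimensions fall below `n`.
-/

section

variable {n : ℕ}

def HasDirectedCycle (F : Finset (Fin n × Fin n)) : Prop :=
  ∃ (k : ℕ) (f : ℕ → Fin n), 0 < k ∧ f 0 = f k ∧ ∀ i < k, (f i, f (i + 1)) ∈ F

theorem not_hasDirectedCycle_of_rank {β : Type*} [Preorder β] {F : Finset (Fin n × Fin n)}
    (ρ : Fin n → β) (hρ : ∀ p ∈ F, ρ p.1 < ρ p.2) : ¬ HasDirectedCycle F := by
  rintro ⟨k, f, hk, hcycle, hf⟩
  have hrise : ∀ i < k, ρ (f 0) < ρ (f (i + 1)) := by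
    intro i hi
    induction i with
    | zero => exact hρ _ (hf 0 hi)
    | succ i ih => exact (ih (by omega)).trans (hρ _ (hf (i + 1) hi))
  obtain ⟨i, rfl⟩ : ∃ i, k = i + 1 := ⟨k - 1, by omega⟩
  exact (hrise i (by omega)).ne (by rw [hcycle])

def reverseArcs (A : Finset (Fin n × Fin n)) : Finset (Fin n × Fin n) :=
  A.map (Equiv.prodComm _ _).toEmbedding

@[simp]
theorem mem_reverseArcs {A : Finset (Fin n × Fin n)} {p : Fin n × Fin n} :
    p ∈ reverseArcs A ↔ p.swap ∈ A :=
  Finset.mem_map_equiv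

@[simp]
theorem reverseArcs_reverseArcs (A : Finset (Fin n × Fin n)) :
    reverseArcs (reverseArcs A) = A := by
  ext; simp

@[simp]
theorem card_reverseArcs (A : Finset (Fin n × Fin n)) : (reverseArcs A).card = A.card :=
  Finset.card_map _

@[simp]
theorem reverseArcs_eq_empty {A : Finset (Fin n × Fin n)} : reverseArcs A = ∅ ↔ A = ∅ :=
  Finset.map_eq_empty

theorem HasDirectedCycle.of_reverseArcs {F : Finset (Fin n × Fin n)}
    (h : HasDirectedCycle (reverseArcs F)) : HasDirectedCycle F := by
  obtain ⟨k, f, hk, hcycle, hf⟩ := h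
  refine ⟨k, fun i => f (k - i), hk, by simp [hcycle], fun i hi => ?_⟩
  have harc := mem_reverseArcs.mp (hf (k - (i + 1)) (by omega))
  rwa [show k - (i + 1) + 1 = k - i by omega] at harc

theorem hasDirectedCycle_reverseArcs {F : Finset (Fin n × Fin n)} :
    HasDirectedCycle (reverseArcs F) ↔ HasDirectedCycle F :=
  ⟨.of_reverseArcs, fun h => .of_reverseArcs (by rwa [reverseArcs_reverseArcs])⟩

theorem isInForestOf_iff_isOutForestOf_reverseArcs {A F : Finset (Fin n × Fin n)} :
    IsInForestOf A F ↔ IsOutForestOf (reverseArcs A) (reverseArcs F) := by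
  refine and_congr (Finset.map_subset_map).symm (and_congr ?_ hasDirectedCycle_reverseArcs.not.symm)
  simp only [mem_reverseArcs, Prod.swap_prod_mk]
  exact ⟨fun h u u' v => h v u u', fun h u v v' => h v v' u⟩

theorem maxInForestCard_eq_maxOutForestCard_reverseArcs (A : Finset (Fin n × Fin n)) :
    maxInForestCard A = maxOutForestCard (reverseArcs A) := by
  refine congrArg sSup (Set.ext fun k => ⟨?_, ?_⟩)
  · rintro ⟨F, hF, rfl⟩
    exact ⟨reverseArcs F, isInForestOf_iff_isOutForestOf_reverseArcs.mp hF, card_reverseArcs F⟩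
  · rintro ⟨G, hG, rfl⟩
    refine ⟨reverseArcs G, ?_, card_reverseArcs G⟩
    rwa [isInForestOf_iff_isOutForestOf_reverseArcs, reverseArcs_reverseArcs]

theorem inForestDim_eq_outForestDim_reverseArcs (A : Finset (Fin n × Fin n)) :
    inForestDim A = outForestDim (reverseArcs A) := by
  rw [inForestDim, outForestDim, maxInForestCard_eq_maxOutForestCard_reverseArcs]

theorem IsOutForestOf.card_le {A F : Finset (Fin n × Fin n)} {H : Finset (Fin n)}
    (hF : IsOutForestOf A F) (hH : ∀ p ∈ A, p.2 ∈ H) : F.card ≤ H.card := by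
  refine Finset.card_le_card_of_injOn Prod.snd (fun p hp => hH p (hF.1 hp)) ?_
  intro p hp q hq hpq
  exact Prod.ext (hF.2.1 p.1 q.1 p.2 hp (hpq ▸ hq)) hpq

theorem isOutForestOf_star {A : Finset (Fin n × Fin n)} {H : Finset (Fin n)} {s : Fin n}
    (hs : s ∉ H) (hstar : ∀ v ∈ H, (s, v) ∈ A) : IsOutForestOf A (H.image (s, ·)) := by
  refine ⟨?_, ?_, not_hasDirectedCycle_of_rank (fun x => if x = s then 0 else 1) ?_⟩
  · simpa [Finset.image_subset_iff] using hstar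
  · simp only [Finset.mem_image, Prod.mk.injEq]
    rintro u u' v ⟨w, -, rfl, -⟩ ⟨w', -, rfl, -⟩
    rfl
  · simp only [Finset.mem_image]
    rintro _ ⟨v, hv, rfl⟩
    simp [ne_of_mem_of_not_mem hv hs]

theorem le_maxOutForestCard {A F : Finset (Fin n × Fin n)} (hF : IsOutForestOf A F) :
    F.card ≤ maxOutForestCard A := by
  refine le_csSup ⟨A.card, ?_⟩ ⟨F, hF, rfl⟩
  rintro _ ⟨G, hG, rfl⟩
  exact Finset.card_le_card hG.1

theorem maxOutForestCard_le {A : Finset (Fin n × Fin n)} {m : ℕ}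
    (h : ∀ F, IsOutForestOf A F → F.card ≤ m) : maxOutForestCard A ≤ m := by
  refine csSup_le' ?_
  rintro _ ⟨F, hF, rfl⟩
  exact h F hF

theorem card_le_maxOutForestCard_of_star {A : Finset (Fin n × Fin n)} {H : Finset (Fin n)}
    {s : Fin n} (hs : s ∉ H) (hstar : ∀ v ∈ H, (s, v) ∈ A) : H.card ≤ maxOutForestCard A := by
  have hcard := le_maxOutForestCard (isOutForestOf_star hs hstar)
  rwa [Finset.card_image_of_injective _ (Prod.mk_right_injective s)] at hcard

theorem maxOutForestCard_eq_card_of_star {A : Finset (Fin n × Fin n)} {H : Finset (Fin n)}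
    {s : Fin n} (hs : s ∉ H) (hstar : ∀ v ∈ H, (s, v) ∈ A) (hhead : ∀ p ∈ A, p.2 ∈ H) :
    maxOutForestCard A = H.card :=
  le_antisymm (maxOutForestCard_le fun _ hF => IsOutForestOf.card_le hF hhead)
    (card_le_maxOutForestCard_of_star hs hstar)

theorem maxInForestCard_eq_card_of_star {A : Finset (Fin n × Fin n)} {T : Finset (Fin n)}
    {t : Fin n} (ht : t ∉ T) (hstar : ∀ u ∈ T, (u, t) ∈ A) (htail : ∀ p ∈ A, p.1 ∈ T) :
    maxInForestCard A = T.card := by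
  rw [maxInForestCard_eq_maxOutForestCard_reverseArcs]
  exact maxOutForestCard_eq_card_of_star ht (by simpa using hstar)
    (fun p hp => htail _ (mem_reverseArcs.mp hp))

theorem maxOutForestCard_empty : maxOutForestCard (∅ : Finset (Fin n × Fin n)) = 0 :=
  Nat.le_zero.mp <| maxOutForestCard_le fun _ hF =>
    (Finset.card_le_card hF.1).trans_eq Finset.card_empty

theorem outForestDim_eq_self_iff {A : Finset (Fin n × Fin n)} (hA : ∀ p ∈ A, p.1 ≠ p.2) :
    outForestDim A = n ↔ A = ∅ := by
  rcases A.eq_empty_or_nonempty with rfl | ⟨p, hp⟩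
  · simp [outForestDim, maxOutForestCard_empty]
  · have hpos : 1 ≤ maxOutForestCard A :=
      card_le_maxOutForestCard_of_star (H := {p.2}) (s := p.1) (by simpa using hA p hp)
        (by simpa using hp)
    have := p.1.pos
    simp only [outForestDim, Finset.ne_empty_of_mem hp, iff_false]
    omega

theorem inForestDim_eq_self_iff {A : Finset (Fin n × Fin n)} (hA : ∀ p ∈ A, p.1 ≠ p.2) :
    inForestDim A = n ↔ A = ∅ := by
  rw [inForestDim_eq_outForestDim_reverseArcs, outForestDim_eq_self_iff, reverseArcs_eq_empty]
  simpa using fun u v huv => (hA (v, u) huv).symm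

def ascendingArcs (a b : Fin n) : Finset (Fin n × Fin n) :=
  (Finset.Iio a ×ˢ Finset.Ici b).filter fun p => p.1 < p.2

@[simp]
theorem mem_ascendingArcs {a b : Fin n} {p : Fin n × Fin n} :
    p ∈ ascendingArcs a b ↔ p.1 < a ∧ b ≤ p.2 ∧ p.1 < p.2 := by
  simp [ascendingArcs, and_assoc]

theorem outForestDim_ascendingArcs {a b : Fin n} (ha : 0 < (a : ℕ)) (hb : 0 < (b : ℕ)) :
    outForestDim (ascendingArcs a b) = b := by
  let s : Fin n := ⟨0, by omega⟩
  have hsb : s < b := Fin.lt_def.mpr hb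
  have hmax : maxOutForestCard (ascendingArcs a b) = (Finset.Ici b).card :=
    maxOutForestCard_eq_card_of_star (s := s) (by simpa using hsb)
      (fun v hv => mem_ascendingArcs.mpr
        ⟨Fin.lt_def.mpr ha, Finset.mem_Ici.mp hv, hsb.trans_le (Finset.mem_Ici.mp hv)⟩)
      (fun p hp => Finset.mem_Ici.mpr (mem_ascendingArcs.mp hp).2.1)
  rw [outForestDim, hmax, Fin.card_Ici]
  omega

theorem inForestDim_ascendingArcs (a b : Fin n) :
    inForestDim (ascendingArcs a b) = n - a := by
  have hmax : maxInForestCard (ascendingArcs a b) = (Finset.Iio a).card :=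
    maxInForestCard_eq_card_of_star (t := max a b) (by simp)
      (fun u hu => mem_ascendingArcs.mpr ⟨Finset.mem_Iio.mp hu, le_max_right a b,
        (Finset.mem_Iio.mp hu).trans_le (le_max_left a b)⟩)
      (fun p hp => Finset.mem_Iio.mpr (mem_ascendingArcs.mp hp).1)
  rw [inForestDim, hmax, Fin.card_Iio]

end

theorem forest_dimensions_of_digraphs_general (n : ℕ) :
    (∀ k k' : ℕ, 1 ≤ k → k ≤ n - 1 → 1 ≤ k' → k' ≤ n - 1 →
      ∃ A : Finset (Fin n × Fin n), (∀ p ∈ A, p.1 ≠ p.2) ∧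
        outForestDim A = k ∧ inForestDim A = k') ∧
    (∀ A : Finset (Fin n × Fin n), (∀ p ∈ A, p.1 ≠ p.2) →
      ((outForestDim A = n ↔ inForestDim A = n) ∧
       (outForestDim A = n ↔ A = ∅))) := by
  refine ⟨fun k k' hk hkn hk' hk'n => ?_, fun A hA => ?_⟩
  · let a : Fin n := ⟨n - k', by omega⟩
    let b : Fin n := ⟨k, by omega⟩
    refine ⟨ascendingArcs a b, fun p hp => (mem_ascendingArcs.mp hp).2.2.ne, ?_, ?_⟩
    · exact outForestDim_ascendingArcs (show 0 < n - k' by omega) (show 0 < k by omega)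
    · rw [inForestDim_ascendingArcs]
      show n - (n - k') = k'
      omega
  · rw [outForestDim_eq_self_iff hA, inForestDim_eq_self_iff hA]
    exact ⟨Iff.rfl, Iff.rfl⟩

/-- for every `k, k' ∈ {1, …, n−1}` there is a digraph on `n` vertices
with out forest dimension `k` and in forest dimension `k'`; moreover the out forest
dimension equals `n` iff the in forest dimension equals `n`, iff there are no arcs. -/
theorem forest_dimensions_of_digraphs (n : ℕ) (hn : 1 < n) :
    (∀ k k' : ℕ, 1 ≤ k → k ≤ n - 1 → 1 ≤ k' → k' ≤ n - 1 →
      ∃ A : Finset (Fin n × Fin n), (∀ p ∈ A, p.1 ≠ p.2) ∧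
        outForestDim A = k ∧ inForestDim A = k') ∧
    (∀ A : Finset (Fin n × Fin n), (∀ p ∈ A, p.1 ≠ p.2) →
      ((outForestDim A = n ↔ inForestDim A = n) ∧
       (outForestDim A = n ↔ A = ∅))) :=
  forest_dimensions_of_digraphs_general n
end

section
/- For every weighted digraph, the normalized matrix of maximum out forests is idempotent: J̄² = J̄. -/
open Matrix BigOperators Filter

/-- An out forest of the weighted digraph with arc-weight matrix `ε`:
a set of arcs (pairs with positive weight), every vertex has at most one
incoming arc, and there is no directed cycle. -/
def IsOutForest {n : ℕ} (ε : Fin n → Fin n → ℝ) (F : Finset (Fin n × Fin n)) : Prop :=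
  (∀ p ∈ F, 0 < ε p.1 p.2) ∧
  (∀ u u' v : Fin n, (u, v) ∈ F → (u', v) ∈ F → u = u') ∧
  ¬ ∃ (k : ℕ) (f : ℕ → Fin n), 0 < k ∧ f 0 = f k ∧ ∀ i < k, (f i, f (i + 1)) ∈ F

/-- The weight of a forest: the product of the weights of its arcs. -/
noncomputable def forestWeight {n : ℕ} (ε : Fin n → Fin n → ℝ)
    (F : Finset (Fin n × Fin n)) : ℝ :=
  ∏ p ∈ F, ε p.1 p.2

/-- `σ_k`: the total weight of the out forests with exactly `k` arcs. -/
noncomputable def sigmaW {n : ℕ} (ε : Fin n → Fin n → ℝ) (k : ℕ) : ℝ :=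
  ∑ᶠ F ∈ {F : Finset (Fin n × Fin n) | IsOutForest ε F ∧ F.card = k}, forestWeight ε F

/-- `Q_k`: the matrix whose `(i,j)` entry is the total weight of out forests with `k`
arcs in which `j` has no incoming arc and `i` is reachable from `j` along arcs of `F`. -/
noncomputable def QMat {n : ℕ} (ε : Fin n → Fin n → ℝ) (k : ℕ) :
    Matrix (Fin n) (Fin n) ℝ :=
  Matrix.of fun i j =>
    ∑ᶠ F ∈ {F : Finset (Fin n × Fin n) | IsOutForest ε F ∧ F.card = k ∧
        (∀ u, (u, j) ∉ F) ∧ Relation.ReflTransGen (fun a b => (a, b) ∈ F) j i},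
      forestWeight ε F

/-- `n − v`: the maximum number of arcs in an out forest. -/
noncomputable def maxForestCard {n : ℕ} (ε : Fin n → Fin n → ℝ) : ℕ :=
  sSup {k | ∃ F : Finset (Fin n × Fin n), IsOutForest ε F ∧ F.card = k}

/-- The Kirchhoff matrix: `l i j = -ε j i` for `j ≠ i`, `l i i = Σ_{k ≠ i} ε k i`. -/
noncomputable def kirchhoff {n : ℕ} (ε : Fin n → Fin n → ℝ) : Matrix (Fin n) (Fin n) ℝ :=
  Matrix.of fun i j =>
    if i = j then ∑ k ∈ Finset.univ.filter (· ≠ i), ε k i else -(ε j i)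

/-- The normalized matrix of maximum out forests `J̄ = σ_{n−v}⁻¹ Q_{n−v}`. -/
noncomputable def Jbar {n : ℕ} (ε : Fin n → Fin n → ℝ) : Matrix (Fin n) (Fin n) ℝ :=
  (sigmaW ε (maxForestCard ε))⁻¹ • QMat ε (maxForestCard ε)


namespace ForestProof
open Finset
attribute [local instance] Classical.propDecidable

variable {n : ℕ}

abbrev Arcs (n : ℕ) := Fin n × Fin n

def Reach (F : Finset (Arcs n)) : Fin n → Fin n → Prop :=
  Relation.ReflTransGen (fun a b => (a, b) ∈ F)

lemma reach_refl {F : Finset (Arcs n)} {a : Fin n} : Reach F a a := Relation.ReflTransGen.refl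

lemma reach_mono {F F' : Finset (Arcs n)} (h : F ⊆ F') {a b : Fin n} (hr : Reach F a b) :
    Reach F' a b :=
  by
    induction hr with
    | refl => exact Relation.ReflTransGen.refl
    | tail _ hbc ih => exact Relation.ReflTransGen.tail ih (h hbc)

lemma reach_insert_iff {F : Finset (Arcs n)} {t i a b : Fin n} :
    Reach (insert (t, i) F) a b ↔ Reach F a b ∨ (Reach F a t ∧ Reach F i b) := by
  constructor
  · intro h
    induction h with
    | refl => exact Or.inl Relation.ReflTransGen.refl
    | @tail c b hac hcb ih =>
      rcases Finset.mem_insert.1 hcb with h1 | h1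
      · obtain ⟨rfl, rfl⟩ := Prod.mk.inj h1
        rcases ih with h2 | ⟨h2, _⟩
        · exact Or.inr ⟨h2, Relation.ReflTransGen.refl⟩
        · exact Or.inr ⟨h2, Relation.ReflTransGen.refl⟩
      · rcases ih with h2 | ⟨h2, h3⟩
        · exact Or.inl (h2.tail h1)
        · exact Or.inr ⟨h2, h3.tail h1⟩
  · rintro (h | ⟨h1, h2⟩)
    · exact reach_mono (Finset.subset_insert _ _) h
    · exact Relation.ReflTransGen.trans
        ((reach_mono (Finset.subset_insert _ _) h1).tail (Finset.mem_insert_self _ _))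
        (reach_mono (Finset.subset_insert _ _) h2)

lemma reach_insert_self_iff {F : Finset (Arcs n)} {t i b : Fin n} :
    Reach (insert (t, i) F) i b ↔ Reach F i b := by
  rw [reach_insert_iff]
  constructor
  · rintro (h | ⟨_, h⟩) <;> exact h
  · exact Or.inl

def NoCyc (F : Finset (Arcs n)) : Prop := ∀ a b : Fin n, (a, b) ∈ F → ¬ Reach F b a

lemma exists_walk {F : Finset (Arcs n)} {b a : Fin n} (h : Reach F b a) :
    ∃ (k : ℕ) (f : ℕ → Fin n), f 0 = b ∧ f k = a ∧ ∀ i < k, (f i, f (i + 1)) ∈ F := by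
  induction h with
  | refl => exact ⟨0, fun _ => b, rfl, rfl, by omega⟩
  | @tail c a' hbc hca ih =>
    obtain ⟨k, f, hf0, hfk, harc⟩ := ih
    refine ⟨k + 1, fun m => if m ≤ k then f m else a', by simp [hf0], by simp, ?_⟩
    intro i hi
    rcases Nat.lt_or_ge i k with h1 | h1
    · simp only [if_pos (Nat.le_of_lt h1), if_pos (Nat.succ_le_of_lt h1)]
      exact harc i h1
    · have hik : i = k := by omega
      subst hik
      simp only [if_pos (le_refl i), if_neg (by omega : ¬ i + 1 ≤ i)]
      rw [hfk]; exact hca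

lemma walk_reach {F : Finset (Arcs n)} {k : ℕ} {f : ℕ → Fin n}
    (harc : ∀ i < k, (f i, f (i + 1)) ∈ F) {s : ℕ} (d : ℕ) (hsd : s + d ≤ k) :
    Reach F (f s) (f (s + d)) := by
  induction d with
  | zero => exact reach_refl
  | succ d ih =>
    have : Reach F (f s) (f (s + d)) := ih (by omega)
    exact this.tail (harc (s + d) (by omega))

lemma noCyc_iff (F : Finset (Arcs n)) :
    (¬ ∃ (k : ℕ) (f : ℕ → Fin n), 0 < k ∧ f 0 = f k ∧ ∀ i < k, (f i, f (i + 1)) ∈ F) ↔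
      NoCyc F := by
  constructor
  · intro h a b hab hr
    obtain ⟨k, f, hf0, hfk, harc⟩ := exists_walk hr
    refine h ⟨k + 1, fun m => if m = 0 then a else f (m - 1), by omega, ?_, ?_⟩
    · simp only [if_neg (by omega : ¬ k + 1 = 0)]
      simp [hfk]
    · intro i hi
      rcases Nat.eq_zero_or_pos i with rfl | hipos
      · simpa [hf0] using hab
      · simp only [if_neg (by omega : ¬ i = 0), if_neg (by omega : ¬ i + 1 = 0)]
        have : (f (i - 1), f (i - 1 + 1)) ∈ F := harc (i - 1) (by omega)
        have heq : i - 1 + 1 = i + 1 - 1 := by omega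
        rwa [heq] at this
  · rintro h ⟨k, f, hk, hf0, harc⟩
    have h01 : (f 0, f 1) ∈ F := harc 0 hk
    have : Reach F (f 1) (f (1 + (k - 1))) := walk_reach harc (k - 1) (by omega)
    have hk1 : 1 + (k - 1) = k := by omega
    rw [hk1] at this
    exact h _ _ h01 (hf0 ▸ this)

lemma isOutForest_iff {ε : Fin n → Fin n → ℝ} {F : Finset (Arcs n)} :
    IsOutForest ε F ↔ (∀ p ∈ F, 0 < ε p.1 p.2) ∧
      (∀ u u' v : Fin n, (u, v) ∈ F → (u', v) ∈ F → u = u') ∧ NoCyc F := by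
  unfold IsOutForest
  rw [noCyc_iff]

lemma forest_subset {ε : Fin n → Fin n → ℝ} {F F' : Finset (Arcs n)}
    (h : IsOutForest ε F) (hsub : F' ⊆ F) : IsOutForest ε F' := by
  rw [isOutForest_iff] at h ⊢
  obtain ⟨hpos, huniq, hcyc⟩ := h
  exact ⟨fun p hp => hpos p (hsub hp), fun u u' v h1 h2 => huniq u u' v (hsub h1) (hsub h2),
    fun a b hab hr => hcyc a b (hsub hab) (reach_mono hsub hr)⟩

lemma reach_comparable {F : Finset (Arcs n)}
    (huniq : ∀ u u' v : Fin n, (u, v) ∈ F → (u', v) ∈ F → u = u') {i j c : Fin n}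
    (hi : Reach F i c) (hj : Reach F j c) : Reach F i j ∨ Reach F j i := by
  induction hi generalizing j with
  | refl => exact Or.inr hj
  | @tail b c hib hbc ih =>
    rcases hj.cases_tail with rfl | ⟨d, hjd, hdc⟩
    · exact Or.inl (hib.tail hbc)
    · have : d = b := huniq d b c hdc hbc
      subst this
      exact ih hjd

lemma eq_of_reach_of_noIn {F : Finset (Arcs n)} {j i : Fin n} (h : Reach F i j)
    (hroot : ∀ u, (u, j) ∉ F) : i = j := by
  rcases h.cases_tail with h1 | ⟨c, _, hc⟩
  · exact h1.symm
  · exact absurd hc (hroot c)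

lemma reach_root {F : Finset (Arcs n)}
    (huniq : ∀ u u' v : Fin n, (u, v) ∈ F → (u', v) ∈ F → u = u') {j i c : Fin n}
    (hroot : ∀ u, (u, j) ∉ F) (hjc : Reach F j c) (hic : Reach F i c) : Reach F j i := by
  rcases reach_comparable huniq hic hjc with h | h
  · have := eq_of_reach_of_noIn h hroot
    subst this; exact reach_refl
  · exact h

lemma exists_parent {F : Finset (Arcs n)} {j i : Fin n} (h : Reach F j i) (hne : j ≠ i) :
    ∃ u, (u, i) ∈ F := by
  rcases h.cases_tail with h1 | ⟨c, _, hc⟩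
  · exact absurd h1.symm hne
  · exact ⟨c, hc⟩

noncomputable def parentOf (F : Finset (Arcs n)) (i : Fin n) : Fin n :=
  if h : ∃ u, (u, i) ∈ F then h.choose else i

lemma parentOf_mem {F : Finset (Arcs n)} {i : Fin n} (h : ∃ u, (u, i) ∈ F) :
    (parentOf F i, i) ∈ F := by
  rw [parentOf, dif_pos h]
  exact h.choose_spec

lemma parentOf_eq {F : Finset (Arcs n)}
    (huniq : ∀ u u' v : Fin n, (u, v) ∈ F → (u', v) ∈ F → u = u') {u i : Fin n}
    (h : (u, i) ∈ F) : parentOf F i = u :=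
  huniq _ _ _ (parentOf_mem ⟨u, h⟩) h

lemma forest_insert {ε : Fin n → Fin n → ℝ} {F : Finset (Arcs n)} {t i : Fin n}
    (hF : IsOutForest ε F) (hnoIn : ∀ u, (u, i) ∉ F) (hpos : 0 < ε t i)
    (hnr : ¬ Reach F i t) : IsOutForest ε (insert (t, i) F) := by
  rw [isOutForest_iff] at hF ⊢
  obtain ⟨hp, huniq, hcyc⟩ := hF
  refine ⟨?_, ?_, ?_⟩
  · intro p hp'
    rcases Finset.mem_insert.1 hp' with rfl | h1
    · exact hpos
    · exact hp p h1
  · intro u u' v h1 h2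
    rcases Finset.mem_insert.1 h1 with h1' | h1' <;> rcases Finset.mem_insert.1 h2 with h2' | h2'
    · obtain ⟨rfl, rfl⟩ := Prod.mk.inj h1'
      obtain ⟨rfl, _⟩ := Prod.mk.inj h2'
      rfl
    · obtain ⟨rfl, rfl⟩ := Prod.mk.inj h1'
      exact absurd h2' (hnoIn u')
    · obtain ⟨rfl, rfl⟩ := Prod.mk.inj h2'
      exact absurd h1' (hnoIn u)
    · exact huniq u u' v h1' h2'
  · intro a b hab hr
    rcases Finset.mem_insert.1 hab with h1 | h1
    · obtain ⟨rfl, rfl⟩ := Prod.mk.inj h1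
      exact hnr (reach_insert_self_iff.1 hr)
    · rcases reach_insert_iff.1 hr with h2 | ⟨h2, h3⟩
      · exact hcyc a b h1 h2
      · exact hnr (Relation.ReflTransGen.trans (h3.tail h1) h2)


variable {ε : Fin n → Fin n → ℝ}

lemma mem_not_self {F : Finset (Arcs n)} (hF : IsOutForest ε F) (hdiag : ∀ i, ε i i = 0)
    {i : Fin n} : (i, i) ∉ F := fun h => by
  have := hF.1 _ h; rw [hdiag] at this; exact lt_irrefl _ this

/-- The master insert/erase bijection. -/
lemma gen_bij (hdiag : ∀ i, ε i i = 0) (k : ℕ) (i : Fin n)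
    (φp : Fin n → Finset (Arcs n) → Prop) (φG : Finset (Arcs n) → Prop)
    (htrans : ∀ t F, IsOutForest ε F → F.card = k → (∀ u, (u, i) ∉ F) → 0 < ε t i →
      ¬ Reach F i t → (φp t F ↔ φG (insert (t, i) F)))
    (S : Finset (Fin n × Finset (Arcs n))) (T : Finset (Finset (Arcs n)))
    (hS : ∀ x : Fin n × Finset (Arcs n), x ∈ S ↔
      (IsOutForest ε x.2 ∧ x.2.card = k ∧ (∀ u, (u, i) ∉ x.2) ∧ 0 < ε x.1 i ∧
        ¬ Reach x.2 i x.1 ∧ φp x.1 x.2))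
    (hT : ∀ G : Finset (Arcs n), G ∈ T ↔
      (IsOutForest ε G ∧ G.card = k + 1 ∧ (∃ u, (u, i) ∈ G) ∧ φG G)) :
    ∑ x ∈ S, ε x.1 i * forestWeight ε x.2 = ∑ G ∈ T, forestWeight ε G := by
  refine Finset.sum_nbij' (fun x => insert (x.1, i) x.2)
    (fun G => (parentOf G i, G.erase (parentOf G i, i))) ?_ ?_ ?_ ?_ ?_
  · rintro ⟨t, F⟩ hx
    obtain ⟨hF, hcard, hnoIn, hpos, hnr, hφ⟩ := (hS _).1 hx
    refine (hT _).2 ⟨forest_insert hF hnoIn hpos hnr, ?_, ⟨t, Finset.mem_insert_self _ _⟩, ?_⟩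
    · rw [Finset.card_insert_of_notMem (hnoIn t), hcard]
    · exact (htrans t F hF hcard hnoIn hpos hnr).1 hφ
  · intro G hG
    obtain ⟨hG', hcard, hex, hφ⟩ := (hT _).1 hG
    have hu : (parentOf G i, i) ∈ G := parentOf_mem hex
    have huniq := (isOutForest_iff.1 hG').2.1
    have hnoIn : ∀ v, (v, i) ∉ G.erase (parentOf G i, i) := by
      intro v hv
      have hv' : (v, i) ∈ G := Finset.mem_of_mem_erase hv
      have : v = parentOf G i := (parentOf_eq huniq hv').symm
      subst this
      exact (Finset.notMem_erase _ _) hv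
    have hFor : IsOutForest ε (G.erase (parentOf G i, i)) := forest_subset hG' (Finset.erase_subset _ _)
    have hins : insert (parentOf G i, i) (G.erase (parentOf G i, i)) = G :=
      Finset.insert_erase hu
    have hpos : 0 < ε (parentOf G i) i := hG'.1 _ hu
    have hnr : ¬ Reach (G.erase (parentOf G i, i)) i (parentOf G i) := fun hr =>
      (isOutForest_iff.1 hG').2.2 _ _ hu (reach_mono (Finset.erase_subset _ _) hr)
    have hcard' : (G.erase (parentOf G i, i)).card = k := by
      rw [Finset.card_erase_of_mem hu, hcard]; omega
    refine (hS _).2 ⟨hFor, hcard', hnoIn, hpos, hnr, ?_⟩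
    exact (htrans _ _ hFor hcard' hnoIn hpos hnr).2 (by rwa [hins])
  · rintro ⟨t, F⟩ hx
    obtain ⟨hF, hcard, hnoIn, hpos, hnr, hφ⟩ := (hS _).1 hx
    have hins : IsOutForest ε (insert (t, i) F) := forest_insert hF hnoIn hpos hnr
    have huniq := (isOutForest_iff.1 hins).2.1
    have hpar : parentOf (insert (t, i) F) i = t :=
      parentOf_eq huniq (Finset.mem_insert_self _ _)
    simp only [hpar, Finset.erase_insert (hnoIn t)]
  · intro G hG
    exact Finset.insert_erase (parentOf_mem ((hT _).1 hG).2.2.1)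
  · rintro ⟨t, F⟩ hx
    rw [forestWeight, forestWeight, Finset.prod_insert (((hS _).1 hx).2.2.1 t)]

/-- The parent-swap bijection (off-diagonal `A₂ ↔ B₂`). -/
lemma swap_bij (hdiag : ∀ i, ε i i = 0) (k : ℕ) (i j : Fin n) (hij : i ≠ j)
    (S T : Finset (Fin n × Finset (Arcs n)))
    (hS : ∀ x : Fin n × Finset (Arcs n), x ∈ S ↔
      ((IsOutForest ε x.2 ∧ x.2.card = k ∧ (∀ u, (u, j) ∉ x.2) ∧ Reach x.2 j i ∧
        0 < ε x.1 i) ∧ ¬ Reach x.2 i x.1))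
    (hT : ∀ x : Fin n × Finset (Arcs n), x ∈ T ↔
      ((IsOutForest ε x.2 ∧ x.2.card = k ∧ (∀ u, (u, j) ∉ x.2) ∧ Reach x.2 j x.1 ∧
        0 < ε x.1 i) ∧ ¬ Reach x.2 i x.1 ∧ (∃ u, (u, i) ∈ x.2))) :
    ∑ x ∈ S, ε x.1 i * forestWeight ε x.2 = ∑ x ∈ T, ε x.1 i * forestWeight ε x.2 := by
  have main : ∀ (t : Fin n) (F : Finset (Arcs n)), IsOutForest ε F → (∀ u, (u, j) ∉ F) →
      (∃ u, (u, i) ∈ F) → 0 < ε t i → ¬ Reach F i t →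
      IsOutForest ε (insert (t, i) (F.erase (parentOf F i, i))) ∧
      (insert (t, i) (F.erase (parentOf F i, i))).card = F.card ∧
      (∀ u, (u, j) ∉ insert (t, i) (F.erase (parentOf F i, i))) ∧
      0 < ε (parentOf F i) i ∧
      ¬ Reach (insert (t, i) (F.erase (parentOf F i, i))) i (parentOf F i) ∧
      (∃ u, (u, i) ∈ insert (t, i) (F.erase (parentOf F i, i))) ∧
      ε t i * forestWeight ε F = ε (parentOf F i) i *
        forestWeight ε (insert (t, i) (F.erase (parentOf F i, i))) := by
    intro t F hF hrootj hex hpos hnr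
    set u := parentOf F i with hu_def
    have hu : (u, i) ∈ F := parentOf_mem hex
    have huniq := (isOutForest_iff.1 hF).2.1
    have hcyc := (isOutForest_iff.1 hF).2.2
    set E := F.erase (u, i) with hE_def
    have hEsub : E ⊆ F := Finset.erase_subset _ _
    have hEfor : IsOutForest ε E := forest_subset hF hEsub
    have hnoInE : ∀ v, (v, i) ∉ E := by
      intro v hv
      have : v = u := (parentOf_eq huniq (Finset.mem_of_mem_erase hv)).symm
      subst this; exact Finset.notMem_erase _ _ hv
    have hnrE : ¬ Reach E i t := fun hr => hnr (reach_mono hEsub hr)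
    have hforest : IsOutForest ε (insert (t, i) E) := forest_insert hEfor hnoInE hpos hnrE
    have hcardF : 0 < F.card := Finset.card_pos.2 ⟨(u, i), hu⟩
    refine ⟨hforest, ?_, ?_, hF.1 _ hu, ?_, ⟨t, Finset.mem_insert_self _ _⟩, ?_⟩
    · rw [Finset.card_insert_of_notMem (hnoInE t), Finset.card_erase_of_mem hu]
      omega
    · intro v hv
      rcases Finset.mem_insert.1 hv with h1 | h1
      · exact hij (Prod.mk.inj h1).2.symm
      · exact hrootj v (hEsub h1)
    · intro hr
      rw [reach_insert_self_iff] at hr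
      exact hcyc _ _ hu (reach_mono hEsub hr)
    · rw [forestWeight, forestWeight, Finset.prod_insert (hnoInE t),
        ← Finset.mul_prod_erase F _ hu]
      ring
  refine Finset.sum_nbij'
    (fun x => (parentOf x.2 i, insert (x.1, i) (x.2.erase (parentOf x.2 i, i))))
    (fun x => (parentOf x.2 i, insert (x.1, i) (x.2.erase (parentOf x.2 i, i))))
    ?_ ?_ ?_ ?_ ?_
  · rintro ⟨t, F⟩ hx
    obtain ⟨⟨hF, hcard, hrootj, hji, hpos⟩, hnr⟩ := (hS _).1 hx
    have hex : ∃ u, (u, i) ∈ F := exists_parent hji (Ne.symm hij)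
    obtain ⟨hforest, hcard', hrootj', hpos', hnr', hex', _⟩ :=
      main t F hF hrootj hex hpos hnr
    refine (hT _).2 ⟨⟨hforest, by rw [hcard', hcard], hrootj', ?_, hpos'⟩, hnr', hex'⟩
    · set u := parentOf F i
      have hu : (u, i) ∈ F := parentOf_mem hex
      have huniq := (isOutForest_iff.1 hF).2.1
      have hju : Reach F j u := by
        rcases hji.cases_tail with h1 | ⟨d, hjd, hdc⟩
        · exact absurd h1 hij
        · have : d = u := huniq d u i hdc hu
          exact this ▸ hjd
      have hjuE : Reach (F.erase (u, i)) j u := by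
        have := Finset.insert_erase hu
        rw [← this] at hju
        rcases reach_insert_iff.1 hju with h | ⟨h, _⟩ <;> exact h
      exact reach_mono (Finset.subset_insert _ _) hjuE
  · rintro ⟨s, F⟩ hx
    obtain ⟨⟨hF, hcard, hrootj, hjs, hpos⟩, hnr, hex⟩ := (hT _).1 hx
    obtain ⟨hforest, hcard', hrootj', hpos', hnr', _, _⟩ :=
      main s F hF hrootj hex hpos hnr
    refine (hS _).2 ⟨⟨hforest, by rw [hcard', hcard], hrootj', ?_, hpos'⟩, hnr'⟩
    · set u := parentOf F i
      have hu : (u, i) ∈ F := parentOf_mem hex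
      have hjsE : Reach (F.erase (u, i)) j s := by
        have hins := Finset.insert_erase hu
        rw [← hins] at hjs
        rcases reach_insert_iff.1 hjs with h | ⟨_, h⟩
        · exact h
        · exact absurd (reach_mono (hins ▸ Finset.erase_subset _ _ : F.erase (u,i) ⊆ F) h) hnr
      exact (reach_mono (Finset.subset_insert _ _) hjsE).tail (Finset.mem_insert_self _ _)
  · rintro ⟨t, F⟩ hx
    obtain ⟨⟨hF, hcard, hrootj, hji, hpos⟩, hnr⟩ := (hS _).1 hx
    have hex : ∃ u, (u, i) ∈ F := exists_parent hji (Ne.symm hij)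
    obtain ⟨hforest, _, _, _, _, _, _⟩ := main t F hF hrootj hex hpos hnr
    set u := parentOf F i with hu_def
    have hu : (u, i) ∈ F := parentOf_mem hex
    have huniq' := (isOutForest_iff.1 hforest).2.1
    have hnoInE : ∀ v, (v, i) ∉ F.erase (u, i) := by
      intro v hv
      have : v = u := (parentOf_eq (isOutForest_iff.1 hF).2.1 (Finset.mem_of_mem_erase hv)).symm
      subst this; exact Finset.notMem_erase _ _ hv
    have hpar : parentOf (insert (t, i) (F.erase (u, i))) i = t :=
      parentOf_eq huniq' (Finset.mem_insert_self _ _)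
    simp only [hpar, Finset.erase_insert (hnoInE t), Finset.insert_erase hu]
  · rintro ⟨s, F⟩ hx
    obtain ⟨⟨hF, hcard, hrootj, hjs, hpos⟩, hnr, hex⟩ := (hT _).1 hx
    obtain ⟨hforest, _, _, _, _, _, _⟩ := main s F hF hrootj hex hpos hnr
    set u := parentOf F i with hu_def
    have hu : (u, i) ∈ F := parentOf_mem hex
    have huniq' := (isOutForest_iff.1 hforest).2.1
    have hnoInE : ∀ v, (v, i) ∉ F.erase (u, i) := by
      intro v hv
      have : v = u := (parentOf_eq (isOutForest_iff.1 hF).2.1 (Finset.mem_of_mem_erase hv)).symm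
      subst this; exact Finset.notMem_erase _ _ hv
    have hpar : parentOf (insert (s, i) (F.erase (u, i))) i = s :=
      parentOf_eq huniq' (Finset.mem_insert_self _ _)
    simp only [hpar, Finset.erase_insert (hnoInE s), Finset.insert_erase hu]
  · rintro ⟨t, F⟩ hx
    obtain ⟨⟨hF, hcard, hrootj, hji, hpos⟩, hnr⟩ := (hS _).1 hx
    have hex : ∃ u, (u, i) ∈ F := exists_parent hji (Ne.symm hij)
    obtain ⟨_, _, _, _, _, _, hw⟩ := main t F hF hrootj hex hpos hnr
    exact hw

-- sum conversions

lemma finsum_mem_filter {α : Type*} [Fintype α] (p : α → Prop) [DecidablePred p] (f : α → ℝ) :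
    ∑ᶠ x ∈ {x | p x}, f x = ∑ x ∈ univ.filter p, f x := by
  rw [← finsum_mem_coe_finset]
  congr 1
  ext x; simp

lemma sum_congr_mem {α : Type*} {S T : Finset α} (f : α → ℝ) (h : ∀ x, x ∈ S ↔ x ∈ T) :
    ∑ x ∈ S, f x = ∑ x ∈ T, f x :=
  Finset.sum_congr (Finset.ext h) fun _ _ => rfl

lemma QMat_eq (ε : Fin n → Fin n → ℝ) (k : ℕ) (i j : Fin n) :
    QMat ε k i j = ∑ F ∈ univ.filter (fun F : Finset (Arcs n) =>
      IsOutForest ε F ∧ F.card = k ∧ (∀ u, (u, j) ∉ F) ∧ Reach F j i), forestWeight ε F :=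
  finsum_mem_filter (fun F : Finset (Arcs n) =>
    IsOutForest ε F ∧ F.card = k ∧ (∀ u, (u, j) ∉ F) ∧ Reach F j i) (forestWeight ε)

lemma sigmaW_eq (ε : Fin n → Fin n → ℝ) (k : ℕ) :
    sigmaW ε k = ∑ F ∈ univ.filter (fun F : Finset (Arcs n) =>
      IsOutForest ε F ∧ F.card = k), forestWeight ε F :=
  finsum_mem_filter (fun F : Finset (Arcs n) => IsOutForest ε F ∧ F.card = k) (forestWeight ε)

lemma first_term (hnonneg : ∀ a b, 0 ≤ ε a b) (hdiag : ∀ a, ε a a = 0) (k : ℕ)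
    (i j : Fin n) (a : Fin n → Fin n) :
    ∑ t ∈ univ.filter (· ≠ i), ε t i * QMat ε k (a t) j
    = ∑ x ∈ univ.filter (fun x : Fin n × Finset (Arcs n) =>
        IsOutForest ε x.2 ∧ x.2.card = k ∧ (∀ u, (u, j) ∉ x.2) ∧ Reach x.2 j (a x.1) ∧
        0 < ε x.1 i), ε x.1 i * forestWeight ε x.2 := by
  have hinner : ∀ t : Fin n,
      ∑ F ∈ univ.filter (fun F : Finset (Arcs n) => IsOutForest ε F ∧ F.card = k ∧
        (∀ u, (u, j) ∉ F) ∧ Reach F j (a t) ∧ 0 < ε t i), ε t i * forestWeight ε F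
      = if t ≠ i then ε t i * QMat ε k (a t) j else 0 := by
    intro t
    by_cases ht : t = i
    · subst ht
      rw [if_neg (by simp)]
      apply Finset.sum_eq_zero
      intro F hF
      simp only [mem_filter] at hF
      have := hF.2.2.2.2.2
      rw [hdiag] at this
      exact absurd this (lt_irrefl 0)
    · rw [if_pos ht]
      by_cases hpos : 0 < ε t i
      · rw [QMat_eq, Finset.mul_sum]
        apply sum_congr_mem
        intro F
        simp only [mem_filter, mem_univ, true_and]
        constructor
        · rintro ⟨h1, h2, h3, h4, _⟩; exact ⟨h1, h2, h3, h4⟩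
        · rintro ⟨h1, h2, h3, h4⟩; exact ⟨h1, h2, h3, h4, hpos⟩
      · have h0 : ε t i = 0 := le_antisymm (not_lt.1 hpos) (hnonneg t i)
        rw [h0]
        simp
  rw [Finset.sum_filter, Finset.sum_filter, Fintype.sum_prod_type]
  apply Finset.sum_congr rfl
  intro t _
  rw [← Finset.sum_filter, hinner t]

lemma key (hnonneg : ∀ a b, 0 ≤ ε a b) (hdiag : ∀ a, ε a a = 0) (k : ℕ) (i j : Fin n) :
    (∑ t ∈ univ.filter (· ≠ i), ε t i) * QMat ε k i j + QMat ε (k + 1) i j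
    = (∑ s ∈ univ.filter (· ≠ i), ε s i * QMat ε k s j)
      + (if i = j then sigmaW ε (k + 1) else 0) := by
  have hA : (∑ t ∈ univ.filter (· ≠ i), ε t i) * QMat ε k i j
      = ∑ x ∈ univ.filter (fun x : Fin n × Finset (Arcs n) =>
          IsOutForest ε x.2 ∧ x.2.card = k ∧ (∀ u, (u, j) ∉ x.2) ∧ Reach x.2 j i ∧
          0 < ε x.1 i), ε x.1 i * forestWeight ε x.2 := by
    rw [Finset.sum_mul]
    exact first_term hnonneg hdiag k i j (fun _ => i)
  have hB : (∑ s ∈ univ.filter (· ≠ i), ε s i * QMat ε k s j)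
      = ∑ x ∈ univ.filter (fun x : Fin n × Finset (Arcs n) =>
          IsOutForest ε x.2 ∧ x.2.card = k ∧ (∀ u, (u, j) ∉ x.2) ∧ Reach x.2 j x.1 ∧
          0 < ε x.1 i), ε x.1 i * forestWeight ε x.2 :=
    first_term hnonneg hdiag k i j (fun s => s)
  set f : Fin n × Finset (Arcs n) → ℝ := fun x => ε x.1 i * forestWeight ε x.2 with hf
  set pA : Fin n × Finset (Arcs n) → Prop := fun x =>
    IsOutForest ε x.2 ∧ x.2.card = k ∧ (∀ u, (u, j) ∉ x.2) ∧ Reach x.2 j i ∧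
    0 < ε x.1 i with hpA
  set pB : Fin n × Finset (Arcs n) → Prop := fun x =>
    IsOutForest ε x.2 ∧ x.2.card = k ∧ (∀ u, (u, j) ∉ x.2) ∧ Reach x.2 j x.1 ∧
    0 < ε x.1 i with hpB
  set R : Fin n × Finset (Arcs n) → Prop := fun x => Reach x.2 i x.1 with hR
  have splitA : ∑ x ∈ univ.filter pA, f x
      = ∑ x ∈ (univ.filter pA).filter R, f x
        + ∑ x ∈ (univ.filter pA).filter (fun x => ¬ R x), f x := by
    rw [Finset.sum_filter_add_sum_filter_not (univ.filter pA) R f]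
  rw [hA, hB, splitA]
  by_cases hij : i = j
  · subst hij
    rw [if_pos rfl]
    have E1 : ∑ x ∈ (univ.filter pA).filter R, f x = ∑ x ∈ univ.filter pB, f x := by
      apply sum_congr_mem
      intro x
      simp only [mem_filter, mem_univ, true_and, hpA, hpB, hR]
      constructor
      · rintro ⟨⟨h1, h2, h3, _, h5⟩, hr⟩; exact ⟨h1, h2, h3, hr, h5⟩
      · rintro ⟨h1, h2, h3, h4, h5⟩; exact ⟨⟨h1, h2, h3, reach_refl, h5⟩, h4⟩
    have hsig : sigmaW ε (k + 1)
        = ∑ G ∈ (univ.filter (fun G : Finset (Arcs n) =>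
            IsOutForest ε G ∧ G.card = k + 1)).filter (fun G => ∃ u, (u, i) ∈ G),
            forestWeight ε G
          + ∑ G ∈ (univ.filter (fun G : Finset (Arcs n) =>
            IsOutForest ε G ∧ G.card = k + 1)).filter (fun G => ¬ ∃ u, (u, i) ∈ G),
            forestWeight ε G := by
      rw [sigmaW_eq, Finset.sum_filter_add_sum_filter_not]
    have EQ : QMat ε (k + 1) i i
        = ∑ G ∈ (univ.filter (fun G : Finset (Arcs n) =>
            IsOutForest ε G ∧ G.card = k + 1)).filter (fun G => ¬ ∃ u, (u, i) ∈ G),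
            forestWeight ε G := by
      rw [QMat_eq]
      apply sum_congr_mem
      intro G
      simp only [mem_filter, mem_univ, true_and]
      constructor
      · rintro ⟨h1, h2, h3, _⟩; exact ⟨⟨h1, h2⟩, fun ⟨u, hu⟩ => h3 u hu⟩
      · rintro ⟨⟨h1, h2⟩, h3⟩; exact ⟨h1, h2, fun u hu => h3 ⟨u, hu⟩, reach_refl⟩
    have EA2 : ∑ x ∈ (univ.filter pA).filter (fun x => ¬ R x), f x
        = ∑ G ∈ (univ.filter (fun G : Finset (Arcs n) =>
            IsOutForest ε G ∧ G.card = k + 1)).filter (fun G => ∃ u, (u, i) ∈ G),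
            forestWeight ε G := by
      refine gen_bij (ε := ε) hdiag k i (fun _ _ => True) (fun _ => True)
        (fun _ _ _ _ _ _ _ => Iff.rfl) _ _ ?_ ?_
      · intro x
        simp only [mem_filter, mem_univ, true_and, hpA, hR]
        constructor
        · rintro ⟨⟨h1, h2, h3, _, h5⟩, hr⟩; exact ⟨h1, h2, h3, h5, hr, trivial⟩
        · rintro ⟨h1, h2, h3, h4, h5, _⟩; exact ⟨⟨h1, h2, h3, reach_refl, h4⟩, h5⟩
      · intro G
        simp only [mem_filter, mem_univ, true_and]
        constructor
        · rintro ⟨⟨h1, h2⟩, h3⟩; exact ⟨h1, h2, h3, trivial⟩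
        · rintro ⟨h1, h2, h3, _⟩; exact ⟨⟨h1, h2⟩, h3⟩
    rw [E1, EQ, EA2, hsig]
    ring
  · rw [if_neg hij]
    have splitB : ∑ x ∈ univ.filter pB, f x
        = ∑ x ∈ (univ.filter pB).filter R, f x
          + (∑ x ∈ ((univ.filter pB).filter (fun x => ¬ R x)).filter
              (fun x => ∃ u, (u, i) ∈ x.2), f x
            + ∑ x ∈ ((univ.filter pB).filter (fun x => ¬ R x)).filter
              (fun x => ¬ ∃ u, (u, i) ∈ x.2), f x) := by
      rw [Finset.sum_filter_add_sum_filter_not ((univ.filter pB).filter (fun x => ¬ R x))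
        (fun x => ∃ u, (u, i) ∈ x.2) f,
        Finset.sum_filter_add_sum_filter_not (univ.filter pB) R f]
    rw [splitB]
    have E1 : ∑ x ∈ (univ.filter pA).filter R, f x
        = ∑ x ∈ (univ.filter pB).filter R, f x := by
      apply sum_congr_mem
      intro x
      simp only [mem_filter, mem_univ, true_and, hpA, hpB, hR]
      constructor
      · rintro ⟨⟨h1, h2, h3, h4, h5⟩, hr⟩; exact ⟨⟨h1, h2, h3, h4.trans hr, h5⟩, hr⟩
      · rintro ⟨⟨h1, h2, h3, h4, h5⟩, hr⟩
        exact ⟨⟨h1, h2, h3, reach_root (isOutForest_iff.1 h1).2.1 h3 h4 hr, h5⟩, hr⟩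
    have E2 : ∑ x ∈ (univ.filter pA).filter (fun x => ¬ R x), f x
        = ∑ x ∈ ((univ.filter pB).filter (fun x => ¬ R x)).filter
            (fun x => ∃ u, (u, i) ∈ x.2), f x := by
      refine swap_bij (ε := ε) hdiag k i j hij _ _ ?_ ?_
      · intro x
        simp only [mem_filter, mem_univ, true_and, hpA, hR]
      · intro x
        simp only [mem_filter, mem_univ, true_and, hpB, hR]
        constructor
        · rintro ⟨⟨h1, h2⟩, h3⟩; exact ⟨h1, h2, h3⟩
        · rintro ⟨h1, h2, h3⟩; exact ⟨⟨h1, h2⟩, h3⟩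
    have E3 : QMat ε (k + 1) i j
        = ∑ x ∈ ((univ.filter pB).filter (fun x => ¬ R x)).filter
            (fun x => ¬ ∃ u, (u, i) ∈ x.2), f x := by
      have htrans : ∀ t F, IsOutForest ε F → F.card = k → (∀ u, (u, i) ∉ F) → 0 < ε t i →
          ¬ Reach F i t → (((∀ u, (u, j) ∉ F) ∧ Reach F j t) ↔
            ((∀ u, (u, j) ∉ insert (t, i) F) ∧ Reach (insert (t, i) F) j i)) := by
        intro t F hF hc hnoIn hpos hnr
        constructor
        · rintro ⟨hroot, hjt⟩
          refine ⟨?_, reach_insert_iff.2 (Or.inr ⟨hjt, reach_refl⟩)⟩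
          intro u hu
          rcases Finset.mem_insert.1 hu with h1 | h1
          · exact hij (Prod.mk.inj h1).2.symm
          · exact hroot u h1
        · rintro ⟨hroot, hji⟩
          refine ⟨fun u hu => hroot u (Finset.mem_insert_of_mem hu), ?_⟩
          rcases reach_insert_iff.1 hji with h | ⟨h, _⟩
          · exact absurd (eq_of_reach_of_noIn h hnoIn) (Ne.symm hij)
          · exact h
      rw [QMat_eq]
      refine (gen_bij (ε := ε) hdiag k i
        (fun t F => (∀ u, (u, j) ∉ F) ∧ Reach F j t)
        (fun G => (∀ u, (u, j) ∉ G) ∧ Reach G j i) htrans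
        (((univ.filter pB).filter (fun x => ¬ R x)).filter (fun x => ¬ ∃ u, (u, i) ∈ x.2))
        (univ.filter (fun F : Finset (Arcs n) =>
          IsOutForest ε F ∧ F.card = (k + 1) ∧ (∀ u, (u, j) ∉ F) ∧ Reach F j i))
        ?_ ?_).symm
      · intro x
        simp only [mem_filter, mem_univ, true_and, hpB, hR]
        constructor
        · rintro ⟨⟨⟨h1, h2, h3, h4, h5⟩, h6⟩, h7⟩
          exact ⟨h1, h2, fun u hu => h7 ⟨u, hu⟩, h5, h6, h3, h4⟩
        · rintro ⟨h1, h2, h3, h4, h5, h6, h7⟩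
          exact ⟨⟨⟨h1, h2, h6, h7, h4⟩, h5⟩, fun ⟨u, hu⟩ => h3 u hu⟩
      · intro G
        simp only [mem_filter, mem_univ, true_and]
        constructor
        · rintro ⟨h1, h2, h3, h4⟩
          exact ⟨h1, h2, exists_parent h4 (Ne.symm hij), h3, h4⟩
        · rintro ⟨h1, h2, _, h4, h5⟩; exact ⟨h1, h2, h4, h5⟩
    rw [E1, E2, E3]
    ring

lemma forest_empty : IsOutForest ε (∅ : Finset (Arcs n)) := by
  rw [isOutForest_iff]
  exact ⟨by simp, by simp, fun a b h => absurd h (Finset.notMem_empty _)⟩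

lemma reach_empty {j i : Fin n} (h : Reach (∅ : Finset (Arcs n)) j i) : j = i := by
  exact ((Relation.reflTransGen_iff_eq (r := fun a b => (a, b) ∈ (∅ : Finset (Arcs n)))
    (a := j) (b := i) (fun c hc => Finset.notMem_empty (j, c) hc)).1 h).symm

lemma card_le_max (hF : IsOutForest ε F) : F.card ≤ maxForestCard ε := by
  apply le_csSup
  · exact ⟨Fintype.card (Arcs n), by rintro k ⟨F', _, rfl⟩; exact F'.card_le_univ⟩
  · exact ⟨F, hF, rfl⟩

lemma exists_max_forest (ε : Fin n → Fin n → ℝ) :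
    ∃ F : Finset (Arcs n), IsOutForest ε F ∧ F.card = maxForestCard ε := by
  have hne : {k | ∃ F : Finset (Arcs n), IsOutForest ε F ∧ F.card = k}.Nonempty :=
    ⟨0, ∅, forest_empty, Finset.card_empty⟩
  have hbdd : BddAbove {k | ∃ F : Finset (Arcs n), IsOutForest ε F ∧ F.card = k} :=
    ⟨Fintype.card (Arcs n), by rintro k ⟨F', _, rfl⟩; exact F'.card_le_univ⟩
  exact Nat.sSup_mem hne hbdd

lemma forestWeight_pos (hF : IsOutForest ε F) : 0 < forestWeight ε F :=
  Finset.prod_pos fun p hp => hF.1 p hp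

lemma QMat_zero : QMat ε 0 = (1 : Matrix (Fin n) (Fin n) ℝ) := by
  ext i j
  rw [QMat_eq, Matrix.one_apply]
  by_cases h : i = j
  · subst h
    rw [if_pos rfl]
    rw [show (univ.filter (fun F : Finset (Arcs n) =>
        IsOutForest ε F ∧ F.card = 0 ∧ (∀ u, (u, i) ∉ F) ∧ Reach F i i))
        = {(∅ : Finset (Arcs n))} from ?_]
    · rw [Finset.sum_singleton, forestWeight, Finset.prod_empty]
    · ext F
      simp only [mem_filter, mem_univ, true_and, Finset.mem_singleton, Finset.card_eq_zero]
      constructor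
      · rintro ⟨_, h2, _, _⟩; exact h2
      · rintro rfl
        exact ⟨forest_empty, rfl, fun u => Finset.notMem_empty _, reach_refl⟩
  · rw [if_neg h]
    apply Finset.sum_eq_zero
    intro F hF
    simp only [mem_filter, Finset.card_eq_zero] at hF
    obtain ⟨_, ⟨_, rfl, _, hr⟩⟩ := hF
    exact absurd (reach_empty hr) (Ne.symm h)

lemma sigmaW_zero : sigmaW ε 0 = 1 := by
  rw [sigmaW_eq]
  rw [show (univ.filter (fun F : Finset (Arcs n) => IsOutForest ε F ∧ F.card = 0))
      = {(∅ : Finset (Arcs n))} from ?_]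
  · rw [Finset.sum_singleton, forestWeight, Finset.prod_empty]
  · ext F
    simp only [mem_filter, mem_univ, true_and, Finset.mem_singleton, Finset.card_eq_zero]
    constructor
    · rintro ⟨_, h2⟩; exact h2
    · rintro rfl; exact ⟨forest_empty, rfl⟩

lemma QMat_top : QMat ε (maxForestCard ε + 1) = 0 := by
  ext i j
  rw [QMat_eq, Matrix.zero_apply]
  apply Finset.sum_eq_zero
  intro F hF
  simp only [mem_filter] at hF
  have := card_le_max hF.2.1
  omega

lemma sigmaW_top : sigmaW ε (maxForestCard ε + 1) = 0 := by
  rw [sigmaW_eq]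
  apply Finset.sum_eq_zero
  intro F hF
  simp only [mem_filter] at hF
  have := card_le_max hF.2.1
  omega

lemma sigmaW_max_pos (ε : Fin n → Fin n → ℝ) : 0 < sigmaW ε (maxForestCard ε) := by
  obtain ⟨F₀, hF₀, hc₀⟩ := exists_max_forest ε
  rw [sigmaW_eq]
  apply Finset.sum_pos'
  · intro F hF
    simp only [mem_filter] at hF
    exact le_of_lt (forestWeight_pos hF.2.1)
  · exact ⟨F₀, by simp only [mem_filter, mem_univ, true_and]; exact ⟨hF₀, hc₀⟩,
      forestWeight_pos hF₀⟩

lemma recur (hnonneg : ∀ a b, 0 ≤ ε a b) (hdiag : ∀ a, ε a a = 0) (k : ℕ) :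
    kirchhoff ε * QMat ε k + QMat ε (k + 1)
      = sigmaW ε (k + 1) • (1 : Matrix (Fin n) (Fin n) ℝ) := by
  ext i j
  have hmul : (kirchhoff ε * QMat ε k) i j
      = (∑ t ∈ univ.filter (· ≠ i), ε t i) * QMat ε k i j
        - ∑ s ∈ univ.filter (· ≠ i), ε s i * QMat ε k s j := by
    rw [Matrix.mul_apply, ← Finset.add_sum_erase _ _ (Finset.mem_univ i)]
    have h1 : kirchhoff ε i i = ∑ t ∈ univ.filter (· ≠ i), ε t i := by
      simp [kirchhoff]
    have h2 : ∑ x ∈ univ.erase i, kirchhoff ε i x * QMat ε k x j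
        = ∑ x ∈ univ.erase i, -(ε x i * QMat ε k x j) := by
      apply Finset.sum_congr rfl
      intro x hx
      have hxi : i ≠ x := (Finset.ne_of_mem_erase hx).symm
      simp [kirchhoff, hxi]
    rw [h1, h2, Finset.sum_neg_distrib, ← Finset.filter_ne' univ i]
    ring
  have hkey := key hnonneg hdiag k i j
  simp only [Matrix.add_apply, Matrix.smul_apply, Matrix.one_apply, smul_eq_mul]
  rw [hmul]
  by_cases h : i = j
  · simp only [if_pos h] at hkey ⊢
    linarith
  · simp only [if_neg h] at hkey ⊢
    linarith

lemma QMat_succ (hnonneg : ∀ a b, 0 ≤ ε a b) (hdiag : ∀ a, ε a a = 0) (k : ℕ) :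
    QMat ε (k + 1) = sigmaW ε (k + 1) • (1 : Matrix (Fin n) (Fin n) ℝ)
      - kirchhoff ε * QMat ε k :=
  eq_sub_of_add_eq' (recur hnonneg hdiag k)

lemma commute_LQ (hnonneg : ∀ a b, 0 ≤ ε a b) (hdiag : ∀ a, ε a a = 0) (k : ℕ) :
    kirchhoff ε * QMat ε k = QMat ε k * kirchhoff ε := by
  induction k with
  | zero => rw [QMat_zero, Matrix.mul_one, Matrix.one_mul]
  | succ k ih =>
    rw [QMat_succ hnonneg hdiag k, Matrix.mul_sub, Matrix.sub_mul,
      Matrix.mul_smul, Matrix.smul_mul, Matrix.mul_one, Matrix.one_mul]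
    congr 1
    rw [ih, ← Matrix.mul_assoc, ih]

theorem Jbar_idem (hnonneg : ∀ a b, 0 ≤ ε a b) (hdiag : ∀ a, ε a a = 0) :
    Jbar ε * Jbar ε = Jbar ε := by
  have hσpos : 0 < sigmaW ε (maxForestCard ε) := sigmaW_max_pos ε
  have hσne : sigmaW ε (maxForestCard ε) ≠ 0 := ne_of_gt hσpos
  have hLQ : kirchhoff ε * QMat ε (maxForestCard ε) = 0 := by
    have h := recur hnonneg hdiag (maxForestCard ε)
    rwa [QMat_top, sigmaW_top, zero_smul, add_zero] at h
  have hQQ : QMat ε (maxForestCard ε) * QMat ε (maxForestCard ε)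
      = sigmaW ε (maxForestCard ε) • QMat ε (maxForestCard ε) := by
    rcases Nat.eq_zero_or_pos (maxForestCard ε) with h0 | hpos
    · rw [h0, QMat_zero, sigmaW_zero, Matrix.one_mul, one_smul]
    · obtain ⟨k, hk⟩ : ∃ k, maxForestCard ε = k + 1 := ⟨maxForestCard ε - 1, by omega⟩
      rw [hk] at hLQ ⊢
      have hrec := QMat_succ hnonneg hdiag k
      calc QMat ε (k + 1) * QMat ε (k + 1)
          = (sigmaW ε (k + 1) • (1 : Matrix (Fin n) (Fin n) ℝ)
            - kirchhoff ε * QMat ε k) * QMat ε (k + 1) := by rw [← hrec]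
        _ = sigmaW ε (k + 1) • QMat ε (k + 1)
            - QMat ε k * (kirchhoff ε * QMat ε (k + 1)) := by
            rw [Matrix.sub_mul, Matrix.smul_mul, Matrix.one_mul,
              commute_LQ hnonneg hdiag k, Matrix.mul_assoc]
        _ = sigmaW ε (k + 1) • QMat ε (k + 1) := by
            rw [hLQ, Matrix.mul_zero, sub_zero]
  rw [Jbar, Matrix.smul_mul, Matrix.mul_smul, hQQ, smul_smul, smul_smul]
  congr 1
  field_simp

end ForestProof

/-- the normalized matrix of maximum out forests is idempotent. -/
theorem Jbar_idempotent (n : ℕ) (hn : 1 < n) (ε : Fin n → Fin n → ℝ)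
    (hnonneg : ∀ i j, 0 ≤ ε i j) (hdiag : ∀ i, ε i i = 0) :
    Jbar ε * Jbar ε = Jbar ε :=
  ForestProof.Jbar_idem hnonneg hdiag
end

section
/- For every weighted digraph, the Kirchhoff matrix L and the normalized matrix of maximum out forests J̄ satisfy L·J̄ = J̄·L = 0. -/
open Matrix BigOperators Filter

namespace ForestAux

variable {n : ℕ} {ε : Fin n → Fin n → ℝ}

abbrev Arc (n : ℕ) := Fin n × Fin n

def Reach (F : Finset (Arc n)) (a b : Fin n) : Prop :=
  Relation.ReflTransGen (fun x y => (x, y) ∈ F) a b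

def Func (F : Finset (Arc n)) : Prop :=
  ∀ u u' v : Fin n, (u, v) ∈ F → (u', v) ∈ F → u = u'

def Acy (F : Finset (Arc n)) : Prop := ∀ a b : Fin n, (a, b) ∈ F → ¬ Reach F b a

variable {F G : Finset (Arc n)} {a b c d i j k p u : Fin n}

lemma reach_mono (hFG : F ⊆ G) (h : Reach F a b) : Reach G a b :=
  (Relation.ReflTransGen.mono (fun _ _ hx => hFG hx) :
    Relation.ReflTransGen (fun x y => (x, y) ∈ F) ≤ Relation.ReflTransGen (fun x y => (x, y) ∈ G)) a b h

lemma reach_chain (h : Reach F a b) :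
    ∃ (m : ℕ) (f : ℕ → Fin n), f 0 = a ∧ f m = b ∧ ∀ i < m, (f i, f (i + 1)) ∈ F := by
  induction h with
  | refl => exact ⟨0, fun _ => a, rfl, rfl, by omega⟩
  | @tail c d h1 h2 ih =>
    obtain ⟨k, f, h0, hk, harc⟩ := ih
    refine ⟨k + 1, fun i => if i = k + 1 then d else f i, by simpa using h0, by simp, ?_⟩
    intro i hi
    rcases Nat.lt_or_ge i k with h | h
    · simp only [show i ≠ k + 1 by omega, show i + 1 ≠ k + 1 by omega, if_neg,
        ite_false]
      exact harc i h
    · have hik : i = k := by omega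
      subst hik
      simp only [show i ≠ i + 1 by omega, ite_false, ite_true, if_pos rfl]
      rw [hk]
      exact h2

lemma forest_acy (hF : IsOutForest ε F) : Acy F := by
  intro a b hab hr
  obtain ⟨k, f, h0, hk, harc⟩ := reach_chain hr
  refine hF.2.2 ⟨k + 1, fun i => if i = k + 1 then b else f i, by omega, ?_, ?_⟩
  · simp [h0, show (0:ℕ) ≠ k + 1 by omega]
  · intro i hi
    rcases Nat.lt_or_ge i k with h | h
    · simp only [show i ≠ k + 1 by omega, show i + 1 ≠ k + 1 by omega, ite_false]
      exact harc i h
    · have hik : i = k := by omega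
      subst hik
      simp only [show i ≠ i + 1 by omega, ite_false, if_pos rfl]
      rw [hk]
      exact hab

lemma no_loop (hF : IsOutForest ε F) : (a, a) ∉ F :=
  fun h => forest_acy hF a a h Relation.ReflTransGen.refl

lemma forest_of (hpos : ∀ p ∈ F, 0 < ε p.1 p.2) (hfunc : Func F) (hacy : Acy F) :
    IsOutForest ε F := by
  refine ⟨hpos, hfunc, ?_⟩
  rintro ⟨k, f, hk, h0, harc⟩
  have key : ∀ m a, a + m ≤ k → Reach F (f a) (f (a + m)) := by
    intro m
    induction m with
    | zero => intro a _; exact Relation.ReflTransGen.refl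
    | succ m ih =>
      intro a ha
      exact (ih a (by omega)).tail (harc (a + m) (by omega))
  have h1 : Reach F (f 1) (f k) := by
    have := key (k - 1) 1 (by omega)
    rwa [show 1 + (k - 1) = k by omega] at this
  exact hacy (f 0) (f 1) (harc 0 hk) (h0 ▸ h1)

lemma root_reach (hroot : ∀ u, (u, b) ∉ F) (h : Reach F a b) : a = b := by
  rcases h.cases_tail with h' | ⟨c, _, hc⟩
  · exact h'.symm
  · exact absurd hc (hroot c)

lemma reach_insert_elim {x y : Fin n} (hyx : ¬ Reach G y x)
    (h : Reach (insert (x, y) G) a b) :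
    Reach G a b ∨ (Reach G a x ∧ Reach G y b) := by
  induction h with
  | refl => exact Or.inl Relation.ReflTransGen.refl
  | @tail c d h1 h2 ih =>
    rcases Finset.mem_insert.1 h2 with heq | hmem
    · rw [Prod.mk.injEq] at heq
      obtain ⟨rfl, rfl⟩ := heq
      rcases ih with h | ⟨h3, h4⟩
      · exact Or.inr ⟨h, Relation.ReflTransGen.refl⟩
      · exact absurd h4 hyx
    · rcases ih with h | ⟨h3, h4⟩
      · exact Or.inl (h.tail hmem)
      · exact Or.inr ⟨h3, h4.tail hmem⟩

lemma reach_erase_elim (h : Reach F a b) (e : Arc n) :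
    Reach (F.erase e) a b ∨ (Reach F a e.1 ∧ Reach F e.2 b) := by
  induction h with
  | refl => exact Or.inl Relation.ReflTransGen.refl
  | @tail c d h1 h2 ih =>
    by_cases he : (c, d) = e
    · subst he
      exact Or.inr ⟨h1, Relation.ReflTransGen.refl⟩
    · rcases ih with h | ⟨h3, h4⟩
      · exact Or.inl (h.tail (Finset.mem_erase.2 ⟨he, h2⟩))
      · exact Or.inr ⟨h3, h4.tail h2⟩

lemma reach_comparable (hfunc : Func F) (hac : Reach F a c) :
    ∀ {b}, Reach F b c → Reach F a b ∨ Reach F b a := by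
  induction hac with
  | refl => intro b hb; exact Or.inr hb
  | @tail d e h1 h2 ih =>
    intro b hb
    rcases hb.cases_tail with rfl | ⟨g, hbg, hg⟩
    · exact Or.inl (h1.tail h2)
    · have hgd : g = d := hfunc g d e hg h2
      subst hgd
      exact ih hbg

lemma child_unique (hF : IsOutForest ε F) (hroot : ∀ x, (x, j) ∉ F)
    (h1 : (j, c) ∈ F) (h1r : Reach F c u) (h2 : (j, d) ∈ F) (h2r : Reach F d u) :
    c = d := by
  have key : ∀ {c d : Fin n}, (j, c) ∈ F → (j, d) ∈ F → Reach F c d → c = d := by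
    intro c d hc hd hr
    rcases hr.cases_tail with h | ⟨e, hce, he⟩
    · exact h.symm
    · have hej : e = j := hF.2.1 e j d he hd
      subst hej
      have hcj : c = e := root_reach hroot hce
      · exact absurd (hcj ▸ hc) (no_loop hF)
  rcases reach_comparable hF.2.1 h1r h2r with h | h
  · exact key h1 h2 h
  · exact (key h2 h1 h).symm

lemma func_anti (hGF : G ⊆ F) (h : Func F) : Func G :=
  fun u u' v h1 h2 => h u u' v (hGF h1) (hGF h2)

lemma acy_anti (hGF : G ⊆ F) (h : Acy F) : Acy G :=
  fun a b hab hr => h a b (hGF hab) (reach_mono hGF hr)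

lemma acy_insert {x y : Fin n} (hacy : Acy G) (hyx : ¬ Reach G y x) :
    Acy (insert (x, y) G) := by
  intro a b hab hr
  rcases Finset.mem_insert.1 hab with heq | hmem
  · rw [Prod.mk.injEq] at heq
    obtain ⟨rfl, rfl⟩ := heq
    rcases reach_insert_elim hyx hr with h | ⟨h1, _⟩
    · exact hyx h
    · exact hyx h1
  · rcases reach_insert_elim hyx hr with h | ⟨h1, h2⟩
    · exact hacy a b hmem h
    · exact hyx ((h2.tail hmem).trans h1)


open scoped Classical in
noncomputable def par (F : Finset (Arc n)) (i : Fin n) : Fin n :=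
  if h : ∃ u, (u, i) ∈ F then h.choose else i

lemma par_mem (h : ∃ u, (u, i) ∈ F) : (par F i, i) ∈ F := by
  rw [par, dif_pos h]; exact h.choose_spec

lemma par_eq (hfunc : Func F) (h : (u, i) ∈ F) : par F i = u :=
  hfunc _ _ _ (par_mem ⟨u, h⟩) h

open scoped Classical in
noncomputable def chd (F : Finset (Arc n)) (j u : Fin n) : Fin n :=
  if h : ∃ c, (j, c) ∈ F ∧ Reach F c u then h.choose else j

lemma chd_mem (h : ∃ c, (j, c) ∈ F ∧ Reach F c u) :
    (j, chd F j u) ∈ F ∧ Reach F (chd F j u) u := by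
  rw [chd, dif_pos h]; exact h.choose_spec

lemma chd_eq (hF : IsOutForest ε F) (hroot : ∀ x, (x, j) ∉ F)
    (hc : (j, c) ∈ F) (hr : Reach F c u) : chd F j u = c := by
  have h := chd_mem ⟨c, hc, hr⟩
  exact child_unique hF hroot h.1 h.2 hc hr

lemma card_le_max (hF : IsOutForest ε F) : F.card ≤ maxForestCard ε :=
  le_csSup ⟨Fintype.card (Arc n), by rintro k ⟨F, _, rfl⟩; exact F.card_le_univ⟩
    ⟨F, hF, rfl⟩

lemma not_forest_insert {e : Arc n} (hcard : F.card = maxForestCard ε) (he : e ∉ F) :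
    ¬ IsOutForest ε (insert e F) := by
  intro h
  have h2 := card_le_max h
  rw [Finset.card_insert_of_notMem he, hcard] at h2
  omega

lemma func_swap {G : Finset (Arc n)} (hfunc : Func G) (hnoin : ∀ x, (x, b) ∉ G) :
    Func (insert (a, b) G) := by
  intro u u' v hu hu'
  rcases Finset.mem_insert.1 hu with h1 | h1 <;> rcases Finset.mem_insert.1 hu' with h2 | h2
  · rw [Prod.mk.injEq] at h1 h2
    rw [h1.1, h2.1]
  · rw [Prod.mk.injEq] at h1
    obtain ⟨rfl, rfl⟩ := h1
    exact absurd h2 (hnoin u')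
  · rw [Prod.mk.injEq] at h2
    obtain ⟨rfl, rfl⟩ := h2
    exact absurd h1 (hnoin u)
  · exact hfunc u u' v h1 h2

lemma ext_in (hF : IsOutForest ε F) (hcard : F.card = maxForestCard ε)
    (hpos : 0 < ε k i) (hkiF : (k, i) ∉ F) (hnoin : ∀ u, (u, i) ∉ F)
    (hik : ¬ Reach F i k) : False := by
  apply not_forest_insert hcard hkiF
  refine forest_of ?_ (func_swap hF.2.1 hnoin) (acy_insert (forest_acy hF) hik)
  intro p hp
  rcases Finset.mem_insert.1 hp with rfl | hp
  · exact hpos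
  · exact hF.1 p hp

lemma weight_swap {e e' : Arc n} (he : e ∈ F) (he' : e' ∉ F.erase e) :
    ε e.1 e.2 * forestWeight ε (insert e' (F.erase e)) =
      ε e'.1 e'.2 * forestWeight ε F := by
  unfold forestWeight
  rw [Finset.prod_insert he', ← Finset.mul_prod_erase F _ he]
  ring

lemma card_swap {e e' : Arc n} (he : e ∈ F) (he' : e' ∉ F.erase e) :
    (insert e' (F.erase e)).card = F.card := by
  rw [Finset.card_insert_of_notMem he', Finset.card_erase_of_mem he]
  have := Finset.card_pos.2 ⟨e, he⟩
  omega

lemma swap_swap {e e' : Arc n} (he : e ∈ F) (he' : e' ∉ F) :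
    insert e ((insert e' (F.erase e)).erase e') = F := by
  rw [Finset.erase_insert (fun h => he' (Finset.mem_of_mem_erase h))]
  exact Finset.insert_erase he

lemma forest_swap {e : Arc n} (hF : IsOutForest ε F) (hpos : 0 < ε a b)
    (hnoin : ∀ x, (x, b) ∉ F.erase e) (hnr : ¬ Reach (F.erase e) b a) :
    IsOutForest ε (insert (a, b) (F.erase e)) := by
  refine forest_of ?_
    (func_swap (func_anti (Finset.erase_subset _ _) hF.2.1) hnoin)
    (acy_insert (acy_anti (Finset.erase_subset _ _) (forest_acy hF)) hnr)
  intro p hp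
  rcases Finset.mem_insert.1 hp with rfl | hp
  · exact hpos
  · exact hF.1 p (Finset.mem_of_mem_erase hp)

lemma no_reach_after_erase_child (hF : IsOutForest ε F) (hroot : ∀ x, (x, j) ∉ F)
    (hjc : (j, c) ∈ F) (hcu : Reach F c u) : ¬ Reach (F.erase (j, c)) j u := by
  intro h
  rcases h.cases_head with rfl | ⟨d, hd, hdu⟩
  · have hcj : c = j := root_reach hroot hcu
    exact no_loop hF (hcj ▸ hjc)
  · have hd' : (j, d) ∈ F := Finset.mem_of_mem_erase hd
    have hcd : c = d :=
      child_unique hF hroot hjc hcu hd' (reach_mono (Finset.erase_subset _ _) hdu)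
    subst hcd
    exact (Finset.mem_erase.1 hd).1 rfl


lemma reach_snoc (hF : IsOutForest ε F) (hroot : ∀ x, (x, j) ∉ F)
    (h : Reach F j i) (hki : (k, i) ∈ F) : Reach F j k := by
  rcases h.cases_tail with rfl | ⟨c, h1, h2⟩
  · exact absurd hki (hroot k)
  · have : c = k := hF.2.1 c k i h2 hki
    exact this ▸ h1

/-- Core surgery for the identity `L·Q = 0`. -/
lemma lq_core (hF : IsOutForest ε F) (hcard : F.card = maxForestCard ε)
    (hroot : ∀ x, (x, j) ∉ F) (hpos : 0 < ε k i)
    (hkiF : (k, i) ∉ F) (hik : ¬ Reach F i k) :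
    (par F i, i) ∈ F ∧ par F i ≠ i ∧ 0 < ε (par F i) i ∧ i ≠ j ∧
    IsOutForest ε (insert (k, i) (F.erase (par F i, i))) ∧
    (insert (k, i) (F.erase (par F i, i))).card = maxForestCard ε ∧
    (∀ x, (x, j) ∉ insert (k, i) (F.erase (par F i, i))) ∧
    ε (par F i) i * forestWeight ε (insert (k, i) (F.erase (par F i, i))) =
      ε k i * forestWeight ε F ∧
    (k, i) ∈ insert (k, i) (F.erase (par F i, i)) ∧
    (par F i, i) ∉ insert (k, i) (F.erase (par F i, i)) ∧
    (∀ x, (x, i) ∈ insert (k, i) (F.erase (par F i, i)) → x = k) := by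
  have hex : ∃ x, (x, i) ∈ F := by
    by_contra h
    exact ext_in hF hcard hpos hkiF (fun x hx => h ⟨x, hx⟩) hik
  set p := par F i with hp
  have hpi : (p, i) ∈ F := par_mem hex
  have hpne : p ≠ i := fun h => no_loop hF (h ▸ hpi)
  have hppos : 0 < ε p i := hF.1 _ hpi
  have hij : i ≠ j := fun h => hroot p (h ▸ hpi)
  have hnoin : ∀ x, (x, i) ∉ F.erase (p, i) := by
    intro x hx
    obtain ⟨hne, hxF⟩ := Finset.mem_erase.1 hx
    exact hne (by rw [hF.2.1 x p i hxF hpi])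
  have hkie : (k, i) ∉ F.erase (p, i) := fun h => hkiF (Finset.mem_of_mem_erase h)
  have hF' : IsOutForest ε (insert (k, i) (F.erase (p, i))) :=
    forest_swap hF hpos hnoin (fun h => hik (reach_mono (Finset.erase_subset _ _) h))
  refine ⟨hpi, hpne, hppos, hij, hF', card_swap hpi hkie ▸ hcard, ?_,
    weight_swap hpi hkie, Finset.mem_insert_self _ _, ?_, ?_⟩
  · intro x hx
    rcases Finset.mem_insert.1 hx with heq | hmem
    · rw [Prod.mk.injEq] at heq
      exact absurd heq.2.symm hij
    · exact hroot x (Finset.mem_of_mem_erase hmem)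
  · intro hmem
    rcases Finset.mem_insert.1 hmem with heq | hmem
    · rw [Prod.mk.injEq] at heq
      exact hkiF (heq.1 ▸ hpi)
    · exact (Finset.mem_erase.1 hmem).1 rfl
  · intro x hx
    rcases Finset.mem_insert.1 hx with heq | hmem
    · exact (Prod.mk.injEq _ _ _ _ ▸ heq).1
    · exact absurd hmem (hnoin x)

/-- Forward step for `L·Q = 0`. -/
lemma lq_step (hF : IsOutForest ε F) (hcard : F.card = maxForestCard ε)
    (hroot : ∀ x, (x, j) ∉ F) (hpos : 0 < ε k i)
    (hreach : Reach F j i) (hnr : ¬ Reach F j k) :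
    (par F i, i) ∈ F ∧ par F i ≠ i ∧ 0 < ε (par F i) i ∧ (k, i) ∉ F ∧
    IsOutForest ε (insert (k, i) (F.erase (par F i, i))) ∧
    (insert (k, i) (F.erase (par F i, i))).card = maxForestCard ε ∧
    (∀ x, (x, j) ∉ insert (k, i) (F.erase (par F i, i))) ∧
    Reach (insert (k, i) (F.erase (par F i, i))) j (par F i) ∧
    ¬ Reach (insert (k, i) (F.erase (par F i, i))) j i ∧
    ε (par F i) i * forestWeight ε (insert (k, i) (F.erase (par F i, i))) =
      ε k i * forestWeight ε F ∧
    (∀ x, (x, i) ∈ insert (k, i) (F.erase (par F i, i)) → x = k) := by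
  have hkiF : (k, i) ∉ F := fun h => hnr (reach_snoc hF hroot hreach h)
  have hik : ¬ Reach F i k := fun h => hnr (hreach.trans h)
  obtain ⟨hpi, hpne, hppos, hij, hF', hcard', hroot', hw, hki', hpi', hin⟩ :=
    lq_core hF hcard hroot hpos hkiF hik
  set p := par F i with hp
  have hike : ¬ Reach (F.erase (p, i)) i k :=
    fun h => hik (reach_mono (Finset.erase_subset _ _) h)
  have hjp : Reach F j p := by
    rcases hreach.cases_tail with heq | ⟨c, h1, h2⟩
    · exact absurd heq hij
    · have : c = p := hF.2.1 c p i h2 hpi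
      exact this ▸ h1
  have hjp' : Reach (insert (k, i) (F.erase (p, i))) j p := by
    rcases reach_erase_elim hjp (p, i) with h | ⟨h1, h2⟩
    · exact reach_mono (Finset.subset_insert _ _) h
    · exact absurd h2 (forest_acy hF p i hpi)
  refine ⟨hpi, hpne, hppos, hkiF, hF', hcard', hroot', hjp', ?_, hw, hin⟩
  intro h
  rcases h.cases_tail with heq | ⟨c, h1, h2⟩
  · exact hij heq
  · have hck : c = k := hin c h2
    subst hck
    rcases reach_insert_elim hike h1 with h | ⟨h3, _⟩
    · exact hnr (reach_mono (Finset.erase_subset _ _) h)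
    · exact hnr (reach_mono (Finset.erase_subset _ _) h3)

/-- Inverse step for `L·Q = 0`. -/
lemma lq_step' (hF : IsOutForest ε F) (hcard : F.card = maxForestCard ε)
    (hroot : ∀ x, (x, j) ∉ F) (hpos : 0 < ε k i)
    (hreach : Reach F j k) (hnr : ¬ Reach F j i) :
    (par F i, i) ∈ F ∧ par F i ≠ i ∧ 0 < ε (par F i) i ∧ (k, i) ∉ F ∧
    IsOutForest ε (insert (k, i) (F.erase (par F i, i))) ∧
    (insert (k, i) (F.erase (par F i, i))).card = maxForestCard ε ∧
    (∀ x, (x, j) ∉ insert (k, i) (F.erase (par F i, i))) ∧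
    Reach (insert (k, i) (F.erase (par F i, i))) j i ∧
    ¬ Reach (insert (k, i) (F.erase (par F i, i))) j (par F i) ∧
    ε (par F i) i * forestWeight ε (insert (k, i) (F.erase (par F i, i))) =
      ε k i * forestWeight ε F ∧
    (∀ x, (x, i) ∈ insert (k, i) (F.erase (par F i, i)) → x = k) := by
  have hkiF : (k, i) ∉ F := fun h => hnr (hreach.tail h)
  have hik : ¬ Reach F i k := by
    intro h
    rcases reach_comparable hF.2.1 h hreach with hij | hji
    · have : i = j := root_reach hroot hij
      exact hnr (this ▸ Relation.ReflTransGen.refl)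
    · exact hnr hji
  obtain ⟨hpi, hpne, hppos, hij, hF', hcard', hroot', hw, hki', hpi', hin⟩ :=
    lq_core hF hcard hroot hpos hkiF hik
  set p := par F i with hp
  have hike : ¬ Reach (F.erase (p, i)) i k :=
    fun h => hik (reach_mono (Finset.erase_subset _ _) h)
  have hji' : Reach (insert (k, i) (F.erase (p, i))) j i := by
    rcases reach_erase_elim hreach (p, i) with h | ⟨h1, h2⟩
    · exact (reach_mono (Finset.subset_insert _ _) h).tail hki'
    · exact absurd h2 hik
  refine ⟨hpi, hpne, hppos, hkiF, hF', hcard', hroot', hji', ?_, hw, hin⟩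
  intro h
  rcases reach_insert_elim hike h with h1 | ⟨h1, h2⟩
  · exact hnr ((reach_mono (Finset.erase_subset _ _) h1).tail hpi)
  · exact forest_acy hF p i hpi (reach_mono (Finset.erase_subset _ _) h2)


/-- Forward step for `Q·L = 0`. -/
lemma ql_step (hF : IsOutForest ε F) (hcard : F.card = maxForestCard ε)
    (hroot : ∀ x, (x, j) ∉ F) (hpos : 0 < ε u j) (hune : u ≠ j)
    (hreach : Reach F j i) :
    (j, chd F j u) ∈ F ∧ chd F j u ≠ j ∧ 0 < ε j (chd F j u) ∧
    Reach F (chd F j u) u ∧ (u, j) ∉ F ∧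
    IsOutForest ε (insert (u, j) (F.erase (j, chd F j u))) ∧
    (insert (u, j) (F.erase (j, chd F j u))).card = maxForestCard ε ∧
    (∀ x, (x, chd F j u) ∉ insert (u, j) (F.erase (j, chd F j u))) ∧
    Reach (insert (u, j) (F.erase (j, chd F j u))) (chd F j u) i ∧
    ε j (chd F j u) * forestWeight ε (insert (u, j) (F.erase (j, chd F j u))) =
      ε u j * forestWeight ε F ∧
    (j, chd F j u) ∉ insert (u, j) (F.erase (j, chd F j u)) ∧
    (∀ x, (x, j) ∈ insert (u, j) (F.erase (j, chd F j u)) → x = u) := by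
  have hujF : (u, j) ∉ F := hroot u
  have hju : Reach F j u := by
    by_contra h
    exact ext_in hF hcard hpos hujF hroot h
  have hex : ∃ c, (j, c) ∈ F ∧ Reach F c u := by
    rcases hju.cases_head with heq | ⟨c, h1, h2⟩
    · exact absurd heq hune.symm
    · exact ⟨c, h1, h2⟩
  obtain ⟨hjc, hcu⟩ := chd_mem hex
  set c := chd F j u with hc
  have hcne : c ≠ j := fun h => no_loop hF (h ▸ hjc)
  have hcpos : 0 < ε j c := hF.1 _ hjc
  have hnoin : ∀ x, (x, j) ∉ F.erase (j, c) :=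
    fun x hx => hroot x (Finset.mem_of_mem_erase hx)
  have hnr := no_reach_after_erase_child hF hroot hjc hcu
  have huje : (u, j) ∉ F.erase (j, c) := fun h => hujF (Finset.mem_of_mem_erase h)
  have hF' : IsOutForest ε (insert (u, j) (F.erase (j, c))) :=
    forest_swap hF hpos hnoin hnr
  have hGcu : Reach (F.erase (j, c)) c u := by
    rcases reach_erase_elim hcu (j, c) with h | ⟨h1, _⟩
    · exact h
    · exact absurd (root_reach hroot h1) hcne
  have hcj' : Reach (insert (u, j) (F.erase (j, c))) c j :=
    (reach_mono (Finset.subset_insert _ _) hGcu).tail (Finset.mem_insert_self _ _)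
  have hci' : Reach (insert (u, j) (F.erase (j, c))) c i := by
    rcases reach_erase_elim hreach (j, c) with h | ⟨_, h2⟩
    · exact hcj'.trans (reach_mono (Finset.subset_insert _ _) h)
    · rcases reach_erase_elim h2 (j, c) with h3 | ⟨h3, _⟩
      · exact reach_mono (Finset.subset_insert _ _) h3
      · exact absurd (root_reach hroot h3) hcne
  refine ⟨hjc, hcne, hcpos, hcu, hujF, hF', card_swap hjc huje ▸ hcard, ?_, hci',
    weight_swap hjc huje, ?_, ?_⟩
  · intro x hx
    rcases Finset.mem_insert.1 hx with heq | hmem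
    · rw [Prod.mk.injEq] at heq
      exact hcne heq.2.symm.symm
    · obtain ⟨hne, hxF⟩ := Finset.mem_erase.1 hmem
      exact hne (by rw [hF.2.1 x j c hxF hjc])
  · intro hx
    rcases Finset.mem_insert.1 hx with heq | hmem
    · rw [Prod.mk.injEq] at heq
      exact hune heq.1.symm
    · exact (Finset.mem_erase.1 hmem).1 rfl
  · intro x hx
    rcases Finset.mem_insert.1 hx with heq | hmem
    · exact (Prod.mk.injEq _ _ _ _ ▸ heq).1
    · exact absurd hmem (hnoin x)

/-- Inverse step for `Q·L = 0`. -/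
lemma ql_step' (hF : IsOutForest ε F) (hcard : F.card = maxForestCard ε)
    (hroot : ∀ x, (x, c) ∉ F) (hpos : 0 < ε j c) (hcne : c ≠ j)
    (hreach : Reach F c i) :
    (par F j, j) ∈ F ∧ par F j ≠ j ∧ 0 < ε (par F j) j ∧ (j, c) ∉ F ∧
    IsOutForest ε (insert (j, c) (F.erase (par F j, j))) ∧
    (insert (j, c) (F.erase (par F j, j))).card = maxForestCard ε ∧
    (∀ x, (x, j) ∉ insert (j, c) (F.erase (par F j, j))) ∧
    Reach (insert (j, c) (F.erase (par F j, j))) j i ∧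
    Reach (insert (j, c) (F.erase (par F j, j))) c (par F j) ∧
    ε (par F j) j * forestWeight ε (insert (j, c) (F.erase (par F j, j))) =
      ε j c * forestWeight ε F ∧
    (par F j, j) ∉ insert (j, c) (F.erase (par F j, j)) ∧
    (∀ x, (x, c) ∈ insert (j, c) (F.erase (par F j, j)) → x = j) := by
  have hjcF : (j, c) ∉ F := hroot j
  have hcj : Reach F c j := by
    by_contra h
    exact ext_in hF hcard hpos hjcF hroot h
  have hex : ∃ x, (x, j) ∈ F := by
    rcases hcj.cases_tail with heq | ⟨d, h1, h2⟩
    · exact absurd heq hcne.symm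
    · exact ⟨d, h2⟩
  have huj : (par F j, j) ∈ F := par_mem hex
  set u := par F j with hu
  have hune : u ≠ j := fun h => no_loop hF (h ▸ huj)
  have hupos : 0 < ε u j := hF.1 _ huj
  have hcu : Reach F c u := by
    rcases hcj.cases_tail with heq | ⟨d, h1, h2⟩
    · exact absurd heq hcne.symm
    · have : d = u := (par_eq hF.2.1 h2).symm
      exact this ▸ h1
  have hnoin : ∀ x, (x, c) ∉ F.erase (u, j) :=
    fun x hx => hroot x (Finset.mem_of_mem_erase hx)
  have hnr : ¬ Reach (F.erase (u, j)) c j := by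
    intro h
    rcases h.cases_tail with heq | ⟨d, h1, h2⟩
    · exact hcne.symm heq
    · obtain ⟨hne, hdF⟩ := Finset.mem_erase.1 h2
      exact hne (by rw [hF.2.1 d u j hdF huj])
  have hjce : (j, c) ∉ F.erase (u, j) := fun h => hjcF (Finset.mem_of_mem_erase h)
  have hF' : IsOutForest ε (insert (j, c) (F.erase (u, j))) :=
    forest_swap hF hpos hnoin hnr
  have hGcu : Reach (F.erase (u, j)) c u := by
    rcases reach_erase_elim hcu (u, j) with h | ⟨_, h2⟩
    · exact h
    · exact absurd h2 (forest_acy hF u j huj)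
  have hji' : Reach (insert (j, c) (F.erase (u, j))) j i := by
    rcases reach_erase_elim hreach (u, j) with h | ⟨_, h2⟩
    · exact (Relation.ReflTransGen.single (Finset.mem_insert_self _ _)).trans
        (reach_mono (Finset.subset_insert _ _) h)
    · rcases reach_erase_elim h2 (u, j) with h3 | ⟨h3, _⟩
      · exact reach_mono (Finset.subset_insert _ _) h3
      · exact absurd h3 (forest_acy hF u j huj)
  refine ⟨huj, hune, hupos, hjcF, hF', card_swap huj hjce ▸ hcard, ?_, hji',
    reach_mono (Finset.subset_insert _ _) hGcu, weight_swap huj hjce, ?_, ?_⟩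
  · intro x hx
    rcases Finset.mem_insert.1 hx with heq | hmem
    · rw [Prod.mk.injEq] at heq
      exact hcne heq.2.symm
    · obtain ⟨hne, hxF⟩ := Finset.mem_erase.1 hmem
      exact hne (by rw [hF.2.1 x u j hxF huj])
  · intro hx
    rcases Finset.mem_insert.1 hx with heq | hmem
    · rw [Prod.mk.injEq] at heq
      exact hune heq.1.symm.symm
    · exact (Finset.mem_erase.1 hmem).1 rfl
  · intro x hx
    rcases Finset.mem_insert.1 hx with heq | hmem
    · exact (Prod.mk.injEq _ _ _ _ ▸ heq).1
    · exact absurd hmem (hnoin x)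


lemma LQ_zero (ε : Fin n → Fin n → ℝ) (hnonneg : ∀ a b, 0 ≤ ε a b) :
    kirchhoff ε * QMat ε (maxForestCard ε) = 0 := by
  classical
  ext i j
  rw [Matrix.mul_apply, Matrix.zero_apply]
  set m := maxForestCard ε with hm
  have hTfin : ∀ k : Fin n, ({F : Finset (Arc n) | IsOutForest ε F ∧ F.card = m ∧
      (∀ u, (u, j) ∉ F) ∧ Reach F j k} : Set (Finset (Arc n))).Finite :=
    fun k => Set.toFinite _
  set T : Fin n → Finset (Finset (Arc n)) := fun k => (hTfin k).toFinset with hT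
  have hTm : ∀ k F, F ∈ T k ↔ (IsOutForest ε F ∧ F.card = m ∧ (∀ u, (u, j) ∉ F) ∧
      Reach F j k) := fun k F => Set.Finite.mem_toFinset _
  have hQ : ∀ k : Fin n, QMat ε m k j = ∑ F ∈ T k, forestWeight ε F :=
    fun k => finsum_mem_eq_finite_toFinset_sum _ (hTfin k)
  have hLii : kirchhoff ε i i = ∑ u ∈ Finset.univ.erase i, ε u i := by
    simp [kirchhoff, Finset.filter_ne']
  have step1 : ∑ x : Fin n, kirchhoff ε i x * QMat ε m x j =
      kirchhoff ε i i * QMat ε m i j +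
        ∑ x ∈ Finset.univ.erase i, kirchhoff ε i x * QMat ε m x j :=
    (Finset.add_sum_erase _ _ (Finset.mem_univ i)).symm
  have hLoff : ∀ x ∈ Finset.univ.erase i,
      kirchhoff ε i x * QMat ε m x j = -(ε x i * QMat ε m x j) := by
    intro x hx
    have hne : x ≠ i := (Finset.mem_erase.1 hx).1
    have hk : kirchhoff ε i x = -(ε x i) := by
      simp [kirchhoff, (Ne.symm hne : i ≠ x)]
    rw [hk, neg_mul]
  set P : Finset (Fin n) := (Finset.univ.erase i).filter (fun u => 0 < ε u i) with hP
  have key : ∑ u ∈ P, ε u i * QMat ε m i j = ∑ x ∈ P, ε x i * QMat ε m x j := by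
    have lhs_eq : ∑ u ∈ P, ε u i * QMat ε m i j =
        ∑ x ∈ P.sigma (fun _ => T i), ε x.1 i * forestWeight ε x.2 := by
      rw [Finset.sum_sigma]
      exact Finset.sum_congr rfl (fun u _ => by rw [hQ, Finset.mul_sum])
    have rhs_eq : ∑ x ∈ P, ε x i * QMat ε m x j =
        ∑ x ∈ P.sigma (fun k => T k), ε x.1 i * forestWeight ε x.2 := by
      rw [Finset.sum_sigma]
      exact Finset.sum_congr rfl (fun u _ => by rw [hQ, Finset.mul_sum])
    rw [lhs_eq, rhs_eq]
    refine Finset.sum_bij'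
      (fun x _ => if Reach x.2 j x.1 then x else
        ⟨par x.2 i, insert (x.1, i) (x.2.erase (par x.2 i, i))⟩)
      (fun x _ => if Reach x.2 j i then x else
        ⟨par x.2 i, insert (x.1, i) (x.2.erase (par x.2 i, i))⟩)
      ?_ ?_ ?_ ?_ ?_
    · rintro ⟨k, F⟩ hx
      obtain ⟨hkP, hFT⟩ := Finset.mem_sigma.1 hx
      obtain ⟨hF, hcard, hroot, hreach⟩ := (hTm i F).1 hFT
      have hkne : k ≠ i := (Finset.mem_erase.1 (Finset.mem_filter.1 hkP).1).1
      have hkpos : 0 < ε k i := (Finset.mem_filter.1 hkP).2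
      dsimp only
      by_cases hb : Reach F j k
      · rw [if_pos hb]
        exact Finset.mem_sigma.2 ⟨hkP, (hTm k F).2 ⟨hF, hcard, hroot, hb⟩⟩
      · rw [if_neg hb]
        obtain ⟨hpi, hpne, hppos, hkiF, hF', hcard', hroot', hjp', hnji, hw, hin⟩ :=
          lq_step hF hcard hroot hkpos hreach hb
        refine Finset.mem_sigma.2 ⟨?_, (hTm _ _).2 ⟨hF', hcard', hroot', hjp'⟩⟩
        exact Finset.mem_filter.2 ⟨Finset.mem_erase.2 ⟨hpne, Finset.mem_univ _⟩, hppos⟩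
    · rintro ⟨k, F⟩ hx
      obtain ⟨hkP, hFT⟩ := Finset.mem_sigma.1 hx
      obtain ⟨hF, hcard, hroot, hreach⟩ := (hTm k F).1 hFT
      have hkne : k ≠ i := (Finset.mem_erase.1 (Finset.mem_filter.1 hkP).1).1
      have hkpos : 0 < ε k i := (Finset.mem_filter.1 hkP).2
      dsimp only
      by_cases hb : Reach F j i
      · rw [if_pos hb]
        exact Finset.mem_sigma.2 ⟨hkP, (hTm i F).2 ⟨hF, hcard, hroot, hb⟩⟩
      · rw [if_neg hb]
        obtain ⟨hpi, hpne, hppos, hkiF, hF', hcard', hroot', hji', hnjp, hw, hin⟩ :=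
          lq_step' hF hcard hroot hkpos hreach hb
        refine Finset.mem_sigma.2 ⟨?_, (hTm _ _).2 ⟨hF', hcard', hroot', hji'⟩⟩
        exact Finset.mem_filter.2 ⟨Finset.mem_erase.2 ⟨hpne, Finset.mem_univ _⟩, hppos⟩
    · rintro ⟨k, F⟩ hx
      obtain ⟨hkP, hFT⟩ := Finset.mem_sigma.1 hx
      obtain ⟨hF, hcard, hroot, hreach⟩ := (hTm i F).1 hFT
      have hkpos : 0 < ε k i := (Finset.mem_filter.1 hkP).2
      dsimp only
      by_cases hb : Reach F j k
      · rw [if_pos hb]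
        dsimp only
        rw [if_pos hreach]
      · rw [if_neg hb]
        obtain ⟨hpi, hpne, hppos, hkiF, hF', hcard', hroot', hjp', hnji, hw, hin⟩ :=
          lq_step hF hcard hroot hkpos hreach hb
        dsimp only
        rw [if_neg hnji]
        have hpark : par (insert (k, i) (F.erase (par F i, i))) i = k :=
          par_eq hF'.2.1 (Finset.mem_insert_self _ _)
        rw [hpark, swap_swap hpi hkiF]
    · rintro ⟨k, F⟩ hx
      obtain ⟨hkP, hFT⟩ := Finset.mem_sigma.1 hx
      obtain ⟨hF, hcard, hroot, hreach⟩ := (hTm k F).1 hFT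
      have hkpos : 0 < ε k i := (Finset.mem_filter.1 hkP).2
      dsimp only
      by_cases hb : Reach F j i
      · rw [if_pos hb]
        dsimp only
        rw [if_pos hreach]
      · rw [if_neg hb]
        obtain ⟨hpi, hpne, hppos, hkiF, hF', hcard', hroot', hji', hnjp, hw, hin⟩ :=
          lq_step' hF hcard hroot hkpos hreach hb
        dsimp only
        rw [if_neg hnjp]
        have hpark : par (insert (k, i) (F.erase (par F i, i))) i = k :=
          par_eq hF'.2.1 (Finset.mem_insert_self _ _)
        rw [hpark, swap_swap hpi hkiF]
    · rintro ⟨k, F⟩ hx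
      obtain ⟨hkP, hFT⟩ := Finset.mem_sigma.1 hx
      obtain ⟨hF, hcard, hroot, hreach⟩ := (hTm i F).1 hFT
      have hkpos : 0 < ε k i := (Finset.mem_filter.1 hkP).2
      dsimp only
      by_cases hb : Reach F j k
      · rw [if_pos hb]
      · rw [if_neg hb]
        obtain ⟨hpi, hpne, hppos, hkiF, hF', hcard', hroot', hjp', hnji, hw, hin⟩ :=
          lq_step hF hcard hroot hkpos hreach hb
        exact hw.symm
  have hfil1 : ∑ u ∈ P, ε u i * QMat ε m i j =
      ∑ u ∈ Finset.univ.erase i, ε u i * QMat ε m i j :=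
    Finset.sum_filter_of_ne (fun x _ hne =>
      (hnonneg x i).lt_of_ne (fun h0 => hne (by rw [← h0, zero_mul])))
  have hfil2 : ∑ x ∈ P, ε x i * QMat ε m x j =
      ∑ x ∈ Finset.univ.erase i, ε x i * QMat ε m x j :=
    Finset.sum_filter_of_ne (fun x _ hne =>
      (hnonneg x i).lt_of_ne (fun h0 => hne (by rw [← h0, zero_mul])))
  rw [step1, hLii, Finset.sum_congr rfl hLoff, Finset.sum_mul]
  have hneg : ∑ x ∈ Finset.univ.erase i, -(ε x i * QMat ε m x j) =
      -∑ x ∈ Finset.univ.erase i, ε x i * QMat ε m x j := by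
    rw [Finset.sum_neg_distrib]
  rw [hneg, ← hfil1, ← hfil2, key, add_neg_cancel]


lemma QL_zero (ε : Fin n → Fin n → ℝ) (hnonneg : ∀ a b, 0 ≤ ε a b) :
    QMat ε (maxForestCard ε) * kirchhoff ε = 0 := by
  classical
  ext i j
  rw [Matrix.mul_apply, Matrix.zero_apply]
  set m := maxForestCard ε with hm
  have hTfin : ∀ c : Fin n, ({F : Finset (Arc n) | IsOutForest ε F ∧ F.card = m ∧
      (∀ u, (u, c) ∉ F) ∧ Reach F c i} : Set (Finset (Arc n))).Finite :=
    fun c => Set.toFinite _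
  set T : Fin n → Finset (Finset (Arc n)) := fun c => (hTfin c).toFinset with hT
  have hTm : ∀ c F, F ∈ T c ↔ (IsOutForest ε F ∧ F.card = m ∧ (∀ u, (u, c) ∉ F) ∧
      Reach F c i) := fun c F => Set.Finite.mem_toFinset _
  have hQ : ∀ c : Fin n, QMat ε m i c = ∑ F ∈ T c, forestWeight ε F :=
    fun c => finsum_mem_eq_finite_toFinset_sum _ (hTfin c)
  have hLjj : kirchhoff ε j j = ∑ u ∈ Finset.univ.erase j, ε u j := by
    simp [kirchhoff, Finset.filter_ne']
  have step1 : ∑ x : Fin n, QMat ε m i x * kirchhoff ε x j =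
      QMat ε m i j * kirchhoff ε j j +
        ∑ x ∈ Finset.univ.erase j, QMat ε m i x * kirchhoff ε x j :=
    (Finset.add_sum_erase _ _ (Finset.mem_univ j)).symm
  have hLoff : ∀ x ∈ Finset.univ.erase j,
      QMat ε m i x * kirchhoff ε x j = -(QMat ε m i x * ε j x) := by
    intro x hx
    have hne : x ≠ j := (Finset.mem_erase.1 hx).1
    have hk : kirchhoff ε x j = -(ε j x) := by
      simp [kirchhoff, hne]
    rw [hk, mul_neg]
  set P1 : Finset (Fin n) := (Finset.univ.erase j).filter (fun u => 0 < ε u j) with hP1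
  set P2 : Finset (Fin n) := (Finset.univ.erase j).filter (fun c => 0 < ε j c) with hP2
  have key : ∑ u ∈ P1, QMat ε m i j * ε u j = ∑ c ∈ P2, QMat ε m i c * ε j c := by
    have lhs_eq : ∑ u ∈ P1, QMat ε m i j * ε u j =
        ∑ x ∈ P1.sigma (fun _ => T j), forestWeight ε x.2 * ε x.1 j := by
      rw [Finset.sum_sigma]
      exact Finset.sum_congr rfl (fun u _ => by rw [hQ, Finset.sum_mul])
    have rhs_eq : ∑ c ∈ P2, QMat ε m i c * ε j c =
        ∑ x ∈ P2.sigma (fun c => T c), forestWeight ε x.2 * ε j x.1 := by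
      rw [Finset.sum_sigma]
      exact Finset.sum_congr rfl (fun c _ => by rw [hQ, Finset.sum_mul])
    rw [lhs_eq, rhs_eq]
    refine Finset.sum_bij'
      (fun x _ => ⟨chd x.2 j x.1, insert (x.1, j) (x.2.erase (j, chd x.2 j x.1))⟩)
      (fun x _ => ⟨par x.2 j, insert (j, x.1) (x.2.erase (par x.2 j, j))⟩)
      ?_ ?_ ?_ ?_ ?_
    · rintro ⟨u, F⟩ hx
      obtain ⟨huP, hFT⟩ := Finset.mem_sigma.1 hx
      obtain ⟨hF, hcard, hroot, hreach⟩ := (hTm j F).1 hFT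
      have hune : u ≠ j := (Finset.mem_erase.1 (Finset.mem_filter.1 huP).1).1
      have hupos : 0 < ε u j := (Finset.mem_filter.1 huP).2
      obtain ⟨hjc, hcne, hcpos, hcu, hujF, hF', hcard', hroot', hci', hw, hjc', hin⟩ :=
        ql_step hF hcard hroot hupos hune hreach
      dsimp only
      refine Finset.mem_sigma.2 ⟨?_, (hTm _ _).2 ⟨hF', hcard', hroot', hci'⟩⟩
      exact Finset.mem_filter.2 ⟨Finset.mem_erase.2 ⟨hcne, Finset.mem_univ _⟩, hcpos⟩
    · rintro ⟨c, F⟩ hx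
      obtain ⟨hcP, hFT⟩ := Finset.mem_sigma.1 hx
      obtain ⟨hF, hcard, hroot, hreach⟩ := (hTm c F).1 hFT
      have hcne : c ≠ j := (Finset.mem_erase.1 (Finset.mem_filter.1 hcP).1).1
      have hcpos : 0 < ε j c := (Finset.mem_filter.1 hcP).2
      obtain ⟨huj, hune, hupos, hjcF, hF'', hcard'', hroot'', hji'', hcu'', hw, huj'', hin⟩ :=
        ql_step' hF hcard hroot hcpos hcne hreach
      dsimp only
      refine Finset.mem_sigma.2 ⟨?_, (hTm _ _).2 ⟨hF'', hcard'', hroot'', hji''⟩⟩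
      exact Finset.mem_filter.2 ⟨Finset.mem_erase.2 ⟨hune, Finset.mem_univ _⟩, hupos⟩
    · rintro ⟨u, F⟩ hx
      obtain ⟨huP, hFT⟩ := Finset.mem_sigma.1 hx
      obtain ⟨hF, hcard, hroot, hreach⟩ := (hTm j F).1 hFT
      have hune : u ≠ j := (Finset.mem_erase.1 (Finset.mem_filter.1 huP).1).1
      have hupos : 0 < ε u j := (Finset.mem_filter.1 huP).2
      obtain ⟨hjc, hcne, hcpos, hcu, hujF, hF', hcard', hroot', hci', hw, hjc', hin⟩ :=
        ql_step hF hcard hroot hupos hune hreach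
      dsimp only
      have hpar : par (insert (u, j) (F.erase (j, chd F j u))) j = u :=
        par_eq hF'.2.1 (Finset.mem_insert_self _ _)
      rw [hpar, swap_swap hjc (hroot u)]
    · rintro ⟨c, F⟩ hx
      obtain ⟨hcP, hFT⟩ := Finset.mem_sigma.1 hx
      obtain ⟨hF, hcard, hroot, hreach⟩ := (hTm c F).1 hFT
      have hcne : c ≠ j := (Finset.mem_erase.1 (Finset.mem_filter.1 hcP).1).1
      have hcpos : 0 < ε j c := (Finset.mem_filter.1 hcP).2
      obtain ⟨huj, hune, hupos, hjcF, hF'', hcard'', hroot'', hji'', hcu'', hw, huj'', hin⟩ :=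
        ql_step' hF hcard hroot hcpos hcne hreach
      dsimp only
      have hchd : chd (insert (j, c) (F.erase (par F j, j))) j (par F j) = c :=
        chd_eq hF'' hroot'' (Finset.mem_insert_self _ _) hcu''
      rw [hchd, swap_swap huj hjcF]
    · rintro ⟨u, F⟩ hx
      obtain ⟨huP, hFT⟩ := Finset.mem_sigma.1 hx
      obtain ⟨hF, hcard, hroot, hreach⟩ := (hTm j F).1 hFT
      have hune : u ≠ j := (Finset.mem_erase.1 (Finset.mem_filter.1 huP).1).1
      have hupos : 0 < ε u j := (Finset.mem_filter.1 huP).2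
      obtain ⟨hjc, hcne, hcpos, hcu, hujF, hF', hcard', hroot', hci', hw, hjc', hin⟩ :=
        ql_step hF hcard hroot hupos hune hreach
      dsimp only
      rw [mul_comm, ← hw, mul_comm]
  have hfil1 : ∑ u ∈ P1, QMat ε m i j * ε u j =
      ∑ u ∈ Finset.univ.erase j, QMat ε m i j * ε u j :=
    Finset.sum_filter_of_ne (fun x _ hne =>
      (hnonneg x j).lt_of_ne (fun h0 => hne (by rw [← h0, mul_zero])))
  have hfil2 : ∑ c ∈ P2, QMat ε m i c * ε j c =
      ∑ c ∈ Finset.univ.erase j, QMat ε m i c * ε j c :=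
    Finset.sum_filter_of_ne (fun x _ hne =>
      (hnonneg j x).lt_of_ne (fun h0 => hne (by rw [← h0, mul_zero])))
  rw [step1, hLjj, Finset.sum_congr rfl hLoff, Finset.mul_sum]
  have hneg : ∑ x ∈ Finset.univ.erase j, -(QMat ε m i x * ε j x) =
      -∑ x ∈ Finset.univ.erase j, QMat ε m i x * ε j x := by
    rw [Finset.sum_neg_distrib]
  rw [hneg, ← hfil1, ← hfil2, key, add_neg_cancel]

end ForestAux






/-- `L·J̄ = J̄·L = 0`. -/
theorem kirchhoff_mul_Jbar (n : ℕ) (hn : 1 < n) (ε : Fin n → Fin n → ℝ)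
    (hnonneg : ∀ i j, 0 ≤ ε i j) (hdiag : ∀ i, ε i i = 0) :
    kirchhoff ε * Jbar ε = 0 ∧ Jbar ε * kirchhoff ε = 0 := by
  constructor
  · rw [Jbar, Matrix.mul_smul, ForestAux.LQ_zero ε hnonneg, smul_zero]
  · rw [Jbar, Matrix.smul_mul, ForestAux.QL_zero ε hnonneg, smul_zero]
end

section
/- Parametric matrix-forest theorem: for every weighted digraph Γ and every real τ > 0, the matrix I + τL is invertible and (I + τL)^{−1} = s(τ)^{−1} Σ_{k=0}^{n−v} τ^k Q_k, where s(τ) = Σ_{k=0}^{n−v} τ^k σ_k. -/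
open Matrix BigOperators Filter

namespace MFT

variable {n : ℕ}

/-- Reachability along arcs of `F`. -/
def Reach (F : Finset (Fin n × Fin n)) (a b : Fin n) : Prop :=
  Relation.ReflTransGen (fun a b => (a, b) ∈ F) a b

lemma Reach.refl {F : Finset (Fin n × Fin n)} {a : Fin n} : Reach F a b → True := fun _ => trivial

lemma reach_mono {F F' : Finset (Fin n × Fin n)} (h : F' ⊆ F) {a b : Fin n}
    (hr : Reach F' a b) : Reach F a b :=
  Relation.ReflTransGen.mono (fun _ _ hx => h hx) _ _ hr

/-- From a Reach we can extract an explicit walk. -/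
lemma reach_walk {F : Finset (Fin n × Fin n)} {a b : Fin n} (h : Reach F a b) :
    ∃ (k : ℕ) (f : ℕ → Fin n), f 0 = a ∧ f k = b ∧ ∀ i < k, (f i, f (i + 1)) ∈ F := by
  induction h with
  | refl => exact ⟨0, fun _ => a, rfl, rfl, fun i hi => absurd hi (Nat.not_lt_zero i)⟩
  | @tail b c hab hbc ih =>
    obtain ⟨k, f, h0, hk, harc⟩ := ih
    refine ⟨k + 1, fun i => if i ≤ k then f i else c, by simp [h0], by simp, ?_⟩
    intro i hi
    rcases lt_or_eq_of_le (Nat.lt_succ_iff.mp hi) with h | h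
    · simpa [Nat.le_of_lt h, Nat.succ_le_of_lt h] using harc i h
    · subst h; simpa [Nat.not_succ_le_self, hk] using hbc

lemma walk_reach {F : Finset (Fin n × Fin n)} {f : ℕ → Fin n} {k : ℕ}
    (harc : ∀ i < k, (f i, f (i + 1)) ∈ F) : Reach F (f 0) (f k) := by
  induction k with
  | zero => exact Relation.ReflTransGen.refl
  | succ m ih =>
    exact Relation.ReflTransGen.tail (ih (fun i hi => harc i (Nat.lt_succ_of_lt hi)))
      (harc m (Nat.lt_succ_self m))

/-- The out-forest condition in terms of `Reach`. -/
lemma isOutForest_iff {ε : Fin n → Fin n → ℝ} {F : Finset (Fin n × Fin n)} :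
    IsOutForest ε F ↔
      (∀ p ∈ F, 0 < ε p.1 p.2) ∧
      (∀ u u' v : Fin n, (u, v) ∈ F → (u', v) ∈ F → u = u') ∧
      (∀ a b : Fin n, (a, b) ∈ F → ¬ Reach F b a) := by
  constructor
  · rintro ⟨h1, h2, h3⟩
    refine ⟨h1, h2, ?_⟩
    intro a b hab hr
    obtain ⟨k, f, h0, hk, harc⟩ := reach_walk hr
    refine h3 ⟨k + 1, (fun i => if i = 0 then a else f (i - 1)), Nat.succ_pos k, ?_, ?_⟩
    · simp [hk]
    · intro i hi
      rcases Nat.eq_zero_or_pos i with h | h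
      · subst h; simpa [h0] using hab
      · have : i - 1 < k := by omega
        have := harc (i - 1) this
        have hi1 : i - 1 + 1 = i := by omega
        rw [hi1] at this
        simpa [Nat.pos_iff_ne_zero.mp h, Nat.pos_iff_ne_zero.mp (by omega : 0 < i + 1)] using this
  · rintro ⟨h1, h2, h3⟩
    refine ⟨h1, h2, ?_⟩
    rintro ⟨k, f, hk, hfk, harc⟩
    have h01 : (f 0, f 1) ∈ F := harc 0 hk
    have : Reach F (f 1) (f k) := by
      have : ∀ m, 1 ≤ m → m ≤ k → Reach F (f 1) (f m) := by
        intro m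
        induction m with
        | zero => omega
        | succ p ih =>
          intro _ hpk
          rcases Nat.eq_zero_or_pos p with h | h
          · subst h; exact Relation.ReflTransGen.refl
          · exact Relation.ReflTransGen.tail (ih h (by omega)) (harc p (by omega))
      exact this k hk (le_refl k)
    rw [← hfk] at this
    exact h3 _ _ h01 this

variable {ε : Fin n → Fin n → ℝ}

lemma forest_pos {F : Finset (Fin n × Fin n)} (h : IsOutForest ε F) :
    ∀ p ∈ F, 0 < ε p.1 p.2 := h.1

lemma forest_indeg {F : Finset (Fin n × Fin n)} (h : IsOutForest ε F) :
    ∀ u u' v : Fin n, (u, v) ∈ F → (u', v) ∈ F → u = u' := h.2.1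

lemma forest_acyc {F : Finset (Fin n × Fin n)} (h : IsOutForest ε F) :
    ∀ a b : Fin n, (a, b) ∈ F → ¬ Reach F b a := (isOutForest_iff.mp h).2.2

lemma forest_subset {F F' : Finset (Fin n × Fin n)} (h : IsOutForest ε F) (hs : F' ⊆ F) :
    IsOutForest ε F' := by
  rw [isOutForest_iff] at h ⊢
  exact ⟨fun p hp => h.1 p (hs hp), fun u u' v h1 h2 => h.2.1 u u' v (hs h1) (hs h2),
    fun a b hab hr => h.2.2 a b (hs hab) (reach_mono hs hr)⟩

/-- erasing an arc into `i` keeps reachability towards vertices not reachable from `i`. -/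
lemma reach_erase {F : Finset (Fin n × Fin n)} {i m a b : Fin n}
    (hib : ¬ Reach F i b) (hab : Reach F a b) : Reach (F.erase (m, i)) a b := by
  induction hab with
  | refl => exact Relation.ReflTransGen.refl
  | @tail p c hap hpc ih =>
    have hci : c ≠ i := fun h => hib (h ▸ Relation.ReflTransGen.refl)
    have h1 : (p, c) ∈ F.erase (m, i) := Finset.mem_erase.mpr ⟨by simp [hci], hpc⟩
    have h2 : ¬ Reach F i p := fun h => hib (Relation.ReflTransGen.tail h hpc)
    exact Relation.ReflTransGen.tail (ih h2) h1

lemma reach_insert_elim {F : Finset (Fin n × Fin n)} {i m a b : Fin n}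
    (him : ¬ Reach F i m) (h : Reach (insert (m, i) F) a b) :
    Reach F a b ∨ (Reach F a m ∧ Reach F i b) := by
  induction h with
  | refl => exact Or.inl Relation.ReflTransGen.refl
  | @tail p c hap hpc ih =>
    rcases Finset.mem_insert.mp hpc with h | h
    · obtain ⟨hp, hc⟩ := Prod.mk.injEq .. ▸ h
      rcases ih with ih | ih
      · exact Or.inr ⟨hp ▸ ih, hc ▸ Relation.ReflTransGen.refl⟩
      · exact absurd (hp ▸ ih.2) him
    · rcases ih with ih | ih
      · exact Or.inl (Relation.ReflTransGen.tail ih h)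
      · exact Or.inr ⟨ih.1, Relation.ReflTransGen.tail ih.2 h⟩

lemma forest_insert {F : Finset (Fin n × Fin n)} {i m : Fin n}
    (hF : IsOutForest ε F) (hroot : ∀ u, (u, i) ∉ F) (him : ¬ Reach F i m)
    (hpos : 0 < ε m i) : IsOutForest ε (insert (m, i) F) := by
  rw [isOutForest_iff]
  refine ⟨?_, ?_, ?_⟩
  · intro p hp
    rcases Finset.mem_insert.mp hp with h | h
    · subst h; exact hpos
    · exact forest_pos hF p h
  · intro u u' v h1 h2
    rcases Finset.mem_insert.mp h1 with h1 | h1 <;> rcases Finset.mem_insert.mp h2 with h2 | h2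
    · rw [Prod.mk.injEq] at h1 h2; rw [h1.1, h2.1]
    · rw [Prod.mk.injEq] at h1; exact absurd (h1.2 ▸ h2) (hroot u')
    · rw [Prod.mk.injEq] at h2; exact absurd (h2.2 ▸ h1) (hroot u)
    · exact forest_indeg hF u u' v h1 h2
  · intro a b hab hr
    rcases Finset.mem_insert.mp hab with h | h
    · obtain ⟨ha, hb⟩ := Prod.mk.injEq .. ▸ h
      subst ha; subst hb
      rcases reach_insert_elim him hr with h | h
      · exact him h
      · exact him h.2
    · rcases reach_insert_elim him hr with h2 | h2
      · exact forest_acyc hF a b h h2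
      · exact him (Relation.ReflTransGen.trans
          (Relation.ReflTransGen.tail h2.2 h) h2.1)

end MFT

namespace MFT2
open MFT Finset
variable {n : ℕ} (ε : Fin n → Fin n → ℝ)


lemma empty_forest : IsOutForest ε (∅ : Finset (Fin n × Fin n)) := by
  refine ⟨by simp, by simp, ?_⟩
  rintro ⟨k, f, hk, -, harc⟩
  exact absurd (harc 0 hk) (by simp)

lemma card_le_max {F : Finset (Fin n × Fin n)} (hF : IsOutForest ε F) :
    F.card ≤ maxForestCard ε := by
  apply le_csSup
  · refine ⟨Fintype.card (Fin n × Fin n), ?_⟩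
    rintro k ⟨F', -, rfl⟩
    exact Finset.card_le_univ F'
  · exact ⟨F, hF, rfl⟩

open scoped Classical in
lemma finsum_set_eq (P : Finset (Fin n × Fin n) → Prop) (f : Finset (Fin n × Fin n) → ℝ) :
    (∑ᶠ F ∈ {F | P F}, f F) = ∑ F ∈ Finset.univ.filter P, f F := by
  rw [show {F | P F} = ↑(Finset.univ.filter P) by ext x; simp]
  exact finsum_mem_coe_finset f _

variable (τ : ℝ)

/-- the weight of a forest together with the `τ` power. -/
noncomputable def w (F : Finset (Fin n × Fin n)) : ℝ := τ ^ F.card * ∏ p ∈ F, ε p.1 p.2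

open scoped Classical in
noncomputable def FF : Finset (Finset (Fin n × Fin n)) := Finset.univ.filter (IsOutForest ε)

open scoped Classical in
noncomputable def RR (a b : Fin n) : Finset (Finset (Fin n × Fin n)) :=
  Finset.univ.filter (fun F => IsOutForest ε F ∧ (∀ u, (u, a) ∉ F) ∧ Reach F a b)

lemma mem_FF {F : Finset (Fin n × Fin n)} : F ∈ FF ε ↔ IsOutForest ε F := by
  simp [FF]

lemma mem_RR {a b : Fin n} {F : Finset (Fin n × Fin n)} :
    F ∈ RR ε a b ↔ IsOutForest ε F ∧ (∀ u, (u, a) ∉ F) ∧ Reach F a b := by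
  simp [RR]

open scoped Classical

lemma QMat_entry (k : ℕ) (a b : Fin n) :
    QMat ε k a b = ∑ F ∈ (RR ε b a).filter (fun F => F.card = k), forestWeight ε F := by
  show (∑ᶠ F ∈ {F : Finset (Fin n × Fin n) | IsOutForest ε F ∧ F.card = k ∧
        (∀ u, (u, b) ∉ F) ∧ Reach F b a}, forestWeight ε F) = _
  rw [finsum_set_eq]
  congr 1
  ext F
  simp only [RR, Finset.mem_filter, Finset.mem_univ, true_and]
  tauto

lemma Mentry (a b : Fin n) :
    (∑ k ∈ Finset.range (maxForestCard ε + 1), τ ^ k • QMat ε k) a b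
      = ∑ F ∈ RR ε b a, w ε τ F := by
  rw [Matrix.sum_apply, ← Finset.sum_fiberwise_of_maps_to
    (g := fun F : Finset (Fin n × Fin n) => F.card) (t := Finset.range (maxForestCard ε + 1))
    (fun F hF => Finset.mem_range.mpr (Nat.lt_succ_of_le (card_le_max ε ((mem_RR ε).mp hF).1)))
    (w ε τ)]
  refine Finset.sum_congr rfl fun k _ => ?_
  rw [Matrix.smul_apply, QMat_entry, smul_eq_mul, Finset.mul_sum]
  refine Finset.sum_congr rfl fun F hF => ?_
  rw [w, (Finset.mem_filter.mp hF).2, forestWeight]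

lemma Sval : (∑ k ∈ Finset.range (maxForestCard ε + 1), τ ^ k * sigmaW ε k)
    = ∑ F ∈ FF ε, w ε τ F := by
  rw [← Finset.sum_fiberwise_of_maps_to
    (g := fun F : Finset (Fin n × Fin n) => F.card) (t := Finset.range (maxForestCard ε + 1))
    (fun F hF => Finset.mem_range.mpr (Nat.lt_succ_of_le (card_le_max ε ((mem_FF ε).mp hF))))
    (w ε τ)]
  refine Finset.sum_congr rfl fun k _ => ?_
  rw [sigmaW, finsum_set_eq, Finset.mul_sum]
  refine Finset.sum_congr ?_ fun F hF => ?_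
  · ext F; simp only [Finset.mem_filter, Finset.mem_univ, true_and, FF]
  · rw [w, (Finset.mem_filter.mp hF).2, forestWeight]

lemma kirchhoff_apply (hdiag : ∀ i, ε i i = 0) (i m : Fin n) :
    kirchhoff ε i m = (if i = m then ∑ u, ε u i else 0) - ε m i := by
  rcases eq_or_ne i m with h | h
  · subst h
    show (if i = i then _ else _) = _
    rw [if_pos rfl, if_pos rfl, hdiag i, sub_zero]
    rw [show Finset.univ.filter (· ≠ i) = Finset.univ.erase i from by ext; simp [Finset.mem_erase]]
    exact Finset.sum_erase _ (hdiag i)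
  · show (if i = m then _ else _) = _
    rw [if_neg h, if_neg h, zero_sub]

/-! ### structural helper lemmas -/

lemma tail_decomp {F : Finset (Fin n × Fin n)} {j i : Fin n} (h : Reach F j i) (hne : j ≠ i) :
    ∃ m, Reach F j m ∧ (m, i) ∈ F := by
  rcases Relation.ReflTransGen.cases_tail h with h | ⟨c, hc, harc⟩
  · exact absurd h.symm hne
  · exact ⟨c, hc, harc⟩

lemma comparability {F : Finset (Fin n × Fin n)} (hF : IsOutForest ε F)
    {a b c : Fin n} (hac : Reach F a c) (hbc : Reach F b c) :
    Reach F a b ∨ Reach F b a := by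
  induction hac with
  | refl => exact Or.inr hbc
  | @tail p c hap hpc ih =>
    rcases Relation.ReflTransGen.cases_tail hbc with h | ⟨q, hbq, hqc⟩
    · subst h
      exact Or.inl (Relation.ReflTransGen.tail hap hpc)
    · rw [forest_indeg hF q p c hqc hpc] at hbq
      exact ih hbq

lemma reach_root {F : Finset (Fin n × Fin n)} {j i : Fin n}
    (hroot : ∀ u, (u, j) ∉ F) (h : Reach F i j) : i = j := by
  rcases Relation.ReflTransGen.cases_tail h with h | ⟨c, _, harc⟩
  · exact h.symm
  · exact absurd harc (hroot c)

lemma eq_root_of_reach {F : Finset (Fin n × Fin n)}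
    (hiroot : ∀ u, (u, i) ∉ F) (hjroot : ∀ u, (u, j) ∉ F) (h : Reach F j i) : i = j := by
  rcases eq_or_ne j i with he | hne
  · exact he.symm
  · obtain ⟨m, -, hm⟩ := tail_decomp h hne
    exact absurd hm (hiroot m)

lemma choose_eq_of_mem {F : Finset (Fin n × Fin n)} (hF : IsOutForest ε F) {i m : Fin n}
    (h : ∃ u, (u, i) ∈ F) (hm : (m, i) ∈ F) : h.choose = m :=
  forest_indeg hF _ _ _ h.choose_spec hm

lemma no_in_erase {F : Finset (Fin n × Fin n)} (hF : IsOutForest ε F) {i p : Fin n}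
    (hp : (p, i) ∈ F) : ∀ u, (u, i) ∉ F.erase (p, i) := by
  intro u hu
  obtain ⟨hne, hmem⟩ := Finset.mem_erase.mp hu
  exact hne (by rw [forest_indeg hF u p i hmem hp])

lemma mem_insert_arc {F : Finset (Fin n × Fin n)} {m i : Fin n} :
    (m, i) ∈ insert (m, i) F := Finset.mem_insert_self _ _

/-! ### the involution -/

noncomputable def step (i : Fin n) :
    Option (Fin n) × Finset (Fin n × Fin n) → Option (Fin n) × Finset (Fin n × Fin n)
  | (none, F) =>
      if h : ∃ u, (u, i) ∈ F then (some h.choose, F.erase (h.choose, i)) else (none, F)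
  | (some m, F) =>
      if Reach F i m then (some m, F)
      else if h : ∃ p, (p, i) ∈ F then (some h.choose, insert (m, i) (F.erase (h.choose, i)))
      else (none, insert (m, i) F)

def APred (ε : Fin n → Fin n → ℝ) (i j : Fin n) :
    Option (Fin n) × Finset (Fin n × Fin n) → Prop
  | (o, F) => IsOutForest ε F ∧ (∀ u, (u, j) ∉ F) ∧ Reach F j i ∧
      (∀ u, o = some u → 0 < ε u i)

def BPred (ε : Fin n → Fin n → ℝ) (i j : Fin n) :
    Option (Fin n) × Finset (Fin n × Fin n) → Prop
  | (none, F) => IsOutForest ε F ∧ i = j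
  | (some m, F) => IsOutForest ε F ∧ 0 < ε m i ∧ (∀ u, (u, j) ∉ F) ∧ Reach F j m

noncomputable def W (i : Fin n) : Option (Fin n) × Finset (Fin n × Fin n) → ℝ
  | (none, F) => w ε τ F
  | (some u, F) => τ * ε u i * w ε τ F

variable {ε τ} {i j : Fin n}

lemma step_mem_A (hx : BPred ε i j x) : APred ε i j (step i x) := by
  obtain ⟨o, F⟩ := x
  cases o with
  | none =>
    obtain ⟨hF, hij⟩ := hx
    subst hij
    show APred ε i i (step i (none, F))
    rw [step]
    split
    · next h =>
      refine ⟨forest_subset hF (Finset.erase_subset _ _), no_in_erase ε hF h.choose_spec,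
        Relation.ReflTransGen.refl, ?_⟩
      rintro u hu
      obtain rfl : h.choose = u := by injection hu
      exact forest_pos hF _ h.choose_spec
    · next h =>
      exact ⟨hF, fun u hu => h ⟨u, hu⟩, Relation.ReflTransGen.refl, by rintro u ⟨⟩⟩
  | some m =>
    obtain ⟨hF, hε, hroot, hjm⟩ := hx
    show APred ε i j (step i (some m, F))
    rw [step]
    split
    · next him =>
      refine ⟨hF, hroot, ?_, by rintro u ⟨rfl⟩; exact hε⟩
      rcases comparability ε hF hjm him with h | h
      · exact h
      · rw [reach_root hroot h]; exact Relation.ReflTransGen.refl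
    · next him =>
      split
      · next h =>
        -- swap case
        set p := h.choose with hp
        have hpF : (p, i) ∈ F := h.choose_spec
        have hij : i ≠ j := by rintro rfl; exact hroot p hpF
        have hG : IsOutForest ε (F.erase (p, i)) := forest_subset hF (Finset.erase_subset _ _)
        have hGnoin : ∀ u, (u, i) ∉ F.erase (p, i) := no_in_erase ε hF hpF
        have hGim : ¬ Reach (F.erase (p, i)) i m :=
          fun hr => him (reach_mono (Finset.erase_subset _ _) hr)
        have hF' : IsOutForest ε (insert (m, i) (F.erase (p, i))) :=
          forest_insert hG hGnoin hGim hε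
        refine ⟨hF', ?_, ?_, by rintro u ⟨rfl⟩; exact forest_pos hF _ hpF⟩
        · intro u hu
          rcases Finset.mem_insert.mp hu with h' | h'
          · exact hij (by injection h' with h1 h2; exact h2.symm)
          · exact hroot u (Finset.mem_of_mem_erase h')
        · have : Reach (F.erase (p, i)) j m := reach_erase him hjm
          exact Relation.ReflTransGen.tail
            (reach_mono (Finset.subset_insert _ _) this) mem_insert_arc
      · next h =>
        -- append case
        have hnoin : ∀ u, (u, i) ∉ F := fun u hu => h ⟨u, hu⟩
        have hij : i ≠ j := by rintro rfl; exact him hjm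
        have hF' : IsOutForest ε (insert (m, i) F) := forest_insert hF hnoin him hε
        refine ⟨hF', ?_, ?_, by rintro u ⟨⟩⟩
        · intro u hu
          rcases Finset.mem_insert.mp hu with h' | h'
          · exact hij (by injection h' with h1 h2; exact h2.symm)
          · exact hroot u h'
        · exact Relation.ReflTransGen.tail
            (reach_mono (Finset.subset_insert _ _) hjm) mem_insert_arc

lemma step_mem_B (hx : APred ε i j x) : BPred ε i j (step i x) := by
  obtain ⟨o, F⟩ := x
  obtain ⟨hF, hroot, hji, hpos⟩ := hx
  cases o with
  | none =>
    show BPred ε i j (step i (none, F))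
    rw [step]
    split
    · next h =>
      set u := h.choose with hu
      have huF : (u, i) ∈ F := h.choose_spec
      have hij : i ≠ j := by rintro rfl; exact hroot u huF
      refine ⟨forest_subset hF (Finset.erase_subset _ _), forest_pos hF _ huF, ?_, ?_⟩
      · intro v hv; exact hroot v (Finset.mem_of_mem_erase hv)
      · obtain ⟨m, hjm, hmi⟩ := tail_decomp hji (Ne.symm hij)
        obtain rfl : m = u := (forest_indeg hF u m i huF hmi).symm
        exact reach_erase (forest_acyc hF u i hmi) hjm
    · next h =>
      exact ⟨hF, eq_root_of_reach (fun u hu => h ⟨u, hu⟩) hroot hji⟩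
  | some v =>
    have hε : 0 < ε v i := hpos v rfl
    show BPred ε i j (step i (some v, F))
    rw [step]
    split
    · next hiv => exact ⟨hF, hε, hroot, Relation.ReflTransGen.trans hji hiv⟩
    · next hiv =>
      split
      · next h =>
        set q := h.choose with hq
        have hqF : (q, i) ∈ F := h.choose_spec
        have hij : i ≠ j := by rintro rfl; exact hroot q hqF
        have hG : IsOutForest ε (F.erase (q, i)) := forest_subset hF (Finset.erase_subset _ _)
        have hGnoin : ∀ u, (u, i) ∉ F.erase (q, i) := no_in_erase ε hF hqF
        have hGiv : ¬ Reach (F.erase (q, i)) i v :=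
          fun hr => hiv (reach_mono (Finset.erase_subset _ _) hr)
        have hH : IsOutForest ε (insert (v, i) (F.erase (q, i))) :=
          forest_insert hG hGnoin hGiv hε
        refine ⟨hH, forest_pos hF _ hqF, ?_, ?_⟩
        · intro u hu
          rcases Finset.mem_insert.mp hu with h' | h'
          · exact hij (by injection h' with h1 h2; exact h2.symm)
          · exact hroot u (Finset.mem_of_mem_erase h')
        · obtain ⟨m, hjm, hmi⟩ := tail_decomp hji (Ne.symm hij)
          obtain rfl : m = q := (forest_indeg hF q m i hqF hmi).symm
          exact reach_mono (Finset.subset_insert _ _)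
            (reach_erase (forest_acyc hF q i hmi) hjm)
      · next h =>
        have hnoin : ∀ u, (u, i) ∉ F := fun u hu => h ⟨u, hu⟩
        exact ⟨forest_insert hF hnoin hiv hε, eq_root_of_reach hnoin hroot hji⟩

lemma step_step_B (hx : BPred ε i j x) : step i (step i x) = x := by
  obtain ⟨o, F⟩ := x
  cases o with
  | none =>
    obtain ⟨hF, -⟩ := hx
    rw [step]
    split
    · next h =>
      set u := h.choose with hu
      have huF : (u, i) ∈ F := h.choose_spec
      have h1 : ¬ Reach (F.erase (u, i)) i u :=
        fun hr => forest_acyc hF u i huF (reach_mono (Finset.erase_subset _ _) hr)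
      have h2 : ¬ ∃ p, (p, i) ∈ F.erase (u, i) := by
        rintro ⟨p, hp⟩; exact no_in_erase ε hF huF p hp
      rw [step, if_neg h1, dif_neg h2, Finset.insert_erase huF]
    · next h => rw [step, dif_neg h]
  | some m =>
    obtain ⟨hF, hε, hroot, hjm⟩ := hx
    rw [step]
    split
    · next him => rw [step, if_pos him]
    · next him =>
      split
      · next h =>
        set p := h.choose with hp
        have hpF : (p, i) ∈ F := h.choose_spec
        have hG : IsOutForest ε (F.erase (p, i)) := forest_subset hF (Finset.erase_subset _ _)
        have hGnoin : ∀ u, (u, i) ∉ F.erase (p, i) := no_in_erase ε hF hpF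
        have hGim : ¬ Reach (F.erase (p, i)) i m :=
          fun hr => him (reach_mono (Finset.erase_subset _ _) hr)
        have hF' : IsOutForest ε (insert (m, i) (F.erase (p, i))) :=
          forest_insert hG hGnoin hGim hε
        have hnr : ¬ Reach (insert (m, i) (F.erase (p, i))) i p := by
          intro hr
          rcases reach_insert_elim hGim hr with hr | hr
          · exact forest_acyc hF p i hpF (reach_mono (Finset.erase_subset _ _) hr)
          · exact hGim hr.1
        have hex : ∃ q, (q, i) ∈ insert (m, i) (F.erase (p, i)) := ⟨m, mem_insert_arc⟩
        have hch : hex.choose = m := choose_eq_of_mem ε hF' hex mem_insert_arc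
        rw [step, if_neg hnr, dif_pos hex, hch,
          Finset.erase_insert (fun hmem => hGnoin m hmem), Finset.insert_erase hpF]
      · next h =>
        have hnoin : ∀ u, (u, i) ∉ F := fun u hu => h ⟨u, hu⟩
        have hK : IsOutForest ε (insert (m, i) F) := forest_insert hF hnoin him hε
        have hex : ∃ u, (u, i) ∈ insert (m, i) F := ⟨m, mem_insert_arc⟩
        have hch : hex.choose = m := choose_eq_of_mem ε hK hex mem_insert_arc
        rw [step, dif_pos hex, hch, Finset.erase_insert (hnoin m)]

lemma step_step (hF : IsOutForest ε x.2) (hpos : ∀ u, x.1 = some u → 0 < ε u i) :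
    step i (step i x) = x := by
  obtain ⟨o, F⟩ := x
  cases o with
  | none =>
    rw [step]
    split
    · next h =>
      set u := h.choose with hu
      have huF : (u, i) ∈ F := h.choose_spec
      have h1 : ¬ Reach (F.erase (u, i)) i u :=
        fun hr => forest_acyc hF u i huF (reach_mono (Finset.erase_subset _ _) hr)
      have h2 : ¬ ∃ p, (p, i) ∈ F.erase (u, i) := by
        rintro ⟨p, hp⟩; exact no_in_erase ε hF huF p hp
      rw [step, if_neg h1, dif_neg h2, Finset.insert_erase huF]
    · next h => rw [step, dif_neg h]
  | some m =>
    have hε : 0 < ε m i := hpos m rfl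
    rw [step]
    split
    · next him => rw [step, if_pos him]
    · next him =>
      split
      · next h =>
        set p := h.choose with hp
        have hpF : (p, i) ∈ F := h.choose_spec
        have hG : IsOutForest ε (F.erase (p, i)) := forest_subset hF (Finset.erase_subset _ _)
        have hGnoin : ∀ u, (u, i) ∉ F.erase (p, i) := no_in_erase ε hF hpF
        have hGim : ¬ Reach (F.erase (p, i)) i m :=
          fun hr => him (reach_mono (Finset.erase_subset _ _) hr)
        have hF' : IsOutForest ε (insert (m, i) (F.erase (p, i))) :=
          forest_insert hG hGnoin hGim hε
        have hnr : ¬ Reach (insert (m, i) (F.erase (p, i))) i p := by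
          intro hr
          rcases reach_insert_elim hGim hr with hr | hr
          · exact forest_acyc hF p i hpF (reach_mono (Finset.erase_subset _ _) hr)
          · exact hGim hr.1
        have hex : ∃ q, (q, i) ∈ insert (m, i) (F.erase (p, i)) := ⟨m, mem_insert_arc⟩
        have hch : hex.choose = m := choose_eq_of_mem ε hF' hex mem_insert_arc
        rw [step, if_neg hnr, dif_pos hex, hch,
          Finset.erase_insert (fun hmem => hGnoin m hmem), Finset.insert_erase hpF]
      · next h =>
        have hnoin : ∀ u, (u, i) ∉ F := fun u hu => h ⟨u, hu⟩
        have hK : IsOutForest ε (insert (m, i) F) := forest_insert hF hnoin him hε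
        have hex : ∃ u, (u, i) ∈ insert (m, i) F := ⟨m, mem_insert_arc⟩
        have hch : hex.choose = m := choose_eq_of_mem ε hK hex mem_insert_arc
        rw [step, dif_pos hex, hch, Finset.erase_insert (hnoin m)]

lemma W_step (hF : IsOutForest ε x.2) : W ε τ i x = W ε τ i (step i x) := by
  obtain ⟨o, F⟩ := x
  cases o with
  | none =>
    rw [step]
    split
    · next h =>
      set u := h.choose with hu
      have huF : (u, i) ∈ F := h.choose_spec
      show w ε τ F = τ * ε u i * w ε τ (F.erase (u, i))
      rw [w, w, ← Finset.card_erase_add_one huF, ← Finset.mul_prod_erase F _ huF, pow_succ]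
      ring
    · next h => rfl
  | some m =>
    rw [step]
    split
    · next him => rfl
    · next him =>
      split
      · next h =>
        set p := h.choose with hp
        have hpF : (p, i) ∈ F := h.choose_spec
        have hnm : (m, i) ∉ F.erase (p, i) := no_in_erase ε hF hpF m
        show τ * ε m i * w ε τ F = τ * ε p i * w ε τ (insert (m, i) (F.erase (p, i)))
        rw [w, w, Finset.card_insert_of_notMem hnm, Finset.prod_insert hnm,
          ← Finset.card_erase_add_one hpF, ← Finset.mul_prod_erase F _ hpF, pow_succ]
        ring
      · next h =>
        have hnm : (m, i) ∉ F := fun hm => h ⟨m, hm⟩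
        show τ * ε m i * w ε τ F = w ε τ (insert (m, i) F)
        rw [w, w, Finset.card_insert_of_notMem hnm, Finset.prod_insert hnm, pow_succ]
        ring

variable (ε τ i j)

lemma SA_eq_SB :
    ∑ x ∈ Finset.univ.filter (APred ε i j), W ε τ i x
      = ∑ x ∈ Finset.univ.filter (BPred ε i j), W ε τ i x := by
  refine Finset.sum_nbij' (step i) (step i) ?_ ?_ ?_ ?_ ?_
  · intro x hx
    simp only [Finset.mem_filter, Finset.mem_univ, true_and] at hx ⊢
    exact step_mem_B hx
  · intro x hx
    simp only [Finset.mem_filter, Finset.mem_univ, true_and] at hx ⊢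
    exact step_mem_A hx
  · intro x hx
    simp only [Finset.mem_filter, Finset.mem_univ, true_and] at hx
    exact step_step hx.1 hx.2.2.2
  · intro x hx
    simp only [Finset.mem_filter, Finset.mem_univ, true_and] at hx
    obtain ⟨o, F⟩ := x
    cases o with
    | none => exact step_step hx.1 (by rintro u ⟨⟩)
    | some m => exact step_step hx.1 (by rintro u ⟨rfl⟩; exact hx.2.1)
  · intro x hx
    simp only [Finset.mem_filter, Finset.mem_univ, true_and] at hx
    exact W_step hx.1

variable {ε}

lemma SA_eval (hnonneg : ∀ a b, 0 ≤ ε a b) :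
    ∑ x ∈ Finset.univ.filter (APred ε i j), W ε τ i x
      = (1 + τ * ∑ u, ε u i) * ∑ F ∈ RR ε j i, w ε τ F := by
  rw [Finset.sum_filter, Fintype.sum_prod_type, Fintype.sum_option]
  have h1 : (∑ F : Finset (Fin n × Fin n), if APred ε i j (none, F) then W ε τ i (none, F) else 0)
      = ∑ F ∈ RR ε j i, w ε τ F := by
    rw [← Finset.sum_filter]
    refine Finset.sum_congr ?_ fun F _ => rfl
    ext F
    simp only [Finset.mem_filter, Finset.mem_univ, true_and]; simp only [APred, mem_RR]
    constructor
    · rintro ⟨a, b, c, -⟩; exact ⟨a, b, c⟩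
    · rintro ⟨a, b, c⟩; exact ⟨a, b, c, by rintro u ⟨⟩⟩
  have h2 : ∀ u : Fin n,
      (∑ F : Finset (Fin n × Fin n), if APred ε i j (some u, F) then W ε τ i (some u, F) else 0)
        = τ * ε u i * ∑ F ∈ RR ε j i, w ε τ F := by
    intro u
    rcases (hnonneg u i).lt_or_eq with hpos | hzero
    · rw [← Finset.sum_filter, Finset.mul_sum]
      refine Finset.sum_congr ?_ fun F _ => rfl
      ext F
      simp only [Finset.mem_filter, Finset.mem_univ, true_and]; simp only [APred, mem_RR]
      constructor
      · rintro ⟨a, b, c, -⟩; exact ⟨a, b, c⟩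
      · rintro ⟨a, b, c⟩
        exact ⟨a, b, c, by rintro v hv; cases hv; exact hpos⟩
    · have : ∀ F : Finset (Fin n × Fin n), ¬ APred ε i j (some u, F) := by
        rintro F ⟨-, -, -, hp⟩
        exact absurd (hp u rfl) (by rw [← hzero]; exact lt_irrefl 0)
      simp only [this, if_false, Finset.sum_const_zero, ← hzero]
      ring
  rw [h1]
  calc (∑ F ∈ RR ε j i, w ε τ F) + ∑ u, (∑ F : Finset (Fin n × Fin n),
        if APred ε i j (some u, F) then W ε τ i (some u, F) else 0)
      = (∑ F ∈ RR ε j i, w ε τ F) + ∑ u, τ * ε u i * ∑ F ∈ RR ε j i, w ε τ F := by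
        rw [Finset.sum_congr rfl fun u _ => h2 u]
    _ = _ := by
        rw [← Finset.sum_mul,
          show (∑ u, τ * ε u i) = τ * ∑ u, ε u i from (Finset.mul_sum _ _ _).symm]
        ring

lemma SB_eval (hnonneg : ∀ a b, 0 ≤ ε a b) :
    ∑ x ∈ Finset.univ.filter (BPred ε i j), W ε τ i x
      = (if i = j then ∑ F ∈ FF ε, w ε τ F else 0)
        + ∑ m, τ * ε m i * ∑ F ∈ RR ε j m, w ε τ F := by
  rw [Finset.sum_filter, Fintype.sum_prod_type, Fintype.sum_option]
  have h1 : (∑ F : Finset (Fin n × Fin n), if BPred ε i j (none, F) then W ε τ i (none, F) else 0)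
      = if i = j then ∑ F ∈ FF ε, w ε τ F else 0 := by
    rcases eq_or_ne i j with hij | hij
    · rw [if_pos hij, ← Finset.sum_filter]
      refine Finset.sum_congr ?_ fun F _ => rfl
      ext F
      simp only [Finset.mem_filter, Finset.mem_univ, true_and]; simp only [BPred, mem_FF]
      exact ⟨fun h => h.1, fun h => ⟨h, hij⟩⟩
    · rw [if_neg hij]
      refine Finset.sum_eq_zero fun F _ => ?_
      rw [if_neg]
      rintro ⟨-, h⟩
      exact hij h
  have h2 : ∀ m : Fin n,
      (∑ F : Finset (Fin n × Fin n), if BPred ε i j (some m, F) then W ε τ i (some m, F) else 0)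
        = τ * ε m i * ∑ F ∈ RR ε j m, w ε τ F := by
    intro m
    rcases (hnonneg m i).lt_or_eq with hpos | hzero
    · rw [← Finset.sum_filter, Finset.mul_sum]
      refine Finset.sum_congr ?_ fun F _ => rfl
      ext F
      simp only [Finset.mem_filter, Finset.mem_univ, true_and]; simp only [BPred, mem_RR]
      exact ⟨fun h => ⟨h.1, h.2.2⟩, fun h => ⟨h.1, hpos, h.2⟩⟩
    · have : ∀ F : Finset (Fin n × Fin n), ¬ BPred ε i j (some m, F) := by
        rintro F ⟨-, hp, -⟩
        rw [← hzero] at hp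
        exact lt_irrefl 0 hp
      simp only [this, if_false, Finset.sum_const_zero, ← hzero]
      ring
  rw [h1, Finset.sum_congr rfl fun m _ => h2 m]

variable (ε)

lemma key (hnonneg : ∀ a b, 0 ≤ ε a b) (hdiag : ∀ a, ε a a = 0) :
    (1 + τ • kirchhoff ε) * (∑ k ∈ Finset.range (maxForestCard ε + 1), τ ^ k • QMat ε k)
      = (∑ k ∈ Finset.range (maxForestCard ε + 1), τ ^ k * sigmaW ε k)
          • (1 : Matrix (Fin n) (Fin n) ℝ) := by
  ext i j
  rw [Matrix.mul_apply]
  have hentry : ∀ m, (1 + τ • kirchhoff ε) i m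
      = (if i = m then 1 + τ * ∑ u, ε u i else 0) - τ * ε m i := by
    intro m
    rw [Matrix.add_apply, Matrix.smul_apply, Matrix.one_apply, kirchhoff_apply ε hdiag,
      smul_eq_mul]
    rcases eq_or_ne i m with h | h
    · subst h; rw [if_pos rfl, if_pos rfl, if_pos rfl]; ring
    · rw [if_neg h, if_neg h, if_neg h]; ring
  calc ∑ m, (1 + τ • kirchhoff ε) i m
          * (∑ k ∈ Finset.range (maxForestCard ε + 1), τ ^ k • QMat ε k) m j
      = ∑ m, ((if i = m then (1 + τ * ∑ u, ε u i)
            * (∑ k ∈ Finset.range (maxForestCard ε + 1), τ ^ k • QMat ε k) m j else 0)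
          - τ * ε m i * (∑ k ∈ Finset.range (maxForestCard ε + 1), τ ^ k • QMat ε k) m j) := by
        refine Finset.sum_congr rfl fun m _ => ?_
        rw [hentry m]
        rcases eq_or_ne i m with h | h
        · subst h; rw [if_pos rfl, if_pos rfl]; ring
        · rw [if_neg h, if_neg h]; ring
    _ = (1 + τ * ∑ u, ε u i)
            * (∑ k ∈ Finset.range (maxForestCard ε + 1), τ ^ k • QMat ε k) i j
          - ∑ m, τ * ε m i
            * (∑ k ∈ Finset.range (maxForestCard ε + 1), τ ^ k • QMat ε k) m j := by
        rw [Finset.sum_sub_distrib, Finset.sum_ite_eq]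
        simp
    _ = (if i = j then ∑ F ∈ FF ε, w ε τ F else 0) := by
        simp only [Mentry ε τ]
        have h := (SA_eval τ i j hnonneg).symm.trans
          ((SA_eq_SB ε τ i j).trans (SB_eval τ i j hnonneg))
        rw [h]
        ring
    _ = _ := by
        rw [Matrix.smul_apply, Matrix.one_apply, Sval, smul_eq_mul]
        rcases eq_or_ne i j with h | h
        · rw [if_pos h, if_pos h, mul_one]
        · rw [if_neg h, if_neg h, mul_zero]

lemma S_pos (hτ : 0 < τ) (hnonneg : ∀ a b, 0 ≤ ε a b) :
    0 < ∑ k ∈ Finset.range (maxForestCard ε + 1), τ ^ k * sigmaW ε k := by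
  rw [Sval]
  have hmem : (∅ : Finset (Fin n × Fin n)) ∈ FF ε := (mem_FF ε).mpr (empty_forest ε)
  have : (1 : ℝ) ≤ ∑ F ∈ FF ε, w ε τ F := by
    have := Finset.single_le_sum (f := w ε τ)
      (fun F _ => mul_nonneg (pow_nonneg hτ.le _) (Finset.prod_nonneg fun p _ => hnonneg _ _))
      hmem
    simpa [w] using this
  linarith

end MFT2

theorem matrix_forest_theorem_parametric' (n : ℕ) (hn : 1 < n) (ε : Fin n → Fin n → ℝ)
    (hnonneg : ∀ i j, 0 ≤ ε i j) (hdiag : ∀ i, ε i i = 0) (τ : ℝ) (hτ : 0 < τ) :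
    IsUnit (1 + τ • kirchhoff ε) ∧
    (1 + τ • kirchhoff ε)⁻¹ =
      (∑ k ∈ Finset.range (maxForestCard ε + 1), τ ^ k * sigmaW ε k)⁻¹ •
        ∑ k ∈ Finset.range (maxForestCard ε + 1), τ ^ k • QMat ε k := by
  have hS := MFT2.S_pos ε τ hτ hnonneg
  have hkey := MFT2.key ε τ hnonneg hdiag
  have h1 : (1 + τ • kirchhoff ε) *
      ((∑ k ∈ Finset.range (maxForestCard ε + 1), τ ^ k * sigmaW ε k)⁻¹ •
        ∑ k ∈ Finset.range (maxForestCard ε + 1), τ ^ k • QMat ε k) = 1 := by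
    rw [Matrix.mul_smul, hkey, smul_smul, inv_mul_cancel₀ hS.ne', one_smul]
  have := invertibleOfRightInverse _ _ h1
  exact ⟨isUnit_of_invertible _, Matrix.inv_eq_right_inv h1⟩

/-- parametric matrix-forest theorem. For every `τ > 0`, `I + τL` is
invertible and `(I + τL)⁻¹ = s(τ)⁻¹ Σ_{k=0}^{n−v} τ^k Q_k`. -/
theorem matrix_forest_theorem_parametric (n : ℕ) (hn : 1 < n) (ε : Fin n → Fin n → ℝ)
    (hnonneg : ∀ i j, 0 ≤ ε i j) (hdiag : ∀ i, ε i i = 0) (τ : ℝ) (hτ : 0 < τ) :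
    IsUnit (1 + τ • kirchhoff ε) ∧
    (1 + τ • kirchhoff ε)⁻¹ =
      (∑ k ∈ Finset.range (maxForestCard ε + 1), τ ^ k * sigmaW ε k)⁻¹ •
        ∑ k ∈ Finset.range (maxForestCard ε + 1), τ ^ k • QMat ε k := by
  exact matrix_forest_theorem_parametric' n hn ε hnonneg hdiag τ hτ
end

section
/- For every weighted digraph Γ, the matrices (I + τL)^{−1} converge entrywise, as τ → ∞, to the normalized matrix of maximum out forests J̄. -/
set_option linter.unusedSectionVars false
set_option maxHeartbeats 1000000


open Matrix BigOperators Filter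

section Reach
variable {α : Type*} [DecidableEq α]

/-- arc relation of a finite arc set -/
def Rrel (F : Finset (α × α)) : α → α → Prop := fun a b => (a, b) ∈ F

/-- acyclicity -/
def Acyc (F : Finset (α × α)) : Prop := ∀ v, ¬ Relation.TransGen (Rrel F) v v

/-- restricted relation: arcs whose target is not `i` -/
def Rrel' (F : Finset (α × α)) (i : α) : α → α → Prop := fun a b => (a, b) ∈ F ∧ b ≠ i

lemma reach_mono {F G : Finset (α × α)} (h : F ⊆ G) {x y : α}
    (hr : Relation.ReflTransGen (Rrel F) x y) : Relation.ReflTransGen (Rrel G) x y :=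
  Relation.ReflTransGen.mono (r := Rrel F) (p := Rrel G) (fun _ _ hab => h hab) _ _ hr

lemma reach'_reach {F : Finset (α × α)} {i x y : α}
    (h : Relation.ReflTransGen (Rrel' F i) x y) : Relation.ReflTransGen (Rrel F) x y :=
  Relation.ReflTransGen.mono (r := Rrel' F i) (p := Rrel F) (fun _ _ hab => hab.1) _ _ h

/-- avoid lemma -/
lemma reach_avoid {F : Finset (α × α)} {i x y : α}
    (h : Relation.ReflTransGen (Rrel F) x y) :
    Relation.ReflTransGen (Rrel' F i) x y ∨ Relation.ReflTransGen (Rrel' F i) i y := by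
  induction h with
  | refl => exact Or.inl .refl
  | tail hxc hcy ih =>
    rename_i c y'
    by_cases hy : y' = i
    · subst hy; exact Or.inr .refl
    · rcases ih with h1 | h1
      · exact Or.inl (h1.tail ⟨hcy, hy⟩)
      · exact Or.inr (h1.tail ⟨hcy, hy⟩)

/-- split lemma for insert -/
lemma reach_insert_split {F : Finset (α × α)} {m i x y : α}
    (h : Relation.ReflTransGen (Rrel (insert (m, i) F)) x y) :
    Relation.ReflTransGen (Rrel F) x y ∨
      (Relation.ReflTransGen (Rrel (insert (m, i) F)) x m ∧
        Relation.ReflTransGen (Rrel (insert (m, i) F)) i y) := by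
  induction h with
  | refl => exact Or.inl .refl
  | tail hxc hcy ih =>
    rename_i c y'
    rcases Finset.mem_insert.mp hcy with he | hF
    · have hc : c = m := (Prod.mk.injEq _ _ _ _ ▸ he).1
      have hy : y' = i := (Prod.mk.injEq _ _ _ _ ▸ he).2
      subst hc; subst hy
      rcases ih with h1 | h1
      · exact Or.inr ⟨reach_mono (Finset.subset_insert _ _) h1, .refl⟩
      · exact Or.inr ⟨h1.1, .refl⟩
    · rcases ih with h1 | h1
      · exact Or.inl (h1.tail hF)
      · exact Or.inr ⟨h1.1, h1.2.tail (Finset.mem_insert_of_mem hF)⟩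

/-- In `insert (m,i) F`, if `i` has no in-arc in `F`, restricted reach lands in `F`. -/
lemma reach'_insert_subset {F : Finset (α × α)} {m i x y : α}
    (h : Relation.ReflTransGen (Rrel' (insert (m, i) F) i) x y) :
    Relation.ReflTransGen (Rrel F) x y := by
  refine Relation.ReflTransGen.mono (r := Rrel' (insert (m, i) F) i) (p := Rrel F) (fun a b hab => ?_) _ _ h
  rcases Finset.mem_insert.mp hab.1 with he | hF
  · exact absurd ((Prod.mk.injEq _ _ _ _ ▸ he).2) hab.2
  · exact hF

/-- adding an arc into a vertex with no in-arc, with no reverse reach, keeps acyclicity -/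
lemma acyc_insert {F : Finset (α × α)} {m i : α} (hF : Acyc F)
    (hroot : ∀ u, (u, i) ∉ F) (hnr : ¬ Relation.ReflTransGen (Rrel F) i m) :
    Acyc (insert (m, i) F) := by
  intro v hv
  obtain ⟨c, hvc, hcv⟩ := Relation.TransGen.head'_iff.mp hv
  rcases reach_insert_split hcv with h1 | h1
  · rcases Finset.mem_insert.mp hvc with he | hFv
    · have hvm : v = m := (Prod.mk.injEq _ _ _ _ ▸ he).1
      have hci : c = i := (Prod.mk.injEq _ _ _ _ ▸ he).2
      subst hvm; subst hci
      exact hnr h1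
    · exact hF v (Relation.TransGen.head' hFv h1)
  · have him : Relation.ReflTransGen (Rrel (insert (m, i) F)) i m :=
      (h1.2.tail hvc).trans h1.1
    have : Relation.ReflTransGen (Rrel F) i m := by
      rcases reach_avoid (i := i) him with h2 | h2
      · exact reach'_insert_subset h2
      · exact reach'_insert_subset h2
    exact hnr this

/-- from a cycle-witness to TransGen -/
lemma acyc_of_not_cycle {F : Finset (α × α)}
    (h : ¬ ∃ (k : ℕ) (f : ℕ → α), 0 < k ∧ f 0 = f k ∧ ∀ i < k, (f i, f (i + 1)) ∈ F) :
    Acyc F := by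
  intro v hv
  apply h
  -- extract a chain from TransGen
  have : ∀ w, Relation.TransGen (Rrel F) v w →
      ∃ (k : ℕ) (f : ℕ → α), 0 < k ∧ f 0 = v ∧ f k = w ∧ ∀ i < k, (f i, f (i + 1)) ∈ F := by
    intro w hw
    induction hw with
    | single hvb =>
      rename_i b
      exact ⟨1, fun t => if t = 0 then v else b, one_pos, by simp, by simp, by
        intro i hi
        interval_cases i
        simpa [Rrel] using hvb⟩
    | tail hvb hbc ih =>
      rename_i b c
      obtain ⟨k, f, hk, h0, hkw, harc⟩ := ih
      refine ⟨k + 1, fun t => if t ≤ k then f t else c, by omega, by simp [h0], by simp, ?_⟩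
      intro i hi
      by_cases hik : i < k
      · simp only []
        rw [if_pos (by omega : i ≤ k), if_pos (by omega : i + 1 ≤ k)]
        exact harc i hik
      · have hik' : i = k := by omega
        subst hik'
        simp only []
        rw [if_pos (by omega : i ≤ i), if_neg (by omega), hkw]
        exact hbc
  obtain ⟨k, f, hk, h0, hkv, harc⟩ := this v hv
  exact ⟨k, f, hk, by rw [h0, hkv], harc⟩

/-- from TransGen-acyclicity to no cycle-witness -/
lemma not_cycle_of_acyc {F : Finset (α × α)} (h : Acyc F) :
    ¬ ∃ (k : ℕ) (f : ℕ → α), 0 < k ∧ f 0 = f k ∧ ∀ i < k, (f i, f (i + 1)) ∈ F := by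
  rintro ⟨k, f, hk, h0, harc⟩
  have key : ∀ t, 0 < t → t ≤ k → Relation.TransGen (Rrel F) (f 0) (f t) := by
    intro t
    induction t with
    | zero => omega
    | succ s ih =>
      intro _ hsk
      rcases Nat.eq_zero_or_pos s with hs | hs
      · subst hs
        exact Relation.TransGen.single (harc 0 (by omega))
      · exact (ih hs (by omega)).tail (harc s (by omega))
  exact h (f 0) (h0 ▸ key k hk le_rfl)

/-- arc plus reverse reach gives a TransGen cycle -/
lemma acyc_no_back {F : Finset (α × α)} (h : Acyc F) {m i : α} (hmi : (m, i) ∈ F)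
    (hr : Relation.ReflTransGen (Rrel F) i m) : False :=
  h i (Relation.TransGen.tail' hr hmi)

/-- ancestors of a common vertex are comparable when one is a root -/
lemma root_reach_comparable {F : Finset (α × α)}
    (huniq : ∀ u u' v : α, (u, v) ∈ F → (u', v) ∈ F → u = u') {j i : α}
    (hroot : ∀ u, (u, j) ∉ F) {m : α}
    (hjm : Relation.ReflTransGen (Rrel F) j m)
    (him : Relation.ReflTransGen (Rrel F) i m) :
    Relation.ReflTransGen (Rrel F) j i := by
  induction him with
  | refl => exact hjm
  | tail hib hbc ih =>
    rename_i b c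
    rcases Relation.ReflTransGen.cases_tail hjm with he | ⟨d, hjd, hdc⟩
    · exact absurd (he ▸ hbc) (hroot b)
    · exact ih (huniq d b c hdc hbc ▸ hjd)

/-- if reach j i and j ≠ i then i has an in-arc and reach to its head -/
lemma reach_last_arc {F : Finset (α × α)} {j i : α}
    (h : Relation.ReflTransGen (Rrel F) j i) (hne : j ≠ i) :
    ∃ m, (m, i) ∈ F ∧ Relation.ReflTransGen (Rrel F) j m := by
  rcases Relation.ReflTransGen.cases_tail h with he | ⟨d, hjd, hdi⟩
  · exact absurd he.symm hne
  · exact ⟨d, hdi, hjd⟩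

/-- reach avoiding i when i cannot reach the target (in acyclic setting) -/
lemma reach'_of_not_reach {F : Finset (α × α)} {i x y : α}
    (hxy : Relation.ReflTransGen (Rrel F) x y)
    (hni : ¬ Relation.ReflTransGen (Rrel F) i y) :
    Relation.ReflTransGen (Rrel' F i) x y := by
  rcases reach_avoid (i := i) hxy with h | h
  · exact h
  · exact absurd (reach'_reach h) hni

/-- the restricted relations of `F` and `insert (m,i) (F.erase (p,i))` agree -/
lemma rrel'_swap_eq (F : Finset (α × α)) (m p i : α) :
    Rrel' (insert (m, i) (F.erase (p, i))) i = Rrel' F i := by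
  funext a b
  unfold Rrel'
  ext
  constructor
  · rintro ⟨hab, hbi⟩
    rcases Finset.mem_insert.mp hab with he | hF
    · exact absurd ((Prod.mk.injEq _ _ _ _ ▸ he).2) hbi
    · exact ⟨Finset.mem_of_mem_erase hF, hbi⟩
  · rintro ⟨hab, hbi⟩
    refine ⟨Finset.mem_insert_of_mem (Finset.mem_erase.mpr ⟨?_, hab⟩), hbi⟩
    intro he
    exact hbi (Prod.mk.injEq _ _ _ _ ▸ he).2

end Reach

noncomputable instance instDecIsOutForest {n : ℕ} (ε : Fin n → Fin n → ℝ)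
    (F : Finset (Fin n × Fin n)) : Decidable (IsOutForest ε F) :=
  Classical.propDecidable _

noncomputable instance instDecReflTransGen {α : Type*} (r : α → α → Prop) (a b : α) :
    Decidable (Relation.ReflTransGen r a b) :=
  Classical.propDecidable _

section Forest
variable {n : ℕ} {ε : Fin n → Fin n → ℝ}

lemma forest_acyc {F : Finset (Fin n × Fin n)} (h : IsOutForest ε F) : Acyc F :=
  acyc_of_not_cycle h.2.2

lemma forest_subset {F G : Finset (Fin n × Fin n)} (h : IsOutForest ε F) (hs : G ⊆ F) :
    IsOutForest ε G :=
  ⟨fun p hp => h.1 p (hs hp), fun u u' v h1 h2 => h.2.1 u u' v (hs h1) (hs h2),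
    not_cycle_of_acyc fun v hv =>
      forest_acyc h v (Relation.TransGen.mono (r := Rrel G) (p := Rrel F) (fun _ _ hab => hs hab) _ _ hv)⟩

lemma forest_ne (hdiag : ∀ i, ε i i = 0) {F : Finset (Fin n × Fin n)}
    (h : IsOutForest ε F) {a b : Fin n} (hp : (a, b) ∈ F) : a ≠ b := by
  intro he
  have := h.1 (a, b) hp
  rw [he, hdiag] at this
  exact lt_irrefl _ this

lemma forest_insert {F : Finset (Fin n × Fin n)} {m i : Fin n} (h : IsOutForest ε F)
    (hpos : 0 < ε m i) (hroot : ∀ u, (u, i) ∉ F)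
    (hnr : ¬ Relation.ReflTransGen (Rrel F) i m) :
    IsOutForest ε (insert (m, i) F) := by
  refine ⟨?_, ?_, not_cycle_of_acyc (acyc_insert (forest_acyc h) hroot hnr)⟩
  · intro p hp
    rcases Finset.mem_insert.mp hp with he | hF
    · subst he; exact hpos
    · exact h.1 p hF
  · intro u u' v h1 h2
    rcases Finset.mem_insert.mp h1 with he1 | hF1 <;> rcases Finset.mem_insert.mp h2 with he2 | hF2
    · simp only [Prod.mk.injEq] at he1 he2
      rw [he1.1, he2.1]
    · simp only [Prod.mk.injEq] at he1
      exact absurd (he1.2 ▸ hF2) (hroot u')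
    · simp only [Prod.mk.injEq] at he2
      exact absurd (he2.2 ▸ hF1) (hroot u)
    · exact h.2.1 u u' v hF1 hF2

lemma forestWeight_insert {F : Finset (Fin n × Fin n)} {a : Fin n × Fin n} (ha : a ∉ F) :
    forestWeight ε (insert a F) = ε a.1 a.2 * forestWeight ε F :=
  Finset.prod_insert ha

lemma forestWeight_erase {F : Finset (Fin n × Fin n)} {a : Fin n × Fin n} (ha : a ∈ F) :
    ε a.1 a.2 * forestWeight ε (F.erase a) = forestWeight ε F :=
  Finset.mul_prod_erase F (fun p => ε p.1 p.2) ha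

lemma forestWeight_nonneg (hnonneg : ∀ i j, 0 ≤ ε i j) (F : Finset (Fin n × Fin n)) :
    0 ≤ forestWeight ε F :=
  Finset.prod_nonneg fun p _ => hnonneg p.1 p.2

lemma forestWeight_pos {F : Finset (Fin n × Fin n)} (h : IsOutForest ε F) :
    0 < forestWeight ε F :=
  Finset.prod_pos fun p hp => h.1 p hp

/-- head of the (unique) in-arc of `i` -/
noncomputable def inHead (F : Finset (Fin n × Fin n)) (i : Fin n) : Fin n :=
  if h : ∃ p, (p, i) ∈ F then h.choose else i

lemma inHead_mem {F : Finset (Fin n × Fin n)} {i : Fin n} (h : ∃ p, (p, i) ∈ F) :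
    (inHead F i, i) ∈ F := by
  rw [inHead, dif_pos h]
  exact h.choose_spec

lemma inHead_eq {F : Finset (Fin n × Fin n)} (h : IsOutForest ε F) {p i : Fin n}
    (hp : (p, i) ∈ F) : inHead F i = p :=
  h.2.1 _ _ _ (inHead_mem ⟨p, hp⟩) hp

lemma empty_forest : IsOutForest ε ∅ := by
  refine ⟨by simp, by simp, ?_⟩
  rintro ⟨k, f, hk, -, harc⟩
  exact absurd (harc 0 hk) (by simp)

lemma finsum_mem_setOf (P : Finset (Fin n × Fin n) → Prop) [DecidablePred P]
    (f : Finset (Fin n × Fin n) → ℝ) :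
    ∑ᶠ F ∈ {F | P F}, f F = ∑ F ∈ Finset.univ.filter P, f F := by
  rw [← finsum_mem_coe_finset]
  congr 1
  ext F
  simp

lemma sigmaW_eq (k : ℕ) :
    sigmaW ε k = ∑ F ∈ Finset.univ.filter
      (fun F => IsOutForest ε F ∧ F.card = k), forestWeight ε F :=
  finsum_mem_setOf _ _

lemma QMat_eq (k : ℕ) (i j : Fin n) :
    QMat ε k i j = ∑ F ∈ Finset.univ.filter
      (fun F => IsOutForest ε F ∧ F.card = k ∧ (∀ u, (u, j) ∉ F) ∧
        Relation.ReflTransGen (Rrel F) j i), forestWeight ε F :=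
  finsum_mem_setOf _ _

end Forest

section Bij
variable {n : ℕ} {ε : Fin n → Fin n → ℝ}

lemma inHead_insert {G : Finset (Fin n × Fin n)} {m i : Fin n}
    (hri : ∀ u, (u, i) ∉ G) : inHead (insert (m, i) G) i = m := by
  rw [inHead, dif_pos ⟨m, Finset.mem_insert_self _ _⟩]
  have hs := (⟨m, Finset.mem_insert_self (m, i) G⟩ :
    ∃ p, (p, i) ∈ insert (m, i) G).choose_spec
  rcases Finset.mem_insert.mp hs with he | hG
  · exact (Prod.mk.injEq _ _ _ _ ▸ he).1
  · exact absurd hG (hri _)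

/-- bijection: (k+1)-forests with root j reaching i  ↔  pairs (m, k-forest) (i ≠ j) -/
lemma sum_T_eq_B1 (hnonneg : ∀ a b, 0 ≤ ε a b) (hdiag : ∀ a, ε a a = 0)
    {i j : Fin n} (hij : ¬ i = j) (k : ℕ) :
    ∑ F ∈ Finset.univ.filter (fun F => IsOutForest ε F ∧ F.card = k + 1 ∧
        (∀ u, (u, j) ∉ F) ∧ Relation.ReflTransGen (Rrel F) j i), forestWeight ε F
    = ∑ p ∈ Finset.univ.filter (fun p : Fin n × Finset (Fin n × Fin n) =>
        (p.1 ≠ i ∧ 0 < ε p.1 i ∧ IsOutForest ε p.2 ∧ p.2.card = k ∧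
        (∀ u, (u, j) ∉ p.2) ∧ Relation.ReflTransGen (Rrel p.2) j p.1) ∧
        (∀ u, (u, i) ∉ p.2)), ε p.1 i * forestWeight ε p.2 := by
  refine Finset.sum_nbij' (fun F => (inHead F i, F.erase (inHead F i, i)))
    (fun p => insert (p.1, i) p.2) ?_ ?_ ?_ ?_ ?_
  · intro F hF
    simp only [Finset.mem_filter, Finset.mem_univ, true_and] at hF ⊢
    obtain ⟨hfor, hc, hroot, hreach⟩ := hF
    obtain ⟨m, hmi, hjm⟩ := reach_last_arc hreach (fun h => hij h.symm)
    have hm : inHead F i = m := inHead_eq hfor hmi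
    rw [hm]
    have hnim : ¬ Relation.ReflTransGen (Rrel F) i m :=
      fun h => acyc_no_back (forest_acyc hfor) hmi h
    refine ⟨⟨forest_ne hdiag hfor hmi, hfor.1 _ hmi,
      forest_subset hfor (Finset.erase_subset _ _), ?_, ?_, ?_⟩, ?_⟩
    · rw [Finset.card_erase_of_mem hmi, hc]
      omega
    · intro u hu
      exact hroot u (Finset.mem_of_mem_erase hu)
    · -- reach (erase) j m
      refine Relation.ReflTransGen.mono (r := Rrel' F i) (fun a b hab => ?_) _ _
        (reach'_of_not_reach hjm hnim)
      exact Finset.mem_erase.mpr ⟨fun he => hab.2 (Prod.mk.injEq _ _ _ _ ▸ he).2, hab.1⟩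
    · intro u hu
      obtain ⟨hne, huF⟩ := Finset.mem_erase.mp hu
      exact hne (by rw [hfor.2.1 u m i huF hmi])
  · intro p hp
    simp only [Finset.mem_filter, Finset.mem_univ, true_and] at hp ⊢
    obtain ⟨⟨hmne, hpos, hfor, hc, hroot, hreach⟩, hri⟩ := hp
    have hnr : ¬ Relation.ReflTransGen (Rrel p.2) i p.1 := by
      intro hr
      have hji : Relation.ReflTransGen (Rrel p.2) j i :=
        root_reach_comparable hfor.2.1 hroot hreach hr
      obtain ⟨u, hu, -⟩ := reach_last_arc hji (fun h => hij h.symm)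
      exact hri u hu
    have hnotmem : (p.1, i) ∉ p.2 := hri p.1
    refine ⟨forest_insert hfor hpos hri hnr, ?_, ?_, ?_⟩
    · rw [Finset.card_insert_of_notMem hnotmem, hc]
    · intro u hu
      rcases Finset.mem_insert.mp hu with he | hG
      · exact hij (Prod.mk.injEq _ _ _ _ ▸ he).2.symm
      · exact hroot u hG
    · exact (reach_mono (Finset.subset_insert _ _) hreach).tail
        (Finset.mem_insert_self _ _)
  · intro F hF
    simp only [Finset.mem_filter, Finset.mem_univ, true_and] at hF
    obtain ⟨hfor, hc, hroot, hreach⟩ := hF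
    obtain ⟨m, hmi, hjm⟩ := reach_last_arc hreach (fun h => hij h.symm)
    simp only [inHead_eq hfor hmi]
    exact Finset.insert_erase hmi
  · intro p hp
    simp only [Finset.mem_filter, Finset.mem_univ, true_and] at hp
    obtain ⟨⟨hmne, hpos, hfor, hc, hroot, hreach⟩, hri⟩ := hp
    have h1 : inHead (insert (p.1, i) p.2) i = p.1 := inHead_insert hri
    rw [Prod.ext_iff]
    refine ⟨h1, ?_⟩
    simp only [h1]
    exact Finset.erase_insert (hri p.1)
  · intro F hF
    simp only [Finset.mem_filter, Finset.mem_univ, true_and] at hF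
    obtain ⟨hfor, hc, hroot, hreach⟩ := hF
    obtain ⟨m, hmi, hjm⟩ := reach_last_arc hreach (fun h => hij h.symm)
    simp only [inHead_eq hfor hmi]
    exact (forestWeight_erase hmi).symm

end Bij

section Bij2
variable {n : ℕ} {ε : Fin n → Fin n → ℝ}

/-- swap bijection between A2 and B2 pairs (i ≠ j) -/
lemma sum_A2_eq_B2 (hnonneg : ∀ a b, 0 ≤ ε a b) (hdiag : ∀ a, ε a a = 0)
    {i j : Fin n} (hij : ¬ i = j) (k : ℕ) :
    ∑ p ∈ Finset.univ.filter (fun p : Fin n × Finset (Fin n × Fin n) =>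
        (p.1 ≠ i ∧ 0 < ε p.1 i ∧ IsOutForest ε p.2 ∧ p.2.card = k ∧
          (∀ u, (u, j) ∉ p.2) ∧ Relation.ReflTransGen (Rrel p.2) j i) ∧
        ¬ Relation.ReflTransGen (Rrel p.2) i p.1), ε p.1 i * forestWeight ε p.2
    = ∑ p ∈ Finset.univ.filter (fun p : Fin n × Finset (Fin n × Fin n) =>
        ((p.1 ≠ i ∧ 0 < ε p.1 i ∧ IsOutForest ε p.2 ∧ p.2.card = k ∧
          (∀ u, (u, j) ∉ p.2) ∧ Relation.ReflTransGen (Rrel p.2) j p.1) ∧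
          ¬ (∀ u, (u, i) ∉ p.2)) ∧
        ¬ Relation.ReflTransGen (Rrel p.2) i p.1), ε p.1 i * forestWeight ε p.2 := by
  have hji : ¬ j = i := fun h => hij h.symm
  refine Finset.sum_nbij'
    (fun p => (inHead p.2 i, insert (p.1, i) (p.2.erase (inHead p.2 i, i))))
    (fun p => (inHead p.2 i, insert (p.1, i) (p.2.erase (inHead p.2 i, i))))
    ?_ ?_ ?_ ?_ ?_
  · rintro ⟨m, F⟩ hp
    simp only [Finset.mem_filter, Finset.mem_univ, true_and] at hp ⊢
    obtain ⟨⟨hmne, hpos, hfor, hc, hroot, hreach⟩, hnr⟩ := hp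
    obtain ⟨q, hqi, hjq⟩ := reach_last_arc hreach hji
    have hq : inHead F i = q := inHead_eq hfor hqi
    simp only [hq]
    have hGroot : ∀ u, (u, i) ∉ F.erase (q, i) := by
      intro u hu
      obtain ⟨hne, huF⟩ := Finset.mem_erase.mp hu
      exact hne (by rw [hfor.2.1 u q i huF hqi])
    have hmG : (m, i) ∉ F.erase (q, i) := hGroot m
    have hnrG : ¬ Relation.ReflTransGen (Rrel (F.erase (q, i))) i m :=
      fun h => hnr (reach_mono (Finset.erase_subset _ _) h)
    have hforG : IsOutForest ε (F.erase (q, i)) :=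
      forest_subset hfor (Finset.erase_subset _ _)
    have hfor' : IsOutForest ε (insert (m, i) (F.erase (q, i))) :=
      forest_insert hforG hpos hGroot hnrG
    have hniq : ¬ Relation.ReflTransGen (Rrel F) i q :=
      fun h => acyc_no_back (forest_acyc hfor) hqi h
    refine ⟨⟨⟨forest_ne hdiag hfor hqi, hfor.1 _ hqi, hfor', ?_, ?_, ?_⟩, ?_⟩, ?_⟩
    · rw [Finset.card_insert_of_notMem hmG, Finset.card_erase_of_mem hqi, hc]
      have : 0 < k := hc ▸ Finset.card_pos.mpr ⟨(q, i), hqi⟩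
      omega
    · intro u hu
      rcases Finset.mem_insert.mp hu with he | hG
      · exact hij (Prod.mk.injEq _ _ _ _ ▸ he).2.symm
      · exact hroot u (Finset.mem_of_mem_erase hG)
    · -- reach F̃ j q
      have h1 : Relation.ReflTransGen (Rrel' F i) j q := reach'_of_not_reach hjq hniq
      have h2 : Relation.ReflTransGen (Rrel' (insert (m, i) (F.erase (q, i))) i) j q := by
        rw [rrel'_swap_eq F m q i]; exact h1
      exact reach'_reach h2
    · exact fun h => h m (Finset.mem_insert_self _ _)
    · -- ¬ reach F̃ i q
      intro h
      have h2 : Relation.ReflTransGen (Rrel' (insert (m, i) (F.erase (q, i))) i) i q := by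
        rcases reach_avoid (i := i) h with h2 | h2 <;> exact h2
      rw [rrel'_swap_eq F m q i] at h2
      exact hniq (reach'_reach h2)
  · rintro ⟨m, F⟩ hp
    simp only [Finset.mem_filter, Finset.mem_univ, true_and] at hp ⊢
    obtain ⟨⟨⟨hmne, hpos, hfor, hc, hroot, hreach⟩, hex⟩, hnr⟩ := hp
    push_neg at hex
    obtain ⟨q, hqi⟩ := hex
    have hq : inHead F i = q := inHead_eq hfor hqi
    simp only [hq]
    have hGroot : ∀ u, (u, i) ∉ F.erase (q, i) := by
      intro u hu
      obtain ⟨hne, huF⟩ := Finset.mem_erase.mp hu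
      exact hne (by rw [hfor.2.1 u q i huF hqi])
    have hmG : (m, i) ∉ F.erase (q, i) := hGroot m
    have hnrG : ¬ Relation.ReflTransGen (Rrel (F.erase (q, i))) i m :=
      fun h => hnr (reach_mono (Finset.erase_subset _ _) h)
    have hforG : IsOutForest ε (F.erase (q, i)) :=
      forest_subset hfor (Finset.erase_subset _ _)
    have hfor' : IsOutForest ε (insert (m, i) (F.erase (q, i))) :=
      forest_insert hforG hpos hGroot hnrG
    have hniq : ¬ Relation.ReflTransGen (Rrel F) i q :=
      fun h => acyc_no_back (forest_acyc hfor) hqi h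
    refine ⟨⟨forest_ne hdiag hfor hqi, hfor.1 _ hqi, hfor', ?_, ?_, ?_⟩, ?_⟩
    · rw [Finset.card_insert_of_notMem hmG, Finset.card_erase_of_mem hqi, hc]
      have : 0 < k := hc ▸ Finset.card_pos.mpr ⟨(q, i), hqi⟩
      omega
    · intro u hu
      rcases Finset.mem_insert.mp hu with he | hG
      · exact hij (Prod.mk.injEq _ _ _ _ ▸ he).2.symm
      · exact hroot u (Finset.mem_of_mem_erase hG)
    · -- reach F̃ j i : j ⇝ m then arc (m,i)
      have h1 : Relation.ReflTransGen (Rrel' F i) j m := reach'_of_not_reach hreach hnr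
      have h2 : Relation.ReflTransGen (Rrel' (insert (m, i) (F.erase (q, i))) i) j m := by
        rw [rrel'_swap_eq F m q i]; exact h1
      exact (reach'_reach h2).tail (Finset.mem_insert_self _ _)
    · -- ¬ reach F̃ i q
      intro h
      have h2 : Relation.ReflTransGen (Rrel' (insert (m, i) (F.erase (q, i))) i) i q := by
        rcases reach_avoid (i := i) h with h2 | h2 <;> exact h2
      rw [rrel'_swap_eq F m q i] at h2
      exact hniq (reach'_reach h2)
  · rintro ⟨m, F⟩ hp
    simp only [Finset.mem_filter, Finset.mem_univ, true_and] at hp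
    obtain ⟨⟨hmne, hpos, hfor, hc, hroot, hreach⟩, hnr⟩ := hp
    obtain ⟨q, hqi, hjq⟩ := reach_last_arc hreach hji
    have hq : inHead F i = q := inHead_eq hfor hqi
    simp only [hq]
    have hGroot : ∀ u, (u, i) ∉ F.erase (q, i) := by
      intro u hu
      obtain ⟨hne, huF⟩ := Finset.mem_erase.mp hu
      exact hne (by rw [hfor.2.1 u q i huF hqi])
    have h1 : inHead (insert (m, i) (F.erase (q, i))) i = m := inHead_insert hGroot
    rw [Prod.ext_iff]
    refine ⟨h1, ?_⟩
    simp only [h1]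
    rw [Finset.erase_insert (hGroot m), Finset.insert_erase hqi]
  · rintro ⟨m, F⟩ hp
    simp only [Finset.mem_filter, Finset.mem_univ, true_and] at hp
    obtain ⟨⟨⟨hmne, hpos, hfor, hc, hroot, hreach⟩, hex⟩, hnr⟩ := hp
    push_neg at hex
    obtain ⟨q, hqi⟩ := hex
    have hq : inHead F i = q := inHead_eq hfor hqi
    simp only [hq]
    have hGroot : ∀ u, (u, i) ∉ F.erase (q, i) := by
      intro u hu
      obtain ⟨hne, huF⟩ := Finset.mem_erase.mp hu
      exact hne (by rw [hfor.2.1 u q i huF hqi])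
    have h1 : inHead (insert (m, i) (F.erase (q, i))) i = m := inHead_insert hGroot
    rw [Prod.ext_iff]
    refine ⟨h1, ?_⟩
    simp only [h1]
    rw [Finset.erase_insert (hGroot m), Finset.insert_erase hqi]
  · rintro ⟨m, F⟩ hp
    simp only [Finset.mem_filter, Finset.mem_univ, true_and] at hp
    obtain ⟨⟨hmne, hpos, hfor, hc, hroot, hreach⟩, hnr⟩ := hp
    obtain ⟨q, hqi, hjq⟩ := reach_last_arc hreach hji
    have hq : inHead F i = q := inHead_eq hfor hqi
    simp only [hq]
    have hGroot : ∀ u, (u, i) ∉ F.erase (q, i) := by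
      intro u hu
      obtain ⟨hne, huF⟩ := Finset.mem_erase.mp hu
      exact hne (by rw [hfor.2.1 u q i huF hqi])
    rw [forestWeight_insert (hGroot m)]
    rw [← forestWeight_erase (ε := ε) hqi]
    ring
end Bij2

section Bij3
variable {n : ℕ} {ε : Fin n → Fin n → ℝ}

lemma sum_A1_eq_B0 {i j : Fin n} (hij : ¬ i = j) (k : ℕ) :
    ∑ p ∈ Finset.univ.filter (fun p : Fin n × Finset (Fin n × Fin n) =>
        (p.1 ≠ i ∧ 0 < ε p.1 i ∧ IsOutForest ε p.2 ∧ p.2.card = k ∧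
          (∀ u, (u, j) ∉ p.2) ∧ Relation.ReflTransGen (Rrel p.2) j i) ∧
        Relation.ReflTransGen (Rrel p.2) i p.1), ε p.1 i * forestWeight ε p.2
    = ∑ p ∈ Finset.univ.filter (fun p : Fin n × Finset (Fin n × Fin n) =>
        ((p.1 ≠ i ∧ 0 < ε p.1 i ∧ IsOutForest ε p.2 ∧ p.2.card = k ∧
          (∀ u, (u, j) ∉ p.2) ∧ Relation.ReflTransGen (Rrel p.2) j p.1) ∧
          ¬ (∀ u, (u, i) ∉ p.2)) ∧
        Relation.ReflTransGen (Rrel p.2) i p.1), ε p.1 i * forestWeight ε p.2 := by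
  apply Finset.sum_congr _ (fun _ _ => rfl)
  ext p
  simp only [Finset.mem_filter, Finset.mem_univ, true_and]
  constructor
  · rintro ⟨⟨hmne, hpos, hfor, hc, hroot, hreach⟩, hr⟩
    obtain ⟨q, hqi, -⟩ := reach_last_arc hreach (fun h => hij h.symm)
    exact ⟨⟨⟨hmne, hpos, hfor, hc, hroot, hreach.trans hr⟩,
      fun hall => hall q hqi⟩, hr⟩
  · rintro ⟨⟨⟨hmne, hpos, hfor, hc, hroot, hreach⟩, hex⟩, hr⟩
    exact ⟨⟨hmne, hpos, hfor, hc, hroot,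
      root_reach_comparable hfor.2.1 hroot hreach hr⟩, hr⟩

/-- diagonal bijection: (k+1)-forests where i has an in-arc ↔ pairs -/
lemma sum_U_eq_A0 (hnonneg : ∀ a b, 0 ≤ ε a b) (hdiag : ∀ a, ε a a = 0)
    (i : Fin n) (k : ℕ) :
    ∑ F ∈ Finset.univ.filter (fun F => (IsOutForest ε F ∧ F.card = k + 1) ∧
        ¬ (∀ u, (u, i) ∉ F)), forestWeight ε F
    = ∑ p ∈ Finset.univ.filter (fun p : Fin n × Finset (Fin n × Fin n) =>
        (p.1 ≠ i ∧ 0 < ε p.1 i ∧ IsOutForest ε p.2 ∧ p.2.card = k ∧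
          (∀ u, (u, i) ∉ p.2) ∧ Relation.ReflTransGen (Rrel p.2) i i) ∧
        ¬ Relation.ReflTransGen (Rrel p.2) i p.1), ε p.1 i * forestWeight ε p.2 := by
  refine Finset.sum_nbij' (fun F => (inHead F i, F.erase (inHead F i, i)))
    (fun p => insert (p.1, i) p.2) ?_ ?_ ?_ ?_ ?_
  · intro F hF
    simp only [Finset.mem_filter, Finset.mem_univ, true_and] at hF ⊢
    obtain ⟨⟨hfor, hc⟩, hex⟩ := hF
    push_neg at hex
    obtain ⟨q, hqi⟩ := hex
    have hq : inHead F i = q := inHead_eq hfor hqi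
    simp only [hq]
    have hGroot : ∀ u, (u, i) ∉ F.erase (q, i) := by
      intro u hu
      obtain ⟨hne, huF⟩ := Finset.mem_erase.mp hu
      exact hne (by rw [hfor.2.1 u q i huF hqi])
    refine ⟨⟨forest_ne hdiag hfor hqi, hfor.1 _ hqi,
      forest_subset hfor (Finset.erase_subset _ _), ?_, hGroot,
      Relation.ReflTransGen.refl⟩, ?_⟩
    · rw [Finset.card_erase_of_mem hqi, hc]; omega
    · intro h
      exact acyc_no_back (forest_acyc hfor) hqi
        (reach_mono (Finset.erase_subset _ _) h)
  · intro p hp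
    simp only [Finset.mem_filter, Finset.mem_univ, true_and] at hp ⊢
    obtain ⟨⟨hmne, hpos, hfor, hc, hroot, -⟩, hnr⟩ := hp
    refine ⟨⟨forest_insert hfor hpos hroot hnr, ?_⟩, ?_⟩
    · rw [Finset.card_insert_of_notMem (hroot p.1), hc]
    · intro hall
      exact hall p.1 (Finset.mem_insert_self _ _)
  · intro F hF
    simp only [Finset.mem_filter, Finset.mem_univ, true_and] at hF
    obtain ⟨⟨hfor, hc⟩, hex⟩ := hF
    push_neg at hex
    obtain ⟨q, hqi⟩ := hex
    simp only [inHead_eq hfor hqi]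
    exact Finset.insert_erase hqi
  · intro p hp
    simp only [Finset.mem_filter, Finset.mem_univ, true_and] at hp
    obtain ⟨⟨hmne, hpos, hfor, hc, hroot, -⟩, hnr⟩ := hp
    have h1 : inHead (insert (p.1, i) p.2) i = p.1 := inHead_insert hroot
    rw [Prod.ext_iff]
    refine ⟨h1, ?_⟩
    simp only [h1]
    exact Finset.erase_insert (hroot p.1)
  · intro F hF
    simp only [Finset.mem_filter, Finset.mem_univ, true_and] at hF
    obtain ⟨⟨hfor, hc⟩, hex⟩ := hF
    push_neg at hex
    obtain ⟨q, hqi⟩ := hex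
    simp only [inHead_eq hfor hqi]
    exact (forestWeight_erase hqi).symm
end Bij3

section Key
variable {n : ℕ} {ε : Fin n → Fin n → ℝ}

lemma sum_filter_ext {γ : Type*} [Fintype γ] {P Q : γ → Prop}
    [DecidablePred P] [DecidablePred Q] (h : ∀ x, P x ↔ Q x) (f : γ → ℝ) :
    ∑ x ∈ Finset.univ.filter P, f x = ∑ x ∈ Finset.univ.filter Q, f x :=
  Finset.sum_congr (by ext x; simp only [Finset.mem_filter]; rw [h x]) fun _ _ => rfl

lemma sum_filter_split {γ : Type*} [Fintype γ] (P C : γ → Prop)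
    [DecidablePred P] [DecidablePred C] (f : γ → ℝ) :
    ∑ x ∈ Finset.univ.filter P, f x
      = (∑ x ∈ Finset.univ.filter (fun x => P x ∧ C x), f x)
        + ∑ x ∈ Finset.univ.filter (fun x => P x ∧ ¬ C x), f x := by
  rw [← Finset.sum_filter_add_sum_filter_not (Finset.univ.filter P) C f]
  congr 1 <;>
    exact Finset.sum_congr
      (by ext x; simp only [Finset.mem_filter, Finset.mem_univ, true_and, and_assoc])
      fun _ _ => rfl

lemma pair_sum_eq (hnonneg : ∀ a b, 0 ≤ ε a b) (i : Fin n)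
    (C : Fin n → Finset (Fin n × Fin n) → Prop) [∀ m, DecidablePred (C m)] :
    ∑ m ∈ Finset.univ.filter (fun m => ¬ m = i),
        ε m i * ∑ F ∈ Finset.univ.filter (C m), forestWeight ε F
      = ∑ p ∈ Finset.univ.filter (fun p : Fin n × Finset (Fin n × Fin n) =>
          p.1 ≠ i ∧ 0 < ε p.1 i ∧ C p.1 p.2), ε p.1 i * forestWeight ε p.2 := by
  rw [Finset.sum_filter, Finset.sum_filter, Fintype.sum_prod_type]
  apply Finset.sum_congr rfl
  intro m _
  by_cases hm : m = i
  · simp [hm]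
  · rw [if_pos hm, Finset.sum_filter, Finset.mul_sum]
    apply Finset.sum_congr rfl
    intro F _
    by_cases hC : C m F
    · by_cases hpos : 0 < ε m i
      · simp [hC, hm, hpos]
      · have h0 : ε m i = 0 := le_antisymm (not_lt.mp hpos) (hnonneg m i)
        simp [hC, hm, hpos, h0]
    · simp [hC, hm]

lemma qsum_rw1 (k : ℕ) (i a b : Fin n) :
    ∑ m ∈ Finset.univ.filter (fun m => ¬ m = i), ε m i * QMat ε k a b
      = ∑ m ∈ Finset.univ.filter (fun m => ¬ m = i),
          ε m i * ∑ F ∈ Finset.univ.filter (fun F => IsOutForest ε F ∧ F.card = k ∧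
            (∀ u, (u, b) ∉ F) ∧ Relation.ReflTransGen (Rrel F) b a), forestWeight ε F :=
  Finset.sum_congr rfl (fun m _ => by rw [QMat_eq])

lemma qsum_rw2 (k : ℕ) (i b : Fin n) :
    ∑ m ∈ Finset.univ.filter (fun m => ¬ m = i), ε m i * QMat ε k m b
      = ∑ m ∈ Finset.univ.filter (fun m => ¬ m = i),
          ε m i * ∑ F ∈ Finset.univ.filter (fun F => IsOutForest ε F ∧ F.card = k ∧
            (∀ u, (u, b) ∉ F) ∧ Relation.ReflTransGen (Rrel F) b m), forestWeight ε F :=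
  Finset.sum_congr rfl (fun m _ => by rw [QMat_eq])

lemma key_identity (hnonneg : ∀ a b, 0 ≤ ε a b) (hdiag : ∀ a, ε a a = 0)
    (k : ℕ) (i j : Fin n) :
    QMat ε (k + 1) i j + (kirchhoff ε * QMat ε k) i j
      = sigmaW ε (k + 1) * (if i = j then 1 else 0) := by
  have hK : (kirchhoff ε * QMat ε k) i j
      = (∑ m ∈ Finset.univ.filter (fun m => ¬ m = i), ε m i * QMat ε k i j)
        - ∑ m ∈ Finset.univ.filter (fun m => ¬ m = i), ε m i * QMat ε k m j := by
    rw [Matrix.mul_apply,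
      ← Finset.sum_filter_add_sum_filter_not Finset.univ (fun m => m = i)]
    have h1 : Finset.univ.filter (fun m : Fin n => m = i) = {i} := by ext; simp
    rw [h1, Finset.sum_singleton]
    have h2 : kirchhoff ε i i = ∑ m ∈ Finset.univ.filter (fun m => ¬ m = i), ε m i := by
      show (if i = i then _ else _) = _
      rw [if_pos rfl]
    have h3 : ∀ m ∈ Finset.univ.filter (fun m : Fin n => ¬ m = i),
        kirchhoff ε i m * QMat ε k m j = -(ε m i * QMat ε k m j) := by
      intro m hm
      simp only [Finset.mem_filter, Finset.mem_univ, true_and] at hm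
      have : kirchhoff ε i m = -(ε m i) := by
        show (if i = m then _ else _) = _
        rw [if_neg (fun h => hm h.symm)]
      rw [this, neg_mul]
    rw [Finset.sum_congr rfl h3, h2, Finset.sum_mul, Finset.sum_neg_distrib]
    ring
  rw [hK]
  by_cases hij : i = j
  · -- diagonal case
    subst hij
    rw [if_pos rfl, mul_one]
    have hA : ∑ m ∈ Finset.univ.filter (fun m => ¬ m = i), ε m i * QMat ε k i i
        = ∑ p ∈ Finset.univ.filter (fun p : Fin n × Finset (Fin n × Fin n) =>
            p.1 ≠ i ∧ 0 < ε p.1 i ∧ IsOutForest ε p.2 ∧ p.2.card = k ∧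
            (∀ u, (u, i) ∉ p.2) ∧ Relation.ReflTransGen (Rrel p.2) i i),
            ε p.1 i * forestWeight ε p.2 :=
      (qsum_rw1 k i i i).trans (pair_sum_eq hnonneg i _)
    have hB : ∑ m ∈ Finset.univ.filter (fun m => ¬ m = i), ε m i * QMat ε k m i
        = ∑ p ∈ Finset.univ.filter (fun p : Fin n × Finset (Fin n × Fin n) =>
            p.1 ≠ i ∧ 0 < ε p.1 i ∧ IsOutForest ε p.2 ∧ p.2.card = k ∧
            (∀ u, (u, i) ∉ p.2) ∧ Relation.ReflTransGen (Rrel p.2) i p.1),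
            ε p.1 i * forestWeight ε p.2 :=
      (qsum_rw2 k i i).trans (pair_sum_eq hnonneg i _)
    have hAsplit := sum_filter_split
      (fun p : Fin n × Finset (Fin n × Fin n) =>
        p.1 ≠ i ∧ 0 < ε p.1 i ∧ IsOutForest ε p.2 ∧ p.2.card = k ∧
        (∀ u, (u, i) ∉ p.2) ∧ Relation.ReflTransGen (Rrel p.2) i i)
      (fun p => Relation.ReflTransGen (Rrel p.2) i p.1)
      (fun p => ε p.1 i * forestWeight ε p.2)
    have hA1 : ∑ p ∈ Finset.univ.filter (fun p : Fin n × Finset (Fin n × Fin n) =>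
          (p.1 ≠ i ∧ 0 < ε p.1 i ∧ IsOutForest ε p.2 ∧ p.2.card = k ∧
          (∀ u, (u, i) ∉ p.2) ∧ Relation.ReflTransGen (Rrel p.2) i i) ∧
          Relation.ReflTransGen (Rrel p.2) i p.1), ε p.1 i * forestWeight ε p.2
        = ∑ p ∈ Finset.univ.filter (fun p : Fin n × Finset (Fin n × Fin n) =>
            p.1 ≠ i ∧ 0 < ε p.1 i ∧ IsOutForest ε p.2 ∧ p.2.card = k ∧
            (∀ u, (u, i) ∉ p.2) ∧ Relation.ReflTransGen (Rrel p.2) i p.1),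
            ε p.1 i * forestWeight ε p.2 := by
      apply sum_filter_ext
      intro p
      constructor
      · rintro ⟨⟨a, b, c, d, e, -⟩, h⟩; exact ⟨a, b, c, d, e, h⟩
      · rintro ⟨a, b, c, d, e, h⟩; exact ⟨⟨a, b, c, d, e, Relation.ReflTransGen.refl⟩, h⟩
    have hsig := sum_filter_split
      (fun F : Finset (Fin n × Fin n) => IsOutForest ε F ∧ F.card = k + 1)
      (fun F => ∀ u, (u, i) ∉ F) (forestWeight ε)
    have hsig1 : ∑ F ∈ Finset.univ.filter (fun F : Finset (Fin n × Fin n) =>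
          (IsOutForest ε F ∧ F.card = k + 1) ∧ ∀ u, (u, i) ∉ F), forestWeight ε F
        = QMat ε (k + 1) i i := by
      rw [QMat_eq]
      apply sum_filter_ext
      intro F
      constructor
      · rintro ⟨⟨a, b⟩, c⟩; exact ⟨a, b, c, Relation.ReflTransGen.refl⟩
      · rintro ⟨a, b, c, -⟩; exact ⟨⟨a, b⟩, c⟩
    rw [sigmaW_eq, hsig, hsig1, sum_U_eq_A0 hnonneg hdiag i k, hA, hB, hAsplit, hA1]
    ring
  · -- off-diagonal case
    rw [if_neg hij, mul_zero]
    have hA : ∑ m ∈ Finset.univ.filter (fun m => ¬ m = i), ε m i * QMat ε k i j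
        = ∑ p ∈ Finset.univ.filter (fun p : Fin n × Finset (Fin n × Fin n) =>
            p.1 ≠ i ∧ 0 < ε p.1 i ∧ IsOutForest ε p.2 ∧ p.2.card = k ∧
            (∀ u, (u, j) ∉ p.2) ∧ Relation.ReflTransGen (Rrel p.2) j i),
            ε p.1 i * forestWeight ε p.2 :=
      (qsum_rw1 k i i j).trans (pair_sum_eq hnonneg i _)
    have hB : ∑ m ∈ Finset.univ.filter (fun m => ¬ m = i), ε m i * QMat ε k m j
        = ∑ p ∈ Finset.univ.filter (fun p : Fin n × Finset (Fin n × Fin n) =>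
            p.1 ≠ i ∧ 0 < ε p.1 i ∧ IsOutForest ε p.2 ∧ p.2.card = k ∧
            (∀ u, (u, j) ∉ p.2) ∧ Relation.ReflTransGen (Rrel p.2) j p.1),
            ε p.1 i * forestWeight ε p.2 :=
      (qsum_rw2 k i j).trans (pair_sum_eq hnonneg i _)
    have hAsplit := sum_filter_split
      (fun p : Fin n × Finset (Fin n × Fin n) =>
        p.1 ≠ i ∧ 0 < ε p.1 i ∧ IsOutForest ε p.2 ∧ p.2.card = k ∧
        (∀ u, (u, j) ∉ p.2) ∧ Relation.ReflTransGen (Rrel p.2) j i)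
      (fun p => Relation.ReflTransGen (Rrel p.2) i p.1)
      (fun p => ε p.1 i * forestWeight ε p.2)
    have hBsplit := sum_filter_split
      (fun p : Fin n × Finset (Fin n × Fin n) =>
        p.1 ≠ i ∧ 0 < ε p.1 i ∧ IsOutForest ε p.2 ∧ p.2.card = k ∧
        (∀ u, (u, j) ∉ p.2) ∧ Relation.ReflTransGen (Rrel p.2) j p.1)
      (fun p => ∀ u, (u, i) ∉ p.2)
      (fun p => ε p.1 i * forestWeight ε p.2)
    have hB2split := sum_filter_split
      (fun p : Fin n × Finset (Fin n × Fin n) =>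
        (p.1 ≠ i ∧ 0 < ε p.1 i ∧ IsOutForest ε p.2 ∧ p.2.card = k ∧
        (∀ u, (u, j) ∉ p.2) ∧ Relation.ReflTransGen (Rrel p.2) j p.1) ∧
        ¬ ∀ u, (u, i) ∉ p.2)
      (fun p => Relation.ReflTransGen (Rrel p.2) i p.1)
      (fun p => ε p.1 i * forestWeight ε p.2)
    have hQ : QMat ε (k + 1) i j
        = ∑ F ∈ Finset.univ.filter (fun F => IsOutForest ε F ∧ F.card = k + 1 ∧
            (∀ u, (u, j) ∉ F) ∧ Relation.ReflTransGen (Rrel F) j i), forestWeight ε F :=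
      QMat_eq _ _ _
    rw [hQ, sum_T_eq_B1 hnonneg hdiag hij k, hA, hB, hAsplit, hBsplit, hB2split,
      sum_A1_eq_B0 hij k, sum_A2_eq_B2 hnonneg hdiag hij k]
    ring
end Key

section Assemble
variable {n : ℕ} {ε : Fin n → Fin n → ℝ}

lemma reach_empty {j i : Fin n}
    (h : Relation.ReflTransGen (Rrel (∅ : Finset (Fin n × Fin n))) j i) : j = i := by
  induction h with
  | refl => rfl
  | tail _ hbc _ => exact absurd hbc (by simp [Rrel])

lemma forestWeight_empty : forestWeight ε (∅ : Finset (Fin n × Fin n)) = 1 :=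
  Finset.prod_empty

lemma QMat_zero : QMat ε 0 = 1 := by
  ext i j
  rw [QMat_eq, Matrix.one_apply]
  by_cases hij : i = j
  · have hset : Finset.univ.filter (fun F : Finset (Fin n × Fin n) =>
        IsOutForest ε F ∧ F.card = 0 ∧ (∀ u, (u, j) ∉ F) ∧
        Relation.ReflTransGen (Rrel F) j i) = {∅} := by
      ext F
      simp only [Finset.mem_filter, Finset.mem_univ, true_and, Finset.mem_singleton]
      constructor
      · rintro ⟨-, hc, -, -⟩
        exact Finset.card_eq_zero.mp hc
      · rintro rfl
        exact ⟨empty_forest, Finset.card_empty, by simp, hij ▸ Relation.ReflTransGen.refl⟩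
    rw [hset, Finset.sum_singleton, forestWeight_empty, if_pos hij]
  · rw [if_neg hij]
    apply Finset.sum_eq_zero
    intro F hF
    simp only [Finset.mem_filter, Finset.mem_univ, true_and] at hF
    obtain ⟨-, hc, -, hr⟩ := hF
    rw [Finset.card_eq_zero.mp hc] at hr
    exact absurd (reach_empty hr).symm hij

lemma sigmaW_zero_eq : sigmaW ε 0 = 1 := by
  rw [sigmaW_eq]
  have hset : Finset.univ.filter (fun F : Finset (Fin n × Fin n) =>
      IsOutForest ε F ∧ F.card = 0) = {∅} := by
    ext F
    simp only [Finset.mem_filter, Finset.mem_univ, true_and, Finset.mem_singleton]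
    constructor
    · rintro ⟨-, hc⟩
      exact Finset.card_eq_zero.mp hc
    · rintro rfl
      exact ⟨empty_forest, Finset.card_empty⟩
  rw [hset, Finset.sum_singleton, forestWeight_empty]

lemma maxcard_bddAbove :
    BddAbove {k | ∃ F : Finset (Fin n × Fin n), IsOutForest ε F ∧ F.card = k} := by
  refine ⟨Fintype.card (Fin n × Fin n), ?_⟩
  rintro k ⟨F, -, rfl⟩
  exact Finset.card_le_univ F

lemma maxcard_spec :
    ∃ F : Finset (Fin n × Fin n), IsOutForest ε F ∧ F.card = maxForestCard ε := by
  have h := Nat.sSup_mem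
    (s := {k | ∃ F : Finset (Fin n × Fin n), IsOutForest ε F ∧ F.card = k})
    ⟨0, ⟨∅, empty_forest, Finset.card_empty⟩⟩ maxcard_bddAbove
  exact h

lemma card_le_maxcard {F : Finset (Fin n × Fin n)} (h : IsOutForest ε F) :
    F.card ≤ maxForestCard ε :=
  le_csSup maxcard_bddAbove ⟨F, h, rfl⟩

lemma maxcard_le : maxForestCard ε ≤ n * n := by
  obtain ⟨F, -, hc⟩ := maxcard_spec (ε := ε)
  rw [← hc]
  calc F.card ≤ Fintype.card (Fin n × Fin n) := Finset.card_le_univ F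
    _ = n * n := by simp

lemma sigmaW_of_gt {k : ℕ} (h : maxForestCard ε < k) : sigmaW ε k = 0 := by
  rw [sigmaW_eq]
  apply Finset.sum_eq_zero
  intro F hF
  simp only [Finset.mem_filter, Finset.mem_univ, true_and] at hF
  exact absurd (hF.2 ▸ card_le_maxcard hF.1) (by omega)

lemma QMat_of_gt {k : ℕ} (h : maxForestCard ε < k) : QMat ε k = 0 := by
  ext i j
  rw [QMat_eq]
  rw [Matrix.zero_apply]
  apply Finset.sum_eq_zero
  intro F hF
  simp only [Finset.mem_filter, Finset.mem_univ, true_and] at hF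
  exact absurd (hF.2.1 ▸ card_le_maxcard hF.1) (by omega)

lemma sigmaW_nonneg (hnonneg : ∀ a b, 0 ≤ ε a b) (k : ℕ) : 0 ≤ sigmaW ε k := by
  rw [sigmaW_eq]
  exact Finset.sum_nonneg fun F _ => forestWeight_nonneg hnonneg F

lemma QMat_nonneg (hnonneg : ∀ a b, 0 ≤ ε a b) (k : ℕ) (i j : Fin n) :
    0 ≤ QMat ε k i j := by
  rw [QMat_eq]
  exact Finset.sum_nonneg fun F _ => forestWeight_nonneg hnonneg F

lemma sigmaW_max_pos (hnonneg : ∀ a b, 0 ≤ ε a b) :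
    0 < sigmaW ε (maxForestCard ε) := by
  rw [sigmaW_eq]
  obtain ⟨F, hF, hc⟩ := maxcard_spec (ε := ε)
  refine Finset.sum_pos' (fun G _ => forestWeight_nonneg hnonneg G) ⟨F, ?_, forestWeight_pos hF⟩
  simp [hF, hc]

lemma keyM (hnonneg : ∀ a b, 0 ≤ ε a b) (hdiag : ∀ a, ε a a = 0) (k : ℕ) :
    QMat ε (k + 1) + kirchhoff ε * QMat ε k
      = sigmaW ε (k + 1) • (1 : Matrix (Fin n) (Fin n) ℝ) := by
  ext i j
  simp only [Matrix.add_apply, Matrix.smul_apply, Matrix.one_apply, smul_eq_mul]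
  rw [key_identity hnonneg hdiag k i j]

lemma poly_id (hnonneg : ∀ a b, 0 ≤ ε a b) (hdiag : ∀ a, ε a a = 0) (τ : ℝ) :
    (1 + τ • kirchhoff ε) * (∑ k ∈ Finset.range (n * n + 1), τ ^ k • QMat ε k)
      = (∑ k ∈ Finset.range (n * n + 1), sigmaW ε k * τ ^ k)
          • (1 : Matrix (Fin n) (Fin n) ℝ) := by
  have hKP : kirchhoff ε * (∑ k ∈ Finset.range (n * n + 1), τ ^ k • QMat ε k)
      = ∑ k ∈ Finset.range (n * n + 1),
          τ ^ k • (sigmaW ε (k + 1) • (1 : Matrix (Fin n) (Fin n) ℝ) - QMat ε (k + 1)) := by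
    rw [Finset.mul_sum]
    refine Finset.sum_congr rfl fun k _ => ?_
    rw [Matrix.mul_smul, eq_sub_of_add_eq' (keyM hnonneg hdiag k)]
  rw [add_mul, one_mul, smul_mul_assoc, hKP, Finset.smul_sum]
  have h1 : ∀ k : ℕ, τ • (τ ^ k • (sigmaW ε (k + 1) • (1 : Matrix (Fin n) (Fin n) ℝ)
        - QMat ε (k + 1)))
      = (sigmaW ε (k + 1) * τ ^ (k + 1)) • (1 : Matrix (Fin n) (Fin n) ℝ)
        - τ ^ (k + 1) • QMat ε (k + 1) := by
    intro k
    simp only [smul_sub, smul_smul]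
    congr 1
    · congr 1
      ring
    · congr 1
      ring
  rw [Finset.sum_congr rfl fun k _ => h1 k, Finset.sum_sub_distrib]
  have hQtop : QMat ε (n * n + 1) = 0 :=
    QMat_of_gt (lt_of_le_of_lt maxcard_le (by omega))
  have hstop : sigmaW ε (n * n + 1) = 0 :=
    sigmaW_of_gt (lt_of_le_of_lt maxcard_le (by omega))
  have hS1 : ∑ k ∈ Finset.range (n * n + 1), τ ^ k • QMat ε k
      = (∑ k ∈ Finset.range (n * n), τ ^ (k + 1) • QMat ε (k + 1)) + (1 : Matrix (Fin n) (Fin n) ℝ) := by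
    rw [Finset.sum_range_succ' (fun k => τ ^ k • QMat ε k) (n * n)]
    congr 1
    rw [pow_zero, one_smul, QMat_zero]
  have hT1 : ∑ k ∈ Finset.range (n * n + 1), τ ^ (k + 1) • QMat ε (k + 1)
      = ∑ k ∈ Finset.range (n * n), τ ^ (k + 1) • QMat ε (k + 1) := by
    rw [Finset.sum_range_succ, hQtop, smul_zero, add_zero]
  have hsig : ∑ k ∈ Finset.range (n * n + 1),
        (sigmaW ε (k + 1) * τ ^ (k + 1)) • (1 : Matrix (Fin n) (Fin n) ℝ)
      = ((∑ k ∈ Finset.range (n * n + 1), sigmaW ε k * τ ^ k) - 1)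
          • (1 : Matrix (Fin n) (Fin n) ℝ) := by
    rw [← Finset.sum_smul]
    congr 1
    have := Finset.sum_range_succ' (fun k => sigmaW ε k * τ ^ k) (n * n + 1)
    rw [Finset.sum_range_succ] at this
    simp only [hstop, zero_mul, add_zero, sigmaW_zero_eq, pow_zero, mul_one] at this
    linarith
  rw [hS1, hT1, hsig, sub_smul, one_smul]
  abel

lemma denom_pos (hnonneg : ∀ a b, 0 ≤ ε a b) {τ : ℝ} (hτ : 0 ≤ τ) :
    0 < ∑ k ∈ Finset.range (n * n + 1), sigmaW ε k * τ ^ k := by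
  refine Finset.sum_pos' (fun k _ => mul_nonneg (sigmaW_nonneg hnonneg k) (pow_nonneg hτ k))
    ⟨0, Finset.mem_range.mpr (by omega), ?_⟩
  rw [sigmaW_zero_eq, pow_zero, mul_one]
  exact one_pos

lemma inv_entry (hnonneg : ∀ a b, 0 ≤ ε a b) (hdiag : ∀ a, ε a a = 0)
    {τ : ℝ} (hτ : 0 ≤ τ) (i j : Fin n) :
    (1 + τ • kirchhoff ε)⁻¹ i j
      = (∑ k ∈ Finset.range (n * n + 1), QMat ε k i j * τ ^ k)
        / ∑ k ∈ Finset.range (n * n + 1), sigmaW ε k * τ ^ k := by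
  have hs := denom_pos (ε := ε) hnonneg hτ
  have hinv : (1 + τ • kirchhoff ε)⁻¹
      = (∑ k ∈ Finset.range (n * n + 1), sigmaW ε k * τ ^ k)⁻¹
        • ∑ k ∈ Finset.range (n * n + 1), τ ^ k • QMat ε k := by
    apply Matrix.inv_eq_right_inv
    rw [Matrix.mul_smul, poly_id hnonneg hdiag τ, smul_smul,
      inv_mul_cancel₀ hs.ne', one_smul]
  rw [hinv, Matrix.smul_apply, Matrix.sum_apply, smul_eq_mul, div_eq_inv_mul]
  congr 1
  refine Finset.sum_congr rfl fun k _ => ?_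
  rw [Matrix.smul_apply, smul_eq_mul, mul_comm]

end Assemble

/-- `(I + τL)⁻¹` converges entrywise to `J̄` as `τ → ∞`. -/
theorem tendsto_inv_one_add_smul_kirchhoff (n : ℕ) (hn : 1 < n) (ε : Fin n → Fin n → ℝ)
    (hnonneg : ∀ i j, 0 ≤ ε i j) (hdiag : ∀ i, ε i i = 0) :
    ∀ i j : Fin n,
      Filter.Tendsto (fun τ : ℝ => (1 + τ • kirchhoff ε)⁻¹ i j)
        Filter.atTop (nhds (Jbar ε i j)) := by
  intro i j
  have hb : 0 < sigmaW ε (maxForestCard ε) := sigmaW_max_pos hnonneg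
  have hνle : maxForestCard ε + 1 ≤ n * n + 1 := by
    have := maxcard_le (ε := ε); omega
  have hg : Filter.Tendsto (fun τ : ℝ => ∑ k ∈ Finset.range (maxForestCard ε + 1),
      QMat ε k i j * (τ⁻¹) ^ (maxForestCard ε - k)) Filter.atTop
      (nhds (QMat ε (maxForestCard ε) i j)) := by
    have hval : ∑ k ∈ Finset.range (maxForestCard ε + 1),
        QMat ε k i j * (0 : ℝ) ^ (maxForestCard ε - k) = QMat ε (maxForestCard ε) i j := by
      rw [Finset.sum_eq_single (maxForestCard ε)]
      · rw [Nat.sub_self, pow_zero, mul_one]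
      · intro k hk hne
        rw [zero_pow (by simp only [Finset.mem_range] at hk; omega), mul_zero]
      · intro h
        exact absurd (Finset.self_mem_range_succ (maxForestCard ε)) h
    rw [← hval]
    apply tendsto_finset_sum
    intro k _
    exact (tendsto_inv_atTop_zero.pow (maxForestCard ε - k)).const_mul _
  have hh : Filter.Tendsto (fun τ : ℝ => ∑ k ∈ Finset.range (maxForestCard ε + 1),
      sigmaW ε k * (τ⁻¹) ^ (maxForestCard ε - k)) Filter.atTop
      (nhds (sigmaW ε (maxForestCard ε))) := by
    have hval : ∑ k ∈ Finset.range (maxForestCard ε + 1),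
        sigmaW ε k * (0 : ℝ) ^ (maxForestCard ε - k) = sigmaW ε (maxForestCard ε) := by
      rw [Finset.sum_eq_single (maxForestCard ε)]
      · rw [Nat.sub_self, pow_zero, mul_one]
      · intro k hk hne
        rw [zero_pow (by simp only [Finset.mem_range] at hk; omega), mul_zero]
      · intro h
        exact absurd (Finset.self_mem_range_succ (maxForestCard ε)) h
    rw [← hval]
    apply tendsto_finset_sum
    intro k _
    exact (tendsto_inv_atTop_zero.pow (maxForestCard ε - k)).const_mul _
  have hdiv := hg.div hh hb.ne'
  have hJ : Jbar ε i j = QMat ε (maxForestCard ε) i j / sigmaW ε (maxForestCard ε) := by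
    rw [Jbar, Matrix.smul_apply, smul_eq_mul, mul_comm, div_eq_mul_inv]
  rw [hJ]
  refine Filter.Tendsto.congr' ?_ hdiv
  filter_upwards [Filter.eventually_gt_atTop (0 : ℝ)] with τ hτ
  simp only [Pi.div_apply]
  have hτ0 : τ ≠ 0 := hτ.ne'
  have hc : (τ⁻¹) ^ (maxForestCard ε) ≠ 0 := pow_ne_zero _ (inv_ne_zero hτ0)
  rw [inv_entry hnonneg hdiag hτ.le i j]
  have hnum : ∑ k ∈ Finset.range (maxForestCard ε + 1), QMat ε k i j * τ ^ k
      = ∑ k ∈ Finset.range (n * n + 1), QMat ε k i j * τ ^ k := by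
    apply Finset.sum_subset (Finset.range_subset_range.mpr hνle)
    intro k hk hnk
    simp only [Finset.mem_range] at hk hnk
    rw [QMat_of_gt (by omega), Matrix.zero_apply, zero_mul]
  have hden : ∑ k ∈ Finset.range (maxForestCard ε + 1), sigmaW ε k * τ ^ k
      = ∑ k ∈ Finset.range (n * n + 1), sigmaW ε k * τ ^ k := by
    apply Finset.sum_subset (Finset.range_subset_range.mpr hνle)
    intro k hk hnk
    simp only [Finset.mem_range] at hk hnk
    rw [sigmaW_of_gt (by omega), zero_mul]
  rw [← hnum, ← hden]
  have hpow : ∀ k ∈ Finset.range (maxForestCard ε + 1),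
      (τ⁻¹) ^ (maxForestCard ε - k) = τ ^ k * (τ⁻¹) ^ (maxForestCard ε) := by
    intro k hk
    simp only [Finset.mem_range] at hk
    have h3 : (τ⁻¹) ^ (maxForestCard ε - k) * (τ⁻¹) ^ k = (τ⁻¹) ^ (maxForestCard ε) := by
      rw [← pow_add]
      congr 1
      omega
    calc (τ⁻¹) ^ (maxForestCard ε - k)
        = (τ⁻¹) ^ (maxForestCard ε - k) * ((τ⁻¹) ^ k * τ ^ k) := by
          rw [← mul_pow, inv_mul_cancel₀ hτ0, one_pow, mul_one]
      _ = τ ^ k * (τ⁻¹) ^ (maxForestCard ε) := by rw [← mul_assoc, h3]; ring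
  have hgτ : ∑ k ∈ Finset.range (maxForestCard ε + 1),
        QMat ε k i j * (τ⁻¹) ^ (maxForestCard ε - k)
      = (∑ k ∈ Finset.range (maxForestCard ε + 1), QMat ε k i j * τ ^ k)
        * (τ⁻¹) ^ (maxForestCard ε) := by
    rw [Finset.sum_mul]
    refine Finset.sum_congr rfl fun k hk => ?_
    rw [hpow k hk]
    ring
  have hhτ : ∑ k ∈ Finset.range (maxForestCard ε + 1),
        sigmaW ε k * (τ⁻¹) ^ (maxForestCard ε - k)
      = (∑ k ∈ Finset.range (maxForestCard ε + 1), sigmaW ε k * τ ^ k)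
        * (τ⁻¹) ^ (maxForestCard ε) := by
    rw [Finset.sum_mul]
    refine Finset.sum_congr rfl fun k hk => ?_
    rw [hpow k hk]
    ring
  rw [hgτ, hhτ, mul_div_mul_right _ _ hc]
end
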